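/- arXiv:2405.13992 — 9 statements merged into one kernel-verified Lean document; each statement's English description precedes it below -/
import Mathlib

section
/- For every f ∈ (0,1), the function GMI_f is a valid cut generating function for f (with k = 1): GMI_f is nonnegative, GMI_f(0) = 0, GMI_f(f) = 1, GMI_f is subadditive (GMI_f(r + r') ≤ GMI_f(r) + GMI_f(r') for all r, r' ∈ ℝ), and GMI_f(r + w) = GMI_f(r) for all r ∈ ℝ and w ∈ ℤ. -/
/-! On `[0, 1)` the function `GMI f` is the minimum of the two affine functions `t / f` and
`(1 - t) / (1 - f)`, which is concave and vanishes at `0`, hence subadditive on `[0, ∞)`. Since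
`[r + r']` is `[r] + [r']` or `[r] + [r'] - 1`, this settles the first case; the second reduces to
the first through the symmetry `t ↦ 1 - t`, which exchanges `f` and `1 - f`. -/

/-- The Gomory mixed-integer function: `GMI f r = [r]/f` if `[r] ≤ f`,
and `(1 - [r])/(1 - f)` otherwise, where `[r]` is the fractional part of `r`. -/
noncomputable def GMI (f r : ℝ) : ℝ :=
  if Int.fract r ≤ f then Int.fract r / f else (1 - Int.fract r) / (1 - f)

open Set

theorem ConcaveOn.map_add_le_add {𝕜 : Type*} [Field 𝕜] [LinearOrder 𝕜] [IsStrictOrderedRing 𝕜]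
    {g : 𝕜 → 𝕜} (hg : ConcaveOn 𝕜 (Ici 0) g) (hg0 : 0 ≤ g 0) {a b : 𝕜} (ha : 0 ≤ a)
    (hb : 0 ≤ b) : g (a + b) ≤ g a + g b := by
  rcases (add_nonneg ha hb).eq_or_lt' with hs | hs
  · obtain ⟨rfl, rfl⟩ : a = 0 ∧ b = 0 := ⟨by linarith, by linarith⟩
    simpa using hg0
  set s := a + b
  have scaled_le : ∀ c, 0 ≤ c → c ≤ s → c / s * g s ≤ g c := by
    intro c hc0 hcs
    have h := hg.2 (x := s) hs.le (y := 0) le_rfl (div_nonneg hc0 hs.le)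
      (div_nonneg (sub_nonneg.2 hcs) hs.le) (by rw [← add_div, add_sub_cancel, div_self hs.ne'])
    have hmid : (c / s) • s + ((s - c) / s) • (0 : 𝕜) = c := by
      rw [smul_eq_mul, smul_zero, add_zero, div_mul_cancel₀ c hs.ne']
    rw [hmid, smul_eq_mul, smul_eq_mul] at h
    nlinarith [mul_nonneg (div_nonneg (sub_nonneg.2 hcs) hs.le) hg0]
  have hsum : a / s * g s + b / s * g s = g s := by
    rw [← add_mul, ← add_div, div_self hs.ne', one_mul]
  linarith [scaled_le a ha (le_add_of_nonneg_right hb), scaled_le b hb (le_add_of_nonneg_left ha)]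

theorem Int.fract_add_eq_or {R : Type*} [Ring R] [LinearOrder R] [IsStrictOrderedRing R]
    [FloorRing R] (a b : R) :
    Int.fract (a + b) = Int.fract a + Int.fract b ∨
      Int.fract (a + b) = Int.fract a + Int.fract b - 1 := by
  obtain ⟨z, hz⟩ := Int.fract_add a b
  have hsum : Int.fract (a + b) = Int.fract a + Int.fract b + z := by rw [← hz]; abel
  have hz0 : (z : R) ≤ 0 := by
    have h := Int.fract_add_le a b
    rwa [hsum, add_le_iff_nonpos_right] at h
  have hz1 : (-1 : R) ≤ z := by
    have h := Int.fract_add_fract_le a b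
    rwa [hsum, add_assoc, le_add_iff_nonneg_right, ← neg_le_iff_add_nonneg', neg_le] at h
  obtain rfl | rfl : z = 0 ∨ z = -1 := by
    have : z ≤ 0 := by exact_mod_cast hz0
    have : -1 ≤ z := by exact_mod_cast hz1
    omega
  · left; simpa using hsum
  · right; simpa [sub_eq_add_neg] using hsum

noncomputable def gmiProfile (f t : ℝ) : ℝ :=
  min (t / f) ((1 - t) / (1 - f))

theorem concaveOn_gmiProfile (f : ℝ) : ConcaveOn ℝ univ (gmiProfile f) := by
  have linear : ConcaveOn ℝ univ fun t => t / f :=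
    ⟨convex_univ, fun x _ y _ a b _ _ _ => le_of_eq (by simp only [smul_eq_mul]; ring)⟩
  have affine : ConcaveOn ℝ univ fun t => (1 - t) / (1 - f) :=
    ⟨convex_univ, fun x _ y _ a b _ _ hab => le_of_eq (by
      simp only [smul_eq_mul]; linear_combination hab / (1 - f))⟩
  exact linear.inf affine

theorem gmiProfile_one_sub (f t : ℝ) : gmiProfile f (1 - t) = gmiProfile (1 - f) t := by
  rw [gmiProfile, gmiProfile, sub_sub_cancel, sub_sub_cancel, min_comm]

theorem gmiProfile_nonneg {f t : ℝ} (hf0 : 0 ≤ f) (hf1 : f ≤ 1) (ht0 : 0 ≤ t) (ht1 : t ≤ 1) :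
    0 ≤ gmiProfile f t :=
  le_min (div_nonneg ht0 hf0) (div_nonneg (sub_nonneg.2 ht1) (sub_nonneg.2 hf1))

theorem gmiProfile_add_le {f a b : ℝ} (hf0 : 0 ≤ f) (hf1 : f ≤ 1) (ha : 0 ≤ a) (hb : 0 ≤ b) :
    gmiProfile f (a + b) ≤ gmiProfile f a + gmiProfile f b :=
  ((concaveOn_gmiProfile f).subset (subset_univ _) (convex_Ici 0)).map_add_le_add
    (gmiProfile_nonneg hf0 hf1 le_rfl zero_le_one) ha hb

theorem gmiProfile_add_sub_one_le {f a b : ℝ} (hf0 : 0 ≤ f) (hf1 : f ≤ 1) (ha : a ≤ 1)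
    (hb : b ≤ 1) : gmiProfile f (a + b - 1) ≤ gmiProfile f a + gmiProfile f b := by
  have h := gmiProfile_add_le (f := 1 - f) (sub_nonneg.2 hf1) (sub_le_self 1 hf0)
    (sub_nonneg.2 ha) (sub_nonneg.2 hb)
  rwa [← gmiProfile_one_sub, ← gmiProfile_one_sub, ← gmiProfile_one_sub, sub_sub_cancel,
    sub_sub_cancel, show 1 - (1 - a + (1 - b)) = a + b - 1 by ring] at h

theorem GMI_eq_gmiProfile {f : ℝ} (hf0 : 0 < f) (hf1 : f < 1) (r : ℝ) :
    GMI f r = gmiProfile f (Int.fract r) := by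
  have h1f : 0 < 1 - f := sub_pos.2 hf1
  have h0 := Int.fract_nonneg r
  have h1 := Int.fract_lt_one r
  unfold GMI gmiProfile
  split_ifs with h
  · rw [min_eq_left ((div_le_div_iff₀ hf0 h1f).2 (by nlinarith))]
  · rw [min_eq_right ((div_le_div_iff₀ h1f hf0).2 (by nlinarith))]

theorem GMI_nonneg {f : ℝ} (hf0 : 0 < f) (hf1 : f < 1) (r : ℝ) : 0 ≤ GMI f r := by
  rw [GMI_eq_gmiProfile hf0 hf1]
  exact gmiProfile_nonneg hf0.le hf1.le (Int.fract_nonneg r) (Int.fract_lt_one r).le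

theorem GMI_zero {f : ℝ} (hf0 : 0 ≤ f) : GMI f 0 = 0 := by
  simp [GMI, hf0]

theorem GMI_self {f : ℝ} (hf0 : 0 < f) (hf1 : f < 1) : GMI f f = 1 := by
  rw [GMI, Int.fract_eq_self.2 ⟨hf0.le, hf1⟩, if_pos le_rfl, div_self hf0.ne']

theorem GMI_add_le {f : ℝ} (hf0 : 0 < f) (hf1 : f < 1) (r r' : ℝ) :
    GMI f (r + r') ≤ GMI f r + GMI f r' := by
  simp only [GMI_eq_gmiProfile hf0 hf1]
  rcases Int.fract_add_eq_or r r' with h | h <;> rw [h]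
  · exact gmiProfile_add_le hf0.le hf1.le (Int.fract_nonneg r) (Int.fract_nonneg r')
  · exact gmiProfile_add_sub_one_le hf0.le hf1.le (Int.fract_lt_one r).le
      (Int.fract_lt_one r').le

theorem GMI_add_intCast (f r : ℝ) (w : ℤ) : GMI f (r + w) = GMI f r := by
  rw [GMI, GMI, Int.fract_add_intCast]

/-- For `f ∈ (0,1)`, `GMI f` is a valid cut generating function for `f`. -/
theorem stmt1 (f : ℝ) (hf : f ∈ Set.Ioo (0 : ℝ) 1) :
    (∀ r, 0 ≤ GMI f r) ∧ GMI f 0 = 0 ∧ GMI f f = 1 ∧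
    (∀ r r', GMI f (r + r') ≤ GMI f r + GMI f r') ∧
    (∀ (r : ℝ) (w : ℤ), GMI f (r + w) = GMI f r) := by
  obtain ⟨hf0, hf1⟩ := hf
  exact ⟨GMI_nonneg hf0 hf1, GMI_zero hf0.le, GMI_self hf0 hf1, GMI_add_le hf0 hf1,
    GMI_add_intCast f⟩
end

section
/- For every f ∈ (0,1), the function CG_f is a valid cut generating function for f (with k = 1): CG_f is nonnegative, CG_f(0) = 0, CG_f(f) = 1, CG_f is subadditive (CG_f(r + r') ≤ CG_f(r) + CG_f(r') for all r, r' ∈ ℝ), and CG_f(r + w) = CG_f(r) for all r ∈ ℝ and w ∈ ℤ. -/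
/-- The Gomory fractional function: `CG f r = [r]/f`, where `[r]` is the fractional
part of `r`. -/
noncomputable def CG (f r : ℝ) : ℝ := Int.fract r / f

/-- For `f ∈ (0,1)`, `CG f` is a valid cut generating function for `f`. -/
theorem stmt2 (f : ℝ) (hf : f ∈ Set.Ioo (0 : ℝ) 1) :
    (∀ r, 0 ≤ CG f r) ∧ CG f 0 = 0 ∧ CG f f = 1 ∧
    (∀ r r', CG f (r + r') ≤ CG f r + CG f r') ∧
    (∀ (r : ℝ) (w : ℤ), CG f (r + w) = CG f r) := by
  obtain ⟨hf0, hf1⟩ := hf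
  refine ⟨fun r => div_nonneg (Int.fract_nonneg r) hf0.le, ?_, ?_, ?_, ?_⟩
  · simp [CG]
  · have : Int.fract f = f := Int.fract_eq_self.mpr ⟨hf0.le, hf1⟩
    simp [CG, this, div_self hf0.ne']
  · intro r r'
    unfold CG
    rw [← add_div, div_le_div_iff_of_pos_right hf0]
    have h : (⌊r⌋ : ℝ) + ⌊r'⌋ ≤ ⌊r + r'⌋ := by
      exact_mod_cast Int.le_floor.mpr (by push_cast; gcongr <;> exact Int.floor_le _)
    unfold Int.fract
    linarith
  · intro r w
    simp [CG, Int.fract_add_intCast]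
end

section
/- Let f ∈ (0,1) and let p, q ≥ 2 be integers. For every (s_1, s_2) ∈ D_f^{p,q}, the periodic extension π̃(r) := π_{f,s_1,s_2}^{p,q}(r − ⌊r⌋) is a valid cut generating function for f: π̃ is nonnegative, π̃(0) = 0, π̃(f) = 1, π̃ is subadditive (π̃(r + r') ≤ π̃(r) + π̃(r') for all r, r' ∈ ℝ), and π̃(r + w) = π̃(r) for all r ∈ ℝ and w ∈ ℤ. -/
/-- The one-dimensional Gomory–Johnson style cut generating function
`π_{f,s₁,s₂}^{p,q}(r)`, the maximum of `min(φ_i^1(r), φ_i^2(r))` for `i = 1,…,p`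
and `min(ψ_j^1(r), ψ_j^2(r))` for `j = 1,…,q-1`. -/
noncomputable def piPQ (f s₁ s₂ : ℝ) (p q : ℕ) (r : ℝ) : ℝ :=
  sSup (((fun i : ℕ => min (s₁ * r + (i : ℝ) * (1 - f * s₁) / (p : ℝ))
            (s₂ * r + ((i : ℝ) - 1) * (1 - f * s₂) / ((p : ℝ) - 1))) '' Set.Icc 1 p) ∪
        ((fun j : ℕ => min (s₁ * (r - 1) + ((j : ℝ) - 1) * (1 + (1 - f) * s₁) / ((q : ℝ) - 1))
            (s₂ * (r - 1) + (j : ℝ) * (1 + (1 - f) * s₂) / (q : ℝ))) '' Set.Icc 1 (q - 1)))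

/-- The parameter domain `D_f^{p,q}` of valid slope pairs `(s₁, s₂)`. -/
noncomputable def Dset (f : ℝ) (p q : ℕ) : Set (ℝ × ℝ) :=
  (if ((p : ℝ) + q - 1) * f - p < 0 then
      Set.Icc (((p : ℝ) + q - 1) / (((p : ℝ) + q - 1) * f - p)) (1 / (f - 1))
    else Set.Iic (1 / (f - 1))) ×ˢ
  (if ((p : ℝ) + q - 1) * (1 - f) - q < 0 then
      Set.Icc (1 / f) (((p : ℝ) + q - 1) / ((q : ℝ) - ((p : ℝ) + q - 1) * (1 - f)))
    else Set.Ici (1 / f))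

/-!
Write the `t`-th pair of lines of `π` as `s₁ r + η_t` and `s₂ r + γ_t` (`t = i` for `φ_i`,
`t = p + q - j` for `ψ_j`), where `η_t` and `-γ_t` are partial sums of step sequences `u` and `w`.
Membership in `D_f^{p,q}` says exactly that `u` is nonincreasing and `w` nondecreasing, both
nonnegative, so `η` is concave and `γ` convex in `t`. The breakpoints `(η_t - γ_t) / (s₂ - s₁)` run
from `0` at `t = 0` to `1` at `t = p + q`; if `x` lies between the breakpoints `t` and `t + 1`, then
`π(x)` dominates both `s₁ x + η_t` and `s₂ x + γ_{t+1}`. Nonnegativity follows because the zeros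
of these two lines are ordered, concavity against convexity. For subadditivity, every piece `k` of
`π(x + y - τ)` has one of its two lines below the sum of these bounds for `x` and `y`: a two-point
Karamata inequality for `η` or for `γ`. The value at `f` is read off the piece `t = p`, whose lines
cross at `(f, 1)`.
-/
open Finset

section

variable {α R : Type*} [LinearOrder α] [CommRing R] [LinearOrder R] [IsStrictOrderedRing R]
  {u w : ℕ → R} {a b c d m n : ℕ}

theorem exists_apply_le_le_apply_succ {β : ℕ → α} {x : α} (h0 : β 0 ≤ x) :
    ∀ n, x ≤ β (n + 1) → ∃ t ≤ n, β t ≤ x ∧ x ≤ β (t + 1)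
  | 0, h => ⟨0, le_rfl, h0, h⟩
  | n + 1, h => by
    by_cases hn : β (n + 1) ≤ x
    · exact ⟨n + 1, le_rfl, hn, h⟩
    · obtain ⟨t, ht, hβ⟩ := exists_apply_le_le_apply_succ h0 n (not_le.1 hn).le
      exact ⟨t, ht.trans n.le_succ, hβ⟩

theorem Antitone.mul_sum_range_le (hu : Antitone u) (h : m ≤ n) :
    (m : R) * ∑ i ∈ range n, u i ≤ n * ∑ i ∈ range m, u i := by
  induction n, h using Nat.le_induction with
  | base => rfl
  | succ n hmn ih =>
    have hlast : (m : R) * u n ≤ ∑ i ∈ range m, u i := by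
      simpa using card_nsmul_le_sum (range m) u (u n) fun i hi => hu (by simp at hi; omega)
    rw [sum_range_succ]
    push_cast
    linarith

theorem Monotone.mul_sum_range_le (hw : Monotone w) (h : m ≤ n) :
    (n : R) * ∑ i ∈ range m, w i ≤ m * ∑ i ∈ range n, w i := by
  simpa [sum_neg_distrib] using hw.neg.mul_sum_range_le h

theorem Antitone.sum_range_add_sum_range_le (hu : Antitone u) (hu_nonneg : ∀ i, 0 ≤ u i)
    (hac : a ≤ c) (had : a ≤ d) (h : a + b ≤ c + d) :
    ∑ i ∈ range a, u i + ∑ i ∈ range b, u i ≤ ∑ i ∈ range c, u i + ∑ i ∈ range d, u i := by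
  obtain ⟨k, rfl⟩ := Nat.exists_eq_add_of_le hac
  have hb : ∑ i ∈ range b, u i ≤ ∑ i ∈ range (d + k), u i :=
    sum_mono_set_of_nonneg hu_nonneg (range_mono (by omega))
  have hshift : ∑ i ∈ range k, u (d + i) ≤ ∑ i ∈ range k, u (a + i) :=
    sum_le_sum fun i _ => hu (by omega)
  rw [sum_range_add] at hb ⊢
  linarith

theorem Monotone.sum_range_add_sum_range_le (hw : Monotone w) (hw_nonneg : ∀ i, 0 ≤ w i)
    (hcb : c ≤ b) (hdb : d ≤ b) (h : c + d ≤ a + b) :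
    ∑ i ∈ range c, w i + ∑ i ∈ range d, w i ≤ ∑ i ∈ range a, w i + ∑ i ∈ range b, w i := by
  have hmono : Monotone fun n => ∑ i ∈ range n, w i :=
    fun m n hmn => sum_mono_set_of_nonneg hw_nonneg (range_mono hmn)
  rcases lt_or_ge c a with hca | hac
  · exact add_le_add (hmono hca.le) (hmono hdb)
  rcases lt_or_ge d a with hda | had
  · rw [add_comm]
    exact add_le_add (hmono hda.le) (hmono hcb)
  obtain ⟨k, rfl⟩ := Nat.exists_eq_add_of_le hac
  have hb : ∑ i ∈ range (d + k), w i ≤ ∑ i ∈ range b, w i := hmono (by omega)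
  have hshift : ∑ i ∈ range k, w (a + i) ≤ ∑ i ∈ range k, w (d + i) :=
    sum_le_sum fun i _ => hw (by omega)
  rw [sum_range_add] at hb ⊢
  linarith

theorem Int.exists_fract_add_eq_sub [FloorRing R] (a b : R) :
    ∃ τ : ℕ, τ ≤ 1 ∧ Int.fract (a + b) = Int.fract a + Int.fract b - τ := by
  obtain ⟨z, hz⟩ := Int.fract_add a b
  have hz₀ : z ≤ 0 := by
    have : (z : R) ≤ 0 := by linarith [Int.fract_add_le a b]
    exact_mod_cast this
  have hz₁ : -1 ≤ z := by
    have : (-1 : R) ≤ z := by linarith [Int.fract_add_fract_le a b]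
    exact_mod_cast this
  obtain rfl | rfl : z = 0 ∨ z = -1 := by omega
  · exact ⟨0, zero_le_one, by push_cast at hz ⊢; linarith⟩
  · exact ⟨1, le_rfl, by push_cast at hz ⊢; linarith⟩

end

namespace TwoSlope

variable (u w : ℕ → ℝ) (N : ℕ)

def piece (t : ℕ) (x : ℝ) : ℝ :=
  min (∑ i ∈ range t, u i - x * ∑ i ∈ range N, u i) (x * ∑ i ∈ range N, w i - ∑ i ∈ range t, w i)

noncomputable def envelope (x : ℝ) : ℝ :=
  sSup ((fun t => piece u w N t x) '' Set.Icc 1 (N - 1))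

/-- The abscissa where the two lines of `piece t` cross. -/
noncomputable def breakpoint (t : ℕ) : ℝ :=
  (∑ i ∈ range t, u i + ∑ i ∈ range t, w i) / (∑ i ∈ range N, u i + ∑ i ∈ range N, w i)

variable {u w N} {t : ℕ} {x y c : ℝ}

theorem piece_le_envelope (ht₁ : 1 ≤ t) (ht : t < N) : piece u w N t x ≤ envelope u w N x :=
  le_csSup ((Set.finite_Icc 1 (N - 1)).image _).bddAbove ⟨t, ⟨ht₁, by omega⟩, rfl⟩

theorem envelope_le (hN : 2 ≤ N) (h : ∀ t, 1 ≤ t → t < N → piece u w N t x ≤ c) :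
    envelope u w N x ≤ c := by
  refine csSup_le ⟨_, 1, ⟨le_rfl, by omega⟩, rfl⟩ ?_
  rintro _ ⟨t, ⟨ht₁, ht⟩, rfl⟩
  exact h t ht₁ (by omega)

theorem piece_zero_le_piece_one (hu₀ : 0 ≤ u 0) (hw₀ : w 0 = 0) :
    piece u w N 0 x ≤ piece u w N 1 x := by
  simp only [piece, range_one, sum_singleton, range_zero, sum_empty, hw₀, sub_zero]
  exact min_le_min (by linarith) le_rfl

theorem piece_self_le_piece_pred (hN : 1 ≤ N) (huN : u (N - 1) = 0) (hwN : 0 ≤ w (N - 1)) :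
    piece u w N N x ≤ piece u w N (N - 1) x := by
  obtain ⟨M, rfl⟩ := Nat.exists_eq_add_of_le' hN
  simp only [piece, Nat.add_sub_cancel] at huN hwN ⊢
  rw [sum_range_succ, sum_range_succ w, huN]
  exact min_le_min (by linarith) (by linarith)

/-- The pieces `t = 0` and `t = N` are dominated by `t = 1` and `t = N - 1`. -/
theorem piece_le_envelope_of_le (hN : 2 ≤ N) (hu₀ : 0 ≤ u 0) (hw₀ : w 0 = 0)
    (huN : u (N - 1) = 0) (hwN : 0 ≤ w (N - 1)) (ht : t ≤ N) :
    piece u w N t x ≤ envelope u w N x := by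
  rcases Nat.eq_zero_or_pos t with rfl | ht₀
  · exact (piece_zero_le_piece_one hu₀ hw₀).trans (piece_le_envelope le_rfl (by omega))
  rcases ht.lt_or_eq with ht | rfl
  · exact piece_le_envelope ht₀ ht
  · exact (piece_self_le_piece_pred (by omega) huN hwN).trans
      (piece_le_envelope (by omega) (by omega))

theorem breakpoint_zero : breakpoint u w N 0 = 0 := by simp [breakpoint]

theorem breakpoint_self (hσ : 0 < ∑ i ∈ range N, u i + ∑ i ∈ range N, w i) :
    breakpoint u w N N = 1 :=
  div_self hσ.ne'

theorem piece_eq_left (hσ : 0 < ∑ i ∈ range N, u i + ∑ i ∈ range N, w i)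
    (h : breakpoint u w N t ≤ x) :
    piece u w N t x = ∑ i ∈ range t, u i - x * ∑ i ∈ range N, u i := by
  rw [breakpoint, div_le_iff₀ hσ] at h
  exact min_eq_left (by linarith)

theorem piece_eq_right (hσ : 0 < ∑ i ∈ range N, u i + ∑ i ∈ range N, w i)
    (h : x ≤ breakpoint u w N t) :
    piece u w N t x = x * ∑ i ∈ range N, w i - ∑ i ∈ range t, w i := by
  rw [breakpoint, le_div_iff₀ hσ] at h
  exact min_eq_right (by linarith)

/-- For `x` between the breakpoints `t` and `t + 1`, the envelope dominates the left line of
`piece t` and the right line of `piece (t + 1)`. -/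
theorem exists_le_envelope (hN : 2 ≤ N) (hu_nonneg : ∀ i, 0 ≤ u i) (huN : u (N - 1) = 0)
    (hw_nonneg : ∀ i, 0 ≤ w i) (hw₀ : w 0 = 0)
    (hσ : 0 < ∑ i ∈ range N, u i + ∑ i ∈ range N, w i) (hx₀ : 0 ≤ x) (hx₁ : x ≤ 1) :
    ∃ t < N, ∑ i ∈ range t, u i - x * ∑ i ∈ range N, u i ≤ envelope u w N x ∧
      x * ∑ i ∈ range N, w i - ∑ i ∈ range (t + 1), w i ≤ envelope u w N x := by
  obtain ⟨t, ht, hleft, hright⟩ := exists_apply_le_le_apply_succ (β := breakpoint u w N) (x := x)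
    (by rwa [breakpoint_zero]) (N - 1) (by rwa [Nat.sub_add_cancel (by omega), breakpoint_self hσ])
  have hle : ∀ s ≤ N, piece u w N s x ≤ envelope u w N x := fun s hs =>
    piece_le_envelope_of_le hN (hu_nonneg 0) hw₀ huN (hw_nonneg _) hs
  exact ⟨t, by omega, piece_eq_left hσ hleft ▸ hle t (by omega),
    piece_eq_right hσ hright ▸ hle (t + 1) (by omega)⟩

/-- The zero of the left line of `piece t` lies to the right of the zero of the right line of
`piece (t + 1)`: the first is at least `t / (N - 1)` by concavity, the second at most `t / (N - 1)`
by convexity. -/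
theorem sum_mul_sum_succ_le (hu : Antitone u) (hu_nonneg : ∀ i, 0 ≤ u i) (huN : u (N - 1) = 0)
    (hw : Monotone w) (hw₀ : w 0 = 0) (hN : 2 ≤ N) (ht : t < N) :
    (∑ i ∈ range N, u i) * ∑ i ∈ range (t + 1), w i ≤
      (∑ i ∈ range N, w i) * ∑ i ∈ range t, u i := by
  obtain ⟨M, rfl⟩ := Nat.exists_eq_add_of_le' (show 1 ≤ N by omega)
  simp only [Nat.add_sub_cancel] at huN
  rw [sum_range_succ u, huN, add_zero, sum_range_succ' w, sum_range_succ' w, hw₀, add_zero,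
    add_zero]
  have hU := hu.mul_sum_range_le (show t ≤ M by omega)
  have hW := (show Monotone fun i => w (i + 1) from fun i j h => hw (by omega)).mul_sum_range_le
    (show t ≤ M by omega)
  have hUM : 0 ≤ ∑ i ∈ range M, u i := sum_nonneg fun i _ => hu_nonneg i
  have hWM : 0 ≤ ∑ i ∈ range M, w (i + 1) := sum_nonneg fun i _ => hw₀ ▸ hw (Nat.zero_le _)
  have hM : (0 : ℝ) < M := by exact_mod_cast (show 0 < M by omega)
  refine le_of_mul_le_mul_left ?_ hM
  nlinarith [mul_le_mul_of_nonneg_left hW hUM, mul_le_mul_of_nonneg_left hU hWM]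

structure Admissible (u w : ℕ → ℝ) (N : ℕ) : Prop where
  two_le : 2 ≤ N
  antitone_u : Antitone u
  nonneg_u : ∀ i, 0 ≤ u i
  u_last : u (N - 1) = 0
  monotone_w : Monotone w
  w_zero : w 0 = 0
  sum_pos : 0 < ∑ i ∈ range N, u i + ∑ i ∈ range N, w i

theorem Admissible.nonneg_w (h : Admissible u w N) (i : ℕ) : 0 ≤ w i :=
  h.w_zero ▸ h.monotone_w (Nat.zero_le i)

theorem Admissible.envelope_nonneg (h : Admissible u w N) (hx₀ : 0 ≤ x) (hx₁ : x ≤ 1) :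
    0 ≤ envelope u w N x := by
  obtain ⟨t, ht, hleft, hright⟩ :=
    exists_le_envelope h.two_le h.nonneg_u h.u_last h.nonneg_w h.w_zero h.sum_pos hx₀ hx₁
  have hzeros := sum_mul_sum_succ_le h.antitone_u h.nonneg_u h.u_last h.monotone_w h.w_zero
    h.two_le ht
  have hUN : 0 ≤ ∑ i ∈ range N, u i := sum_nonneg fun i _ => h.nonneg_u i
  have hWN : 0 ≤ ∑ i ∈ range N, w i := sum_nonneg fun i _ => h.nonneg_w i
  nlinarith [mul_le_mul_of_nonneg_left hleft hWN, mul_le_mul_of_nonneg_left hright hUN, h.sum_pos]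

theorem Admissible.envelope_zero (h : Admissible u w N) : envelope u w N 0 = 0 := by
  refine le_antisymm (envelope_le h.two_le fun t _ _ => (min_le_right _ _).trans ?_)
    (h.envelope_nonneg le_rfl zero_le_one)
  have : 0 ≤ ∑ i ∈ range t, w i := sum_nonneg fun i _ => h.nonneg_w i
  linarith

theorem envelope_eq_of_piece (hN : 2 ≤ N) (hu_nonneg : ∀ i, 0 ≤ u i) (hw_nonneg : ∀ i, 0 ≤ w i)
    (ht₁ : 1 ≤ t) (ht : t < N) (hleft : ∑ i ∈ range t, u i - x * ∑ i ∈ range N, u i = c)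
    (hright : x * ∑ i ∈ range N, w i - ∑ i ∈ range t, w i = c) :
    envelope u w N x = c := by
  refine le_antisymm (envelope_le hN fun s _ _ => ?_) ?_
  · rcases le_total s t with hst | hts
    · have := sum_mono_set_of_nonneg hu_nonneg (range_mono hst)
      exact (min_le_left _ _).trans (by simp only at this; linarith)
    · have := sum_mono_set_of_nonneg hw_nonneg (range_mono hts)
      exact (min_le_right _ _).trans (by simp only at this; linarith)
  · calc c = piece u w N t x := by rw [piece, hleft, hright, min_self]
      _ ≤ envelope u w N x := piece_le_envelope ht₁ ht

/-- The combinatorial core of subadditivity: concavity of the partial sums of `u` and convexity of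
those of `w` compare the pieces `l₁`, `l₂` with a piece `k` shifted by `τ` periods. -/
theorem sum_range_dichotomy (hu : Antitone u) (hu_nonneg : ∀ i, 0 ≤ u i) (huN : u (N - 1) = 0)
    (hw : Monotone w) (hw₀ : w 0 = 0) {k l₁ l₂ τ : ℕ} (hl₁ : l₁ < N) (hl₂ : l₂ < N) (hτ : τ ≤ 1) :
    ∑ i ∈ range k, u i + τ * ∑ i ∈ range N, u i ≤
        ∑ i ∈ range l₁, u i + ∑ i ∈ range l₂, u i ∨
      ∑ i ∈ range (l₁ + 1), w i + ∑ i ∈ range (l₂ + 1), w i ≤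
        ∑ i ∈ range k, w i + τ * ∑ i ∈ range N, w i := by
  have hw_nonneg : ∀ i, 0 ≤ w i := fun i => hw₀ ▸ hw (Nat.zero_le i)
  obtain rfl | rfl : τ = 0 ∨ τ = 1 := by omega
  · simp only [Nat.cast_zero, zero_mul, add_zero]
    by_cases h : k ≤ l₁ + l₂
    · left
      simpa using hu.sum_range_add_sum_range_le hu_nonneg (a := 0) (b := k)
        (Nat.zero_le l₁) (Nat.zero_le l₂) (by omega)
    · right
      simpa [hw₀] using hw.sum_range_add_sum_range_le hw_nonneg (a := 1) (b := k)
        (c := l₁ + 1) (d := l₂ + 1) (by omega) (by omega) (by omega)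
  · simp only [Nat.cast_one, one_mul]
    by_cases h : k + N ≤ l₁ + l₂ + 1
    · left
      have hUN : ∑ i ∈ range N, u i = ∑ i ∈ range (N - 1), u i := by
        nth_rw 1 [← Nat.sub_add_cancel (show 1 ≤ N by omega)]
        rw [sum_range_succ, huN, add_zero]
      rw [hUN]
      exact hu.sum_range_add_sum_range_le hu_nonneg (by omega) (by omega) (by omega)
    · right
      exact hw.sum_range_add_sum_range_le hw_nonneg (by omega) (by omega) (by omega)

theorem Admissible.envelope_add_sub_le (h : Admissible u w N) (hx₀ : 0 ≤ x) (hx₁ : x ≤ 1)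
    (hy₀ : 0 ≤ y) (hy₁ : y ≤ 1) {τ : ℕ} (hτ : τ ≤ 1) :
    envelope u w N (x + y - τ) ≤ envelope u w N x + envelope u w N y := by
  obtain ⟨t₁, ht₁, hleft₁, hright₁⟩ :=
    exists_le_envelope h.two_le h.nonneg_u h.u_last h.nonneg_w h.w_zero h.sum_pos hx₀ hx₁
  obtain ⟨t₂, ht₂, hleft₂, hright₂⟩ :=
    exists_le_envelope h.two_le h.nonneg_u h.u_last h.nonneg_w h.w_zero h.sum_pos hy₀ hy₁
  refine envelope_le h.two_le fun k _ _ => ?_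
  rcases sum_range_dichotomy (k := k) h.antitone_u h.nonneg_u h.u_last h.monotone_w h.w_zero
    ht₁ ht₂ hτ with hk | hk
  · exact (min_le_left _ _).trans (by linarith)
  · exact (min_le_right _ _).trans (by linarith)

end TwoSlope

section Steps

variable {p q t : ℕ} {a b c d : ℝ}

def leftSteps (p q : ℕ) (a c : ℝ) (i : ℕ) : ℝ :=
  if i < p then a else if i < p + q - 1 then c else 0

def rightSteps (p : ℕ) (b d : ℝ) (i : ℕ) : ℝ :=
  if i = 0 then 0 else if i < p then b else d

theorem leftSteps_antitone (hc : 0 ≤ c) (hca : c ≤ a) : Antitone (leftSteps p q a c) := by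
  intro i j hij
  unfold leftSteps
  split_ifs <;> first | omega | linarith

theorem leftSteps_nonneg (hc : 0 ≤ c) (hca : c ≤ a) (i : ℕ) : 0 ≤ leftSteps p q a c i := by
  unfold leftSteps
  split_ifs <;> linarith

theorem leftSteps_last (hq : 1 ≤ q) : leftSteps p q a c (p + q - 1) = 0 := by
  simp only [leftSteps]
  rw [if_neg (by omega), if_neg (by omega)]

theorem rightSteps_monotone (hb : 0 ≤ b) (hbd : b ≤ d) : Monotone (rightSteps p b d) := by
  intro i j hij
  unfold rightSteps
  split_ifs <;> first | omega | linarith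

theorem rightSteps_zero : rightSteps p b d 0 = 0 := if_pos rfl

theorem sum_leftSteps_of_le (ht : t ≤ p) : ∑ i ∈ range t, leftSteps p q a c i = t * a := by
  induction t with
  | zero => simp
  | succ t ih =>
    rw [sum_range_succ, ih (by omega), leftSteps, if_pos (by omega)]
    push_cast
    ring

theorem sum_leftSteps_of_ge (hpt : p ≤ t) (ht : t ≤ p + q - 1) :
    ∑ i ∈ range t, leftSteps p q a c i = p * a + (t - p) * c := by
  induction t, hpt using Nat.le_induction with
  | base => rw [sum_leftSteps_of_le le_rfl]; ring
  | succ t hpt ih =>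
    rw [sum_range_succ, ih (by omega), leftSteps, if_neg (by omega), if_pos (by omega)]
    push_cast
    ring

theorem sum_leftSteps_top (hq : 1 ≤ q) :
    ∑ i ∈ range (p + q), leftSteps p q a c i = p * a + (q - 1) * c := by
  rw [← Nat.sub_add_cancel (show 1 ≤ p + q by omega), sum_range_succ, leftSteps_last hq,
    sum_leftSteps_of_ge (by omega) le_rfl, Nat.cast_sub (by omega)]
  push_cast
  ring

theorem sum_rightSteps_of_le (ht₁ : 1 ≤ t) (ht : t ≤ p) :
    ∑ i ∈ range t, rightSteps p b d i = (t - 1) * b := by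
  induction t, ht₁ using Nat.le_induction with
  | base => simp [rightSteps_zero]
  | succ t ht₁ ih =>
    rw [sum_range_succ, ih (by omega), rightSteps, if_neg (by omega), if_pos (by omega)]
    push_cast
    ring

theorem sum_rightSteps_of_ge (hp : 1 ≤ p) (hpt : p ≤ t) :
    ∑ i ∈ range t, rightSteps p b d i = (p - 1) * b + (t - p) * d := by
  induction t, hpt using Nat.le_induction with
  | base => rw [sum_rightSteps_of_le hp le_rfl]; ring
  | succ t hpt ih =>
    rw [sum_range_succ, ih, rightSteps, if_neg (by omega), if_neg (by omega)]
    push_cast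
    ring

end Steps

/-- The intercepts of `φ_i^1` and `ψ_j^1` are the partial sums of `piSteps₁` up to `t = i` and
`t = p + q - j`; those of `φ_i^2` and `ψ_j^2` are minus the partial sums of `piSteps₂`. -/
noncomputable def piSteps₁ (f s₁ : ℝ) (p q : ℕ) : ℕ → ℝ :=
  leftSteps p q ((1 - f * s₁) / p) (-(1 + (1 - f) * s₁) / (q - 1))

noncomputable def piSteps₂ (f s₂ : ℝ) (p q : ℕ) : ℕ → ℝ :=
  rightSteps p ((f * s₂ - 1) / (p - 1)) ((1 + (1 - f) * s₂) / q)

section PiPQ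

open TwoSlope

variable {f s₁ s₂ : ℝ} {p q : ℕ}

theorem sum_piSteps₁ (hp : 1 ≤ p) (hq : 2 ≤ q) :
    ∑ i ∈ range (p + q), piSteps₁ f s₁ p q i = -s₁ := by
  have hp' : (p : ℝ) ≠ 0 := by positivity
  have hq' : (q : ℝ) - 1 ≠ 0 := (sub_pos.2 (Nat.one_lt_cast.2 hq)).ne'
  rw [piSteps₁, sum_leftSteps_top (by omega)]
  field_simp
  ring

theorem sum_piSteps₂ (hp : 2 ≤ p) (hq : 1 ≤ q) :
    ∑ i ∈ range (p + q), piSteps₂ f s₂ p q i = s₂ := by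
  have hp' : (p : ℝ) - 1 ≠ 0 := (sub_pos.2 (Nat.one_lt_cast.2 hp)).ne'
  have hq' : (q : ℝ) ≠ 0 := by positivity
  rw [piSteps₂, sum_rightSteps_of_ge (by omega) (by omega)]
  push_cast
  field_simp
  ring

theorem piece_piSteps_of_le (hp : 2 ≤ p) (hq : 2 ≤ q) {i : ℕ} (hi₁ : 1 ≤ i) (hip : i ≤ p)
    (r : ℝ) :
    piece (piSteps₁ f s₁ p q) (piSteps₂ f s₂ p q) (p + q) i r =
      min (s₁ * r + (i : ℝ) * (1 - f * s₁) / (p : ℝ))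
        (s₂ * r + ((i : ℝ) - 1) * (1 - f * s₂) / ((p : ℝ) - 1)) := by
  rw [piece, sum_piSteps₁ (by omega) hq, sum_piSteps₂ hp (by omega), piSteps₁, piSteps₂,
    sum_leftSteps_of_le hip, sum_rightSteps_of_le hi₁ hip]
  congr 1 <;> ring

theorem piece_piSteps_of_ge (hp : 2 ≤ p) (hq : 2 ≤ q) {j : ℕ} (hj₁ : 1 ≤ j) (hjq : j ≤ q - 1)
    (r : ℝ) :
    piece (piSteps₁ f s₁ p q) (piSteps₂ f s₂ p q) (p + q) (p + q - j) r =
      min (s₁ * (r - 1) + ((j : ℝ) - 1) * (1 + (1 - f) * s₁) / ((q : ℝ) - 1))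
        (s₂ * (r - 1) + (j : ℝ) * (1 + (1 - f) * s₂) / (q : ℝ)) := by
  have hq' : (q : ℝ) - 1 ≠ 0 := (sub_pos.2 (Nat.one_lt_cast.2 hq)).ne'
  have hq'' : (q : ℝ) ≠ 0 := by positivity
  have hp' : (p : ℝ) - 1 ≠ 0 := (sub_pos.2 (Nat.one_lt_cast.2 hp)).ne'
  rw [piece, sum_piSteps₁ (by omega) hq, sum_piSteps₂ hp (by omega), piSteps₁, piSteps₂,
    sum_leftSteps_of_ge (by omega) (by omega), sum_rightSteps_of_ge (by omega) (by omega),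
    Nat.cast_sub (by omega)]
  push_cast
  congr 1
  · field_simp
    ring
  · field_simp
    ring

theorem piPQ_eq_envelope (hp : 2 ≤ p) (hq : 2 ≤ q) :
    piPQ f s₁ s₂ p q = envelope (piSteps₁ f s₁ p q) (piSteps₂ f s₂ p q) (p + q) := by
  funext r
  unfold piPQ envelope
  congr 1
  ext y
  constructor
  · rintro (⟨i, ⟨hi₁, hip⟩, rfl⟩ | ⟨j, ⟨hj₁, hjq⟩, rfl⟩)
    · exact ⟨i, ⟨hi₁, by omega⟩, piece_piSteps_of_le hp hq hi₁ hip r⟩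
    · exact ⟨p + q - j, ⟨by omega, by omega⟩, piece_piSteps_of_ge hp hq hj₁ hjq r⟩
  · rintro ⟨t, ⟨ht₁, ht⟩, rfl⟩
    rcases le_or_gt t p with htp | htp
    · exact Or.inl ⟨t, ⟨ht₁, htp⟩, (piece_piSteps_of_le hp hq ht₁ htp r).symm⟩
    · refine Or.inr ⟨p + q - t, ⟨by omega, by omega⟩, ?_⟩
      have h := piece_piSteps_of_ge (f := f) (s₁ := s₁) (s₂ := s₂) hp hq
        (j := p + q - t) (by omega) (by omega) r
      rw [Nat.sub_sub_self (by omega)] at h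
      exact h.symm

/-- The case distinctions in `Dset` only record the sign of the coefficient of `s₁` resp. `s₂`
in the second and fourth inequality. -/
theorem bounds_of_mem_Dset (hf : f ∈ Set.Ioo 0 1) (hs : (s₁, s₂) ∈ Dset f p q) :
    1 + (1 - f) * s₁ ≤ 0 ∧ s₁ * ((p + q - 1) * f - p) ≤ p + q - 1 ∧
      1 ≤ f * s₂ ∧ s₂ * (q - (p + q - 1) * (1 - f)) ≤ p + q - 1 := by
  obtain ⟨hf₀, hf₁⟩ := hf
  obtain ⟨hs₁, hs₂⟩ := hs
  dsimp only at hs₁ hs₂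
  have hs₁' : s₁ ≤ 1 / (f - 1) := by
    split_ifs at hs₁
    exacts [hs₁.2, hs₁]
  have hs₂' : 1 / f ≤ s₂ := by
    split_ifs at hs₂
    exacts [hs₂.1, hs₂]
  rw [le_div_iff_of_neg (by linarith)] at hs₁'
  rw [div_le_iff₀ hf₀] at hs₂'
  have hs₁neg : s₁ < 0 := by nlinarith
  have hs₂pos : 0 < s₂ := by nlinarith
  refine ⟨by linarith, ?_, by linarith, ?_⟩
  · split_ifs at hs₁ with hc
    · exact (div_le_iff_of_neg hc).1 hs₁.1
    · have hX := not_lt.1 hc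
      have : (0 : ℝ) ≤ p + q - 1 := by nlinarith [Nat.cast_nonneg (α := ℝ) p]
      linarith [mul_nonpos_iff.2 (Or.inr ⟨hs₁neg.le, hX⟩)]
  · split_ifs at hs₂ with hc
    · exact (le_div_iff₀ (by linarith)).1 hs₂.2
    · have hX := not_lt.1 hc
      have : (0 : ℝ) ≤ p + q - 1 := by nlinarith [Nat.cast_nonneg (α := ℝ) q]
      have hX' : (q : ℝ) - (p + q - 1) * (1 - f) ≤ 0 := by linarith
      linarith [mul_nonpos_iff.2 (Or.inl ⟨hs₂pos.le, hX'⟩)]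

theorem admissible_piSteps (hf : f ∈ Set.Ioo 0 1) (hp : 2 ≤ p) (hq : 2 ≤ q)
    (h₁ : 1 + (1 - f) * s₁ ≤ 0) (h₁' : s₁ * ((p + q - 1) * f - p) ≤ p + q - 1)
    (h₂ : 1 ≤ f * s₂) (h₂' : s₂ * (q - (p + q - 1) * (1 - f)) ≤ p + q - 1) :
    Admissible (piSteps₁ f s₁ p q) (piSteps₂ f s₂ p q) (p + q) := by
  obtain ⟨hf₀, hf₁⟩ := hf
  have hp₀ : (0 : ℝ) < p := by positivity
  have hq₀ : (0 : ℝ) < q := by positivity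
  have hp₁ : (0 : ℝ) < p - 1 := sub_pos.2 (Nat.one_lt_cast.2 hp)
  have hq₁ : (0 : ℝ) < q - 1 := sub_pos.2 (Nat.one_lt_cast.2 hq)
  have hc : 0 ≤ -(1 + (1 - f) * s₁) / ((q : ℝ) - 1) := div_nonneg (by linarith) hq₁.le
  have hca : -(1 + (1 - f) * s₁) / ((q : ℝ) - 1) ≤ (1 - f * s₁) / p := by
    rw [div_le_div_iff₀ hq₁ hp₀]
    linarith
  have hb : 0 ≤ (f * s₂ - 1) / ((p : ℝ) - 1) := div_nonneg (by linarith) hp₁.le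
  have hbd : (f * s₂ - 1) / ((p : ℝ) - 1) ≤ (1 + (1 - f) * s₂) / q := by
    rw [div_le_div_iff₀ hp₁ hq₀]
    linarith
  refine ⟨by omega, leftSteps_antitone hc hca, leftSteps_nonneg hc hca, leftSteps_last (by omega),
    rightSteps_monotone hb hbd, rightSteps_zero, ?_⟩
  have hs₁ : s₁ < 0 := by nlinarith
  have hs₂ : 0 < s₂ := by nlinarith
  rw [sum_piSteps₁ (by omega) hq, sum_piSteps₂ hp (by omega)]
  linarith

theorem envelope_piSteps_f (hp : 2 ≤ p) (hq : 2 ≤ q)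
    (h : Admissible (piSteps₁ f s₁ p q) (piSteps₂ f s₂ p q) (p + q)) :
    envelope (piSteps₁ f s₁ p q) (piSteps₂ f s₂ p q) (p + q) f = 1 := by
  have hp₀ : (p : ℝ) ≠ 0 := by positivity
  have hp₁ : (p : ℝ) - 1 ≠ 0 := (sub_pos.2 (Nat.one_lt_cast.2 hp)).ne'
  refine envelope_eq_of_piece h.two_le h.nonneg_u h.nonneg_w (t := p) (by omega) (by omega) ?_ ?_
  · rw [sum_piSteps₁ (by omega) hq, piSteps₁, sum_leftSteps_of_le le_rfl]
    field_simp
    ring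
  · rw [sum_piSteps₂ hp (by omega), piSteps₂, sum_rightSteps_of_le (by omega) le_rfl]
    field_simp
    ring

end PiPQ

/-- For `f ∈ (0,1)`, integers `p, q ≥ 2`, and `(s₁, s₂) ∈ D_f^{p,q}`,
the periodic extension `π̃(r) = π_{f,s₁,s₂}^{p,q}(r - ⌊r⌋)` is a valid cut
generating function for `f`. -/
theorem stmt3 (f : ℝ) (hf : f ∈ Set.Ioo (0 : ℝ) 1) (p q : ℕ) (hp : 2 ≤ p) (hq : 2 ≤ q)
    (s₁ s₂ : ℝ) (hs : (s₁, s₂) ∈ Dset f p q) :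
    (∀ r, 0 ≤ piPQ f s₁ s₂ p q (Int.fract r)) ∧
    piPQ f s₁ s₂ p q (Int.fract 0) = 0 ∧
    piPQ f s₁ s₂ p q (Int.fract f) = 1 ∧
    (∀ r r', piPQ f s₁ s₂ p q (Int.fract (r + r')) ≤
      piPQ f s₁ s₂ p q (Int.fract r) + piPQ f s₁ s₂ p q (Int.fract r')) ∧
    (∀ (r : ℝ) (w : ℤ), piPQ f s₁ s₂ p q (Int.fract (r + w)) = piPQ f s₁ s₂ p q (Int.fract r)) := by
  obtain ⟨h₁, h₁', h₂, h₂'⟩ := bounds_of_mem_Dset hf hs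
  have h := admissible_piSteps hf hp hq h₁ h₁' h₂ h₂'
  rw [piPQ_eq_envelope hp hq]
  refine ⟨fun r => h.envelope_nonneg (Int.fract_nonneg r) (Int.fract_lt_one r).le,
    by rw [Int.fract_zero, h.envelope_zero], ?_, fun r r' => ?_,
    fun r w => by rw [Int.fract_add_intCast]⟩
  · rw [Int.fract_eq_self.2 ⟨hf.1.le, hf.2⟩, envelope_piSteps_f hp hq h]
  · obtain ⟨τ, hτ, hfract⟩ := Int.exists_fract_add_eq_sub r r'
    rw [hfract]
    exact h.envelope_add_sub_le (Int.fract_nonneg r) (Int.fract_lt_one r).le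
      (Int.fract_nonneg r') (Int.fract_lt_one r').le hτ
end

section
/- Let f ∈ (0,1) and let p, q ≥ 2 be integers. Then the point (s_1, s_2) = (1/(f−1), 1/f) belongs to D_f^{p,q}, and for every r ∈ [0,1), π_{f, 1/(f−1), 1/f}^{p,q}(r) = GMI_f(r) = min( r/f, (1−r)/(1−f) ). -/
open Set

section Dset

variable {f a b : ℝ}

theorem one_div_le_div_sub_mul_one_sub (hf : 0 < f) (hba : b ≤ a)
    (h : a * (1 - f) - b < 0) : 1 / f ≤ a / (b - a * (1 - f)) := by
  rw [div_le_div_iff₀ hf (by linarith)]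
  linarith

theorem div_mul_sub_le_one_div_sub_one (hf : f < 1) (hba : b ≤ a) (h : a * f - b < 0) :
    a / (a * f - b) ≤ 1 / (f - 1) := by
  have key := one_div_le_div_sub_mul_one_sub (f := 1 - f) (by linarith) hba (by simpa using h)
  rw [sub_sub_cancel] at key
  rw [← neg_sub b, ← neg_sub 1 f, div_neg, div_neg]
  exact neg_le_neg key

theorem GMI_slopes_mem_Dset (hf0 : 0 < f) (hf1 : f < 1) {p q : ℕ} (hp : 1 ≤ p) (hq : 1 ≤ q) :
    (1 / (f - 1), 1 / f) ∈ Dset f p q := by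
  have hp' : (1 : ℝ) ≤ p := by exact_mod_cast hp
  have hq' : (1 : ℝ) ≤ q := by exact_mod_cast hq
  rw [Dset, mem_prod]
  constructor
  · split_ifs with h
    · exact ⟨div_mul_sub_le_one_div_sub_one hf1 (by linarith) h, le_rfl⟩
    · exact mem_Iic.2 le_rfl
  · split_ifs with h
    · exact ⟨le_rfl, one_div_le_div_sub_mul_one_sub hf0 (by linarith) h⟩
    · exact mem_Ici.2 le_rfl

end Dset

section GMI

variable {f x : ℝ}

theorem div_le_one_sub_div_one_sub_iff (hf0 : 0 < f) (hf1 : f < 1) :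
    x / f ≤ (1 - x) / (1 - f) ↔ x ≤ f := by
  rw [div_le_div_iff₀ hf0 (by linarith)]
  constructor <;> intro h <;> nlinarith

theorem GMI_eq_min_fract (hf0 : 0 < f) (hf1 : f < 1) (r : ℝ) :
    GMI f r = min (Int.fract r / f) ((1 - Int.fract r) / (1 - f)) := by
  rw [GMI]
  split_ifs with h
  · exact (min_eq_left ((div_le_one_sub_div_one_sub_iff hf0 hf1).2 h)).symm
  · exact (min_eq_right (le_of_not_ge (mt (div_le_one_sub_div_one_sub_iff hf0 hf1).1 h))).symm

theorem GMI_eq_min_of_mem_Ico (hf0 : 0 < f) (hf1 : f < 1) {r : ℝ} (hr : r ∈ Ico 0 1) :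
    GMI f r = min (r / f) ((1 - r) / (1 - f)) := by
  rw [GMI_eq_min_fract hf0 hf1, Int.fract_eq_self.2 hr]

end GMI

section piPQ

variable {f : ℝ} (r k n : ℝ)

theorem phi₁_GMI_slopes (hf : f ≠ 1) :
    1 / (f - 1) * r + k * (1 - f * (1 / (f - 1))) / n = (k / n - r) / (1 - f) := by
  have : f - 1 ≠ 0 := sub_ne_zero.2 hf
  have : 1 - f ≠ 0 := sub_ne_zero.2 hf.symm
  field_simp
  ring

theorem phi₂_GMI_slopes (hf : f ≠ 0) :
    1 / f * r + k * (1 - f * (1 / f)) / n = r / f := by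
  rw [mul_one_div_cancel hf]
  ring

theorem psi₁_GMI_slopes (hf : f ≠ 1) :
    1 / (f - 1) * (r - 1) + k * (1 + (1 - f) * (1 / (f - 1))) / n = (1 - r) / (1 - f) := by
  have : f - 1 ≠ 0 := sub_ne_zero.2 hf
  have : 1 - f ≠ 0 := sub_ne_zero.2 hf.symm
  field_simp
  ring

theorem psi₂_GMI_slopes (hf : f ≠ 0) :
    1 / f * (r - 1) + k * (1 + (1 - f) * (1 / f)) / n = (r - 1 + k / n) / f := by
  field_simp
  ring

theorem piPQ_GMI_slopes (hf0 : 0 < f) (hf1 : f < 1) {p : ℕ} (q : ℕ) (hp : 1 ≤ p) :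
    piPQ f (1 / (f - 1)) (1 / f) p q r = min (r / f) ((1 - r) / (1 - f)) := by
  have hp0 : (0 : ℝ) < p := by exact_mod_cast hp
  rw [piPQ]
  simp only [phi₁_GMI_slopes _ _ _ hf1.ne, phi₂_GMI_slopes _ _ _ hf0.ne',
    psi₁_GMI_slopes _ _ _ hf1.ne, psi₂_GMI_slopes _ _ _ hf0.ne']
  refine IsGreatest.csSup_eq ⟨Or.inl ⟨p, ⟨hp, le_rfl⟩, ?_⟩, ?_⟩
  · dsimp only
    rw [div_self hp0.ne', min_comm]
  rintro x (⟨i, ⟨-, hi⟩, rfl⟩ | ⟨j, ⟨-, hj⟩, rfl⟩)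
  · have hip : (i : ℝ) / p ≤ 1 := div_le_one_of_le₀ (by exact_mod_cast hi) hp0.le
    refine le_min (min_le_right _ _) ((min_le_left _ _).trans ?_)
    exact div_le_div_of_nonneg_right (by linarith) (by linarith)
  · have hjq : (j : ℝ) / q ≤ 1 :=
      div_le_one_of_le₀ (by exact_mod_cast hj.trans (Nat.sub_le q 1)) q.cast_nonneg
    refine le_min ((min_le_right _ _).trans ?_) (min_le_left _ _)
    exact div_le_div_of_nonneg_right (by linarith) hf0.le

end piPQ

/-- `(1/(f-1), 1/f) ∈ D_f^{p,q}`, and for every `r ∈ [0,1)`,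
`π_{f, 1/(f-1), 1/f}^{p,q}(r) = GMI_f(r) = min(r/f, (1-r)/(1-f))`. -/
theorem stmt4 (f : ℝ) (hf : f ∈ Set.Ioo (0 : ℝ) 1) (p q : ℕ) (hp : 2 ≤ p) (hq : 2 ≤ q) :
    (1 / (f - 1), 1 / f) ∈ Dset f p q ∧
    ∀ r ∈ Set.Ico (0 : ℝ) 1,
      piPQ f (1 / (f - 1)) (1 / f) p q r = GMI f r ∧
      GMI f r = min (r / f) ((1 - r) / (1 - f)) := by
  obtain ⟨hf0, hf1⟩ := hf
  refine ⟨GMI_slopes_mem_Dset hf0 hf1 (by omega) (by omega), fun r hr => ?_⟩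
  have hGMI := GMI_eq_min_of_mem_Ico hf0 hf1 hr
  exact ⟨(piPQ_GMI_slopes r hf0 hf1 q (by omega)).trans hGMI.symm, hGMI⟩
end

section
/- Let f ∈ (0,1), let p, q ≥ 2 be integers, and let (s_1, s_2) ∈ D_f^{p,q} with s_1 ≠ 1/(f−1) and s_2 ≠ 1/f. Then { r ∈ [0,1] : π_{f,s_1,s_2}^{p,q}(r) = min( r/f, (1−r)/(1−f) ) } = { i f/p : i = 0,…,p } ∪ { 1 − j(1−f)/q : j = 0,…,q−1 } ∪ { i f/(p−1) : i = 1,…,p−2 } ∪ { 1 − j(1−f)/(q−1) : j = 1,…,q−2 }. In particular, this set of intersection points of π_{f,s_1,s_2}^{p,q} with the GMI function is independent of the choice of (s_1, s_2). -/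
noncomputable def gmi (f r : ℝ) : ℝ := min (r / f) ((1 - r) / (1 - f))

noncomputable def tA (f s₁ s₂ : ℝ) (p : ℕ) (r : ℝ) (i : ℕ) : ℝ :=
  min (s₁ * r + (i : ℝ) * (1 - f * s₁) / (p : ℝ))
    (s₂ * r + ((i : ℝ) - 1) * (1 - f * s₂) / ((p : ℝ) - 1))

noncomputable def tB (f s₁ s₂ : ℝ) (q : ℕ) (r : ℝ) (j : ℕ) : ℝ :=
  min (s₁ * (r - 1) + ((j : ℝ) - 1) * (1 + (1 - f) * s₁) / ((q : ℝ) - 1))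
    (s₂ * (r - 1) + (j : ℝ) * (1 + (1 - f) * s₂) / (q : ℝ))


section aux
variable {f s₁ s₂ : ℝ} {p q : ℕ}

lemma gmi_eq1 (hf0 : 0 < f) (hf1 : f < 1) {r : ℝ} (hr : r ≤ f) : gmi f r = r / f := by
  apply min_eq_left
  rw [div_le_div_iff₀ hf0 (by linarith)]; nlinarith

lemma gmi_eq2 (hf0 : 0 < f) (hf1 : f < 1) {r : ℝ} (hr : f ≤ r) : gmi f r = (1 - r) / (1 - f) := by
  apply min_eq_right
  rw [div_le_div_iff₀ (by linarith) hf0]; nlinarith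

lemma keyP1 (hfne : f ≠ 0) (hPne : (p:ℝ) ≠ 0) (i : ℕ) (r : ℝ) :
    s₁*r + (i:ℝ)*(1-f*s₁)/(p:ℝ) - r/f = (s₁-1/f)*(r - (i:ℝ)*f/(p:ℝ)) := by
  field_simp; ring

lemma keyP2 (hfne : f ≠ 0) (hP1ne : (p:ℝ)-1 ≠ 0) (i : ℕ) (r : ℝ) :
    s₂*r + ((i:ℝ)-1)*(1-f*s₂)/((p:ℝ)-1) - r/f = (s₂-1/f)*(r - ((i:ℝ)-1)*f/((p:ℝ)-1)) := by
  field_simp; ring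

lemma keyP1L2 (hfne : f ≠ 0) (h1fne : (1:ℝ)-f ≠ 0) (hPne : (p:ℝ) ≠ 0) (i : ℕ) (r : ℝ) :
    s₁*r + (i:ℝ)*(1-f*s₁)/(p:ℝ) - (1-r)/(1-f)
      = (s₁-1/f)*(f - (i:ℝ)*f/(p:ℝ)) + (s₁+1/(1-f))*(r-f) := by
  field_simp; ring

lemma keyQ1 (h1fne : (1:ℝ)-f ≠ 0) (hQ1ne : (q:ℝ)-1 ≠ 0) (j : ℕ) (r : ℝ) :
    s₁*(r-1) + ((j:ℝ)-1)*(1+(1-f)*s₁)/((q:ℝ)-1) - (1-r)/(1-f)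
      = (s₁+1/(1-f))*(r - (1 - ((j:ℝ)-1)*(1-f)/((q:ℝ)-1))) := by
  field_simp; ring

lemma keyQ2 (h1fne : (1:ℝ)-f ≠ 0) (hQne : (q:ℝ) ≠ 0) (j : ℕ) (r : ℝ) :
    s₂*(r-1) + (j:ℝ)*(1+(1-f)*s₂)/(q:ℝ) - (1-r)/(1-f)
      = (s₂+1/(1-f))*(r - (1 - (j:ℝ)*(1-f)/(q:ℝ))) := by
  field_simp; ring

lemma keyQ2L1 (hfne : f ≠ 0) (h1fne : (1:ℝ)-f ≠ 0) (hQne : (q:ℝ) ≠ 0) (j : ℕ) (r : ℝ) :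
    s₂*(r-1) + (j:ℝ)*(1+(1-f)*s₂)/(q:ℝ) - r/f
      = (s₂+1/(1-f))*(f - (1 - (j:ℝ)*(1-f)/(q:ℝ))) + (s₂-1/f)*(r-f) := by
  field_simp; ring

-- endpoint bounds
lemma lA_le_f (hf0 : 0 < f) (hP : (2:ℝ) ≤ (p:ℝ)) {i : ℕ} (hi1 : (1:ℝ) ≤ (i:ℝ)) (hip : (i:ℝ) ≤ (p:ℝ)) :
    ((i:ℝ)-1)*f/((p:ℝ)-1) ≤ f := by
  rw [div_le_iff₀ (by linarith)]; nlinarith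

lemma uA_le_f (hf0 : 0 < f) (hP : (2:ℝ) ≤ (p:ℝ)) {i : ℕ} (hip : (i:ℝ) ≤ (p:ℝ)) :
    (i:ℝ)*f/(p:ℝ) ≤ f := by
  rw [div_le_iff₀ (by linarith)]; nlinarith

lemma lA_le_uA (hf0 : 0 < f) (hP : (2:ℝ) ≤ (p:ℝ)) {i : ℕ} (hi1 : (1:ℝ) ≤ (i:ℝ)) (hip : (i:ℝ) ≤ (p:ℝ)) :
    ((i:ℝ)-1)*f/((p:ℝ)-1) ≤ (i:ℝ)*f/(p:ℝ) := by
  rw [div_le_div_iff₀ (by linarith) (by linarith)]; nlinarith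

lemma f_le_mB (hf1 : f < 1) (hQ : (2:ℝ) ≤ (q:ℝ)) {j : ℕ} (hjq : (j:ℝ) ≤ (q:ℝ)) :
    f ≤ 1 - (j:ℝ)*(1-f)/(q:ℝ) := by
  have h : (j:ℝ)*(1-f)/(q:ℝ) ≤ 1-f := by rw [div_le_iff₀ (by linarith)]; nlinarith
  linarith

lemma f_le_nB (hf1 : f < 1) (hQ : (2:ℝ) ≤ (q:ℝ)) {j : ℕ} (hj1 : (1:ℝ) ≤ (j:ℝ)) (hjq : (j:ℝ) ≤ (q:ℝ)) :
    f ≤ 1 - ((j:ℝ)-1)*(1-f)/((q:ℝ)-1) := by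
  have h : ((j:ℝ)-1)*(1-f)/((q:ℝ)-1) ≤ 1-f := by rw [div_le_iff₀ (by linarith)]; nlinarith
  linarith

lemma mB_le_nB (hf1 : f < 1) (hQ : (2:ℝ) ≤ (q:ℝ)) {j : ℕ} (hj1 : (1:ℝ) ≤ (j:ℝ)) (hjq : (j:ℝ) ≤ (q:ℝ)) :
    1 - (j:ℝ)*(1-f)/(q:ℝ) ≤ 1 - ((j:ℝ)-1)*(1-f)/((q:ℝ)-1) := by
  have h : ((j:ℝ)-1)*(1-f)/((q:ℝ)-1) ≤ (j:ℝ)*(1-f)/(q:ℝ) := by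
    rw [div_le_div_iff₀ (by linarith) (by linarith)]; nlinarith
  linarith


lemma tA_le (hf0 : 0 < f) (hf1 : f < 1) (hP : (2:ℝ) ≤ (p:ℝ))
    (hs1f : s₁ - 1/f < 0) (hs2f : 0 < s₂ - 1/f) (hs1g : s₁ + 1/(1-f) < 0)
    {i : ℕ} (hi1 : (1:ℝ) ≤ (i:ℝ)) (hip : (i:ℝ) ≤ (p:ℝ)) {r : ℝ}
    (h : r ≤ ((i:ℝ)-1)*f/((p:ℝ)-1) ∨ (i:ℝ)*f/(p:ℝ) ≤ r) :
    tA f s₁ s₂ p r i ≤ gmi f r := by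
  have hfne : f ≠ 0 := ne_of_gt hf0
  have hPne : (p:ℝ) ≠ 0 := by positivity
  have hP1ne : (p:ℝ) - 1 ≠ 0 := ne_of_gt (by linarith)
  unfold tA
  rcases h with h | h
  · have hrf : r ≤ f := le_trans h (lA_le_f hf0 hP hi1 hip)
    rw [gmi_eq1 hf0 hf1 hrf]
    refine le_trans (min_le_right _ _) ?_
    have key := keyP2 (s₂ := s₂) hfne hP1ne i r
    nlinarith [mul_nonneg hs2f.le (sub_nonneg.2 h)]
  · rcases le_or_gt r f with hrf | hrf
    · rw [gmi_eq1 hf0 hf1 hrf]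
      refine le_trans (min_le_left _ _) ?_
      have key := keyP1 (s₁ := s₁) hfne hPne i r
      nlinarith [mul_nonneg (neg_nonneg.2 hs1f.le) (sub_nonneg.2 h)]
    · rw [gmi_eq2 hf0 hf1 hrf.le]
      refine le_trans (min_le_left _ _) ?_
      have key := keyP1L2 (s₁ := s₁) hfne (by linarith) hPne i r
      have hu := uA_le_f hf0 hP hip
      nlinarith [mul_nonneg (neg_nonneg.2 hs1f.le) (sub_nonneg.2 hu),
                 mul_nonneg (neg_nonneg.2 hs1g.le) (by linarith : (0:ℝ) ≤ r - f)]

lemma tA_lt (hf0 : 0 < f) (hf1 : f < 1) (hP : (2:ℝ) ≤ (p:ℝ))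
    (hs1f : s₁ - 1/f < 0) (hs2f : 0 < s₂ - 1/f) (hs1g : s₁ + 1/(1-f) < 0)
    {i : ℕ} (hi1 : (1:ℝ) ≤ (i:ℝ)) (hip : (i:ℝ) ≤ (p:ℝ)) {r : ℝ}
    (h : r < ((i:ℝ)-1)*f/((p:ℝ)-1) ∨ (i:ℝ)*f/(p:ℝ) < r) :
    tA f s₁ s₂ p r i < gmi f r := by
  have hfne : f ≠ 0 := ne_of_gt hf0
  have hPne : (p:ℝ) ≠ 0 := by positivity
  have hP1ne : (p:ℝ) - 1 ≠ 0 := ne_of_gt (by linarith)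
  unfold tA
  rcases h with h | h
  · have hrf : r ≤ f := le_trans h.le (lA_le_f hf0 hP hi1 hip)
    rw [gmi_eq1 hf0 hf1 hrf]
    refine lt_of_le_of_lt (min_le_right _ _) ?_
    have key := keyP2 (s₂ := s₂) hfne hP1ne i r
    nlinarith [mul_pos hs2f (sub_pos.2 h)]
  · rcases le_or_gt r f with hrf | hrf
    · rw [gmi_eq1 hf0 hf1 hrf]
      refine lt_of_le_of_lt (min_le_left _ _) ?_
      have key := keyP1 (s₁ := s₁) hfne hPne i r
      nlinarith [mul_pos (neg_pos.2 hs1f) (sub_pos.2 h)]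
    · rw [gmi_eq2 hf0 hf1 hrf.le]
      refine lt_of_le_of_lt (min_le_left _ _) ?_
      have key := keyP1L2 (s₁ := s₁) hfne (by linarith) hPne i r
      have hu := uA_le_f hf0 hP hip
      nlinarith [mul_nonneg (neg_nonneg.2 hs1f.le) (sub_nonneg.2 hu),
                 mul_pos (neg_pos.2 hs1g) (by linarith : (0:ℝ) < r - f)]

lemma tA_gt (hf0 : 0 < f) (hf1 : f < 1) (hP : (2:ℝ) ≤ (p:ℝ))
    (hs1f : s₁ - 1/f < 0) (hs2f : 0 < s₂ - 1/f)
    {i : ℕ} (hi1 : (1:ℝ) ≤ (i:ℝ)) (hip : (i:ℝ) ≤ (p:ℝ)) {r : ℝ}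
    (hl : ((i:ℝ)-1)*f/((p:ℝ)-1) < r) (hu : r < (i:ℝ)*f/(p:ℝ)) :
    gmi f r < tA f s₁ s₂ p r i := by
  have hfne : f ≠ 0 := ne_of_gt hf0
  have hPne : (p:ℝ) ≠ 0 := by positivity
  have hP1ne : (p:ℝ) - 1 ≠ 0 := ne_of_gt (by linarith)
  have hrf : r ≤ f := le_trans hu.le (uA_le_f hf0 hP hip)
  unfold tA
  rw [gmi_eq1 hf0 hf1 hrf]
  apply lt_min
  · have key := keyP1 (s₁ := s₁) hfne hPne i r
    nlinarith [mul_pos (neg_pos.2 hs1f) (by linarith : (0:ℝ) < (i:ℝ)*f/(p:ℝ) - r)]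
  · have key := keyP2 (s₂ := s₂) hfne hP1ne i r
    nlinarith [mul_pos hs2f (sub_pos.2 hl)]

lemma tA_ge_l (hf0 : 0 < f) (hf1 : f < 1) (hP : (2:ℝ) ≤ (p:ℝ))
    (hs1f : s₁ - 1/f < 0) (hs2f : 0 < s₂ - 1/f)
    {i : ℕ} (hi1 : (1:ℝ) ≤ (i:ℝ)) (hip : (i:ℝ) ≤ (p:ℝ)) :
    gmi f (((i:ℝ)-1)*f/((p:ℝ)-1)) ≤ tA f s₁ s₂ p (((i:ℝ)-1)*f/((p:ℝ)-1)) i := by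
  have hfne : f ≠ 0 := ne_of_gt hf0
  have hPne : (p:ℝ) ≠ 0 := by positivity
  have hP1ne : (p:ℝ) - 1 ≠ 0 := ne_of_gt (by linarith)
  have hrf := lA_le_f hf0 hP hi1 hip
  unfold tA
  rw [gmi_eq1 hf0 hf1 hrf]
  apply le_min
  · have key := keyP1 (s₁ := s₁) hfne hPne i (((i:ℝ)-1)*f/((p:ℝ)-1))
    nlinarith [mul_nonneg (neg_nonneg.2 hs1f.le) (sub_nonneg.2 (lA_le_uA hf0 hP hi1 hip))]
  · have key := keyP2 (s₂ := s₂) hfne hP1ne i (((i:ℝ)-1)*f/((p:ℝ)-1))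
    nlinarith [key]

lemma tA_ge_u (hf0 : 0 < f) (hf1 : f < 1) (hP : (2:ℝ) ≤ (p:ℝ))
    (hs1f : s₁ - 1/f < 0) (hs2f : 0 < s₂ - 1/f)
    {i : ℕ} (hi1 : (1:ℝ) ≤ (i:ℝ)) (hip : (i:ℝ) ≤ (p:ℝ)) :
    gmi f ((i:ℝ)*f/(p:ℝ)) ≤ tA f s₁ s₂ p ((i:ℝ)*f/(p:ℝ)) i := by
  have hfne : f ≠ 0 := ne_of_gt hf0
  have hPne : (p:ℝ) ≠ 0 := by positivity
  have hP1ne : (p:ℝ) - 1 ≠ 0 := ne_of_gt (by linarith)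
  have hrf := uA_le_f hf0 hP hip
  unfold tA
  rw [gmi_eq1 hf0 hf1 hrf]
  apply le_min
  · have key := keyP1 (s₁ := s₁) hfne hPne i ((i:ℝ)*f/(p:ℝ))
    nlinarith [key]
  · have key := keyP2 (s₂ := s₂) hfne hP1ne i ((i:ℝ)*f/(p:ℝ))
    nlinarith [mul_nonneg hs2f.le (sub_nonneg.2 (lA_le_uA hf0 hP hi1 hip))]

lemma tB_le (hf0 : 0 < f) (hf1 : f < 1) (hQ : (2:ℝ) ≤ (q:ℝ))
    (hs1g : s₁ + 1/(1-f) < 0) (hs2g : 0 < s₂ + 1/(1-f)) (hs2f : 0 < s₂ - 1/f)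
    {j : ℕ} (hj1 : (1:ℝ) ≤ (j:ℝ)) (hjq : (j:ℝ) ≤ (q:ℝ)-1) {r : ℝ}
    (h : r ≤ 1 - (j:ℝ)*(1-f)/(q:ℝ) ∨ 1 - ((j:ℝ)-1)*(1-f)/((q:ℝ)-1) ≤ r) :
    tB f s₁ s₂ q r j ≤ gmi f r := by
  have hfne : f ≠ 0 := ne_of_gt hf0
  have h1fne : (1:ℝ) - f ≠ 0 := ne_of_gt (by linarith)
  have hQne : (q:ℝ) ≠ 0 := by positivity
  have hQ1ne : (q:ℝ) - 1 ≠ 0 := ne_of_gt (by linarith)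
  unfold tB
  rcases h with h | h
  · rcases le_or_gt f r with hrf | hrf
    · rw [gmi_eq2 hf0 hf1 hrf]
      refine le_trans (min_le_right _ _) ?_
      have key := keyQ2 (s₂ := s₂) h1fne hQne j r
      nlinarith [mul_nonneg hs2g.le (sub_nonneg.2 h)]
    · rw [gmi_eq1 hf0 hf1 hrf.le]
      refine le_trans (min_le_right _ _) ?_
      have key := keyQ2L1 (s₂ := s₂) hfne h1fne hQne j r
      have hm := f_le_mB hf1 hQ (by linarith : (j:ℝ) ≤ (q:ℝ))
      nlinarith [mul_nonneg hs2g.le (sub_nonneg.2 hm),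
                 mul_nonneg hs2f.le (by linarith : (0:ℝ) ≤ f - r)]
  · have hrf : f ≤ r := le_trans (f_le_nB hf1 hQ hj1 (by linarith : (j:ℝ) ≤ (q:ℝ))) h
    rw [gmi_eq2 hf0 hf1 hrf]
    refine le_trans (min_le_left _ _) ?_
    have key := keyQ1 (s₁ := s₁) h1fne hQ1ne j r
    nlinarith [mul_nonneg (neg_nonneg.2 hs1g.le) (sub_nonneg.2 h)]

lemma tB_lt (hf0 : 0 < f) (hf1 : f < 1) (hQ : (2:ℝ) ≤ (q:ℝ))
    (hs1g : s₁ + 1/(1-f) < 0) (hs2g : 0 < s₂ + 1/(1-f)) (hs2f : 0 < s₂ - 1/f)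
    {j : ℕ} (hj1 : (1:ℝ) ≤ (j:ℝ)) (hjq : (j:ℝ) ≤ (q:ℝ)-1) {r : ℝ}
    (h : r < 1 - (j:ℝ)*(1-f)/(q:ℝ) ∨ 1 - ((j:ℝ)-1)*(1-f)/((q:ℝ)-1) < r) :
    tB f s₁ s₂ q r j < gmi f r := by
  have hfne : f ≠ 0 := ne_of_gt hf0
  have h1fne : (1:ℝ) - f ≠ 0 := ne_of_gt (by linarith)
  have hQne : (q:ℝ) ≠ 0 := by positivity
  have hQ1ne : (q:ℝ) - 1 ≠ 0 := ne_of_gt (by linarith)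
  unfold tB
  rcases h with h | h
  · rcases le_or_gt f r with hrf | hrf
    · rw [gmi_eq2 hf0 hf1 hrf]
      refine lt_of_le_of_lt (min_le_right _ _) ?_
      have key := keyQ2 (s₂ := s₂) h1fne hQne j r
      nlinarith [mul_pos hs2g (sub_pos.2 h)]
    · rw [gmi_eq1 hf0 hf1 hrf.le]
      refine lt_of_le_of_lt (min_le_right _ _) ?_
      have key := keyQ2L1 (s₂ := s₂) hfne h1fne hQne j r
      have hm := f_le_mB hf1 hQ (by linarith : (j:ℝ) ≤ (q:ℝ))
      nlinarith [mul_nonneg hs2g.le (sub_nonneg.2 hm),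
                 mul_pos hs2f (by linarith : (0:ℝ) < f - r)]
  · have hrf : f ≤ r := le_trans (f_le_nB hf1 hQ hj1 (by linarith : (j:ℝ) ≤ (q:ℝ))) h.le
    rw [gmi_eq2 hf0 hf1 hrf]
    refine lt_of_le_of_lt (min_le_left _ _) ?_
    have key := keyQ1 (s₁ := s₁) h1fne hQ1ne j r
    nlinarith [mul_pos (neg_pos.2 hs1g) (sub_pos.2 h)]

lemma tB_gt (hf0 : 0 < f) (hf1 : f < 1) (hQ : (2:ℝ) ≤ (q:ℝ))
    (hs1g : s₁ + 1/(1-f) < 0) (hs2g : 0 < s₂ + 1/(1-f))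
    {j : ℕ} (hj1 : (1:ℝ) ≤ (j:ℝ)) (hjq : (j:ℝ) ≤ (q:ℝ)-1) {r : ℝ}
    (hm : 1 - (j:ℝ)*(1-f)/(q:ℝ) < r) (hn : r < 1 - ((j:ℝ)-1)*(1-f)/((q:ℝ)-1)) :
    gmi f r < tB f s₁ s₂ q r j := by
  have hfne : f ≠ 0 := ne_of_gt hf0
  have h1fne : (1:ℝ) - f ≠ 0 := ne_of_gt (by linarith)
  have hQne : (q:ℝ) ≠ 0 := by positivity
  have hQ1ne : (q:ℝ) - 1 ≠ 0 := ne_of_gt (by linarith)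
  have hrf : f ≤ r := le_trans (f_le_mB hf1 hQ (by linarith : (j:ℝ) ≤ (q:ℝ))) hm.le
  unfold tB
  rw [gmi_eq2 hf0 hf1 hrf]
  apply lt_min
  · have key := keyQ1 (s₁ := s₁) h1fne hQ1ne j r
    nlinarith [mul_pos (neg_pos.2 hs1g) (by linarith : (0:ℝ) < (1 - ((j:ℝ)-1)*(1-f)/((q:ℝ)-1)) - r)]
  · have key := keyQ2 (s₂ := s₂) h1fne hQne j r
    nlinarith [mul_pos hs2g (sub_pos.2 hm)]

lemma tB_ge_m (hf0 : 0 < f) (hf1 : f < 1) (hQ : (2:ℝ) ≤ (q:ℝ))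
    (hs1g : s₁ + 1/(1-f) < 0) (hs2g : 0 < s₂ + 1/(1-f))
    {j : ℕ} (hj1 : (1:ℝ) ≤ (j:ℝ)) (hjq : (j:ℝ) ≤ (q:ℝ)-1) :
    gmi f (1 - (j:ℝ)*(1-f)/(q:ℝ)) ≤ tB f s₁ s₂ q (1 - (j:ℝ)*(1-f)/(q:ℝ)) j := by
  have hfne : f ≠ 0 := ne_of_gt hf0
  have h1fne : (1:ℝ) - f ≠ 0 := ne_of_gt (by linarith)
  have hQne : (q:ℝ) ≠ 0 := by positivity
  have hQ1ne : (q:ℝ) - 1 ≠ 0 := ne_of_gt (by linarith)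
  have hrf := f_le_mB hf1 hQ (by linarith : (j:ℝ) ≤ (q:ℝ))
  unfold tB
  rw [gmi_eq2 hf0 hf1 hrf]
  apply le_min
  · have key := keyQ1 (s₁ := s₁) h1fne hQ1ne j (1 - (j:ℝ)*(1-f)/(q:ℝ))
    nlinarith [mul_nonneg (neg_nonneg.2 hs1g.le)
      (sub_nonneg.2 (mB_le_nB hf1 hQ hj1 (by linarith : (j:ℝ) ≤ (q:ℝ))))]
  · have key := keyQ2 (s₂ := s₂) h1fne hQne j (1 - (j:ℝ)*(1-f)/(q:ℝ))
    nlinarith [key]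

lemma tB_ge_n (hf0 : 0 < f) (hf1 : f < 1) (hQ : (2:ℝ) ≤ (q:ℝ))
    (hs1g : s₁ + 1/(1-f) < 0) (hs2g : 0 < s₂ + 1/(1-f))
    {j : ℕ} (hj1 : (1:ℝ) ≤ (j:ℝ)) (hjq : (j:ℝ) ≤ (q:ℝ)-1) :
    gmi f (1 - ((j:ℝ)-1)*(1-f)/((q:ℝ)-1)) ≤ tB f s₁ s₂ q (1 - ((j:ℝ)-1)*(1-f)/((q:ℝ)-1)) j := by
  have hfne : f ≠ 0 := ne_of_gt hf0
  have h1fne : (1:ℝ) - f ≠ 0 := ne_of_gt (by linarith)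
  have hQne : (q:ℝ) ≠ 0 := by positivity
  have hQ1ne : (q:ℝ) - 1 ≠ 0 := ne_of_gt (by linarith)
  have hrf := f_le_nB hf1 hQ hj1 (by linarith : (j:ℝ) ≤ (q:ℝ))
  unfold tB
  rw [gmi_eq2 hf0 hf1 hrf]
  apply le_min
  · have key := keyQ1 (s₁ := s₁) h1fne hQ1ne j (1 - ((j:ℝ)-1)*(1-f)/((q:ℝ)-1))
    nlinarith [key]
  · have key := keyQ2 (s₂ := s₂) h1fne hQne j (1 - ((j:ℝ)-1)*(1-f)/((q:ℝ)-1))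
    nlinarith [mul_nonneg hs2g.le
      (sub_nonneg.2 (mB_le_nB hf1 hQ hj1 (by linarith : (j:ℝ) ≤ (q:ℝ))))]


lemma cmp_same {c P a b : ℝ} (hc : 0 ≤ c) (hP : 0 < P) (hab : a ≤ b) : a*c/P ≤ b*c/P := by
  rw [div_le_div_iff₀ hP hP]
  nlinarith [mul_nonneg (mul_nonneg hc hP.le) (sub_nonneg.2 hab)]

lemma cmp_main {c P a b : ℝ} (hc : 0 ≤ c) (hP : 2 ≤ P) (hb : 0 ≤ b) (hab : a ≤ b) :
    a*c/P ≤ b*c/(P-1) := by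
  rw [div_le_div_iff₀ (by linarith) (by linarith)]
  nlinarith [mul_nonneg (mul_nonneg hc (by linarith : (0:ℝ) ≤ P - 1)) (by linarith : (0:ℝ) ≤ b - a),
             mul_nonneg hc hb]

end aux

set_option maxHeartbeats 4000000 in
/-- For `(s₁, s₂) ∈ D_f^{p,q}` with `s₁ ≠ 1/(f-1)` and `s₂ ≠ 1/f`, the
set of points of `[0,1]` where `π_{f,s₁,s₂}^{p,q}` meets the GMI function
`min(r/f, (1-r)/(1-f))` is the fixed finite set below, independent of `(s₁, s₂)`. -/
theorem stmt5 (f : ℝ) (hf : f ∈ Set.Ioo (0 : ℝ) 1) (p q : ℕ) (hp : 2 ≤ p) (hq : 2 ≤ q)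
    (s₁ s₂ : ℝ) (hs : (s₁, s₂) ∈ Dset f p q)
    (hs₁ : s₁ ≠ 1 / (f - 1)) (hs₂ : s₂ ≠ 1 / f) :
    {r ∈ Set.Icc (0 : ℝ) 1 | piPQ f s₁ s₂ p q r = min (r / f) ((1 - r) / (1 - f))} =
      ((fun i : ℕ => (i : ℝ) * f / (p : ℝ)) '' Set.Icc 0 p) ∪
      ((fun j : ℕ => 1 - (j : ℝ) * (1 - f) / (q : ℝ)) '' Set.Icc 0 (q - 1)) ∪
      ((fun i : ℕ => (i : ℝ) * f / ((p : ℝ) - 1)) '' Set.Icc 1 (p - 2)) ∪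
      ((fun j : ℕ => 1 - (j : ℝ) * (1 - f) / ((q : ℝ) - 1)) '' Set.Icc 1 (q - 2)) := by
  obtain ⟨hf0, hf1⟩ := hf
  rw [Dset, Set.mem_prod] at hs
  have hfne : f ≠ 0 := ne_of_gt hf0
  have h1f : (0:ℝ) < 1 - f := by linarith
  have h1fne : (1:ℝ) - f ≠ 0 := ne_of_gt h1f
  have hP : (2:ℝ) ≤ (p:ℝ) := by exact_mod_cast hp
  have hQ : (2:ℝ) ≤ (q:ℝ) := by exact_mod_cast hq
  have hPne : (p:ℝ) ≠ 0 := by linarith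
  have hP1 : (0:ℝ) < (p:ℝ) - 1 := by linarith
  have hQne : (q:ℝ) ≠ 0 := by linarith
  have hQ1 : (0:ℝ) < (q:ℝ) - 1 := by linarith
  have hs1le : s₁ ≤ 1 / (f - 1) := by
    have h := hs.1; split_ifs at h with h'
    · exact h.2
    · exact h
  have hs2ge : 1 / f ≤ s₂ := by
    have h := hs.2; split_ifs at h with h'
    · exact h.1
    · exact h
  have hs1 : s₁ < 1 / (f - 1) := lt_of_le_of_ne hs1le hs₁
  have hs2 : 1 / f < s₂ := lt_of_le_of_ne hs2ge (Ne.symm hs₂)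
  have hinvf : (0:ℝ) < 1/f := by positivity
  have hinv1f : (0:ℝ) < 1/(1-f) := by positivity
  have hfm1 : 1/(f-1) = -(1/(1-f)) := by
    rw [show f-1 = -(1-f) by ring, one_div, one_div, inv_neg]
  have hs1f : s₁ - 1/f < 0 := by rw [hfm1] at hs1; linarith
  have hs2f : (0:ℝ) < s₂ - 1/f := by linarith
  have hs1g : s₁ + 1/(1-f) < 0 := by rw [hfm1] at hs1; linarith
  have hs2g : (0:ℝ) < s₂ + 1/(1-f) := by linarith
  -- the tent value set
  set S : ℝ → Set ℝ := fun r => (tA f s₁ s₂ p r '' Set.Icc 1 p) ∪ (tB f s₁ s₂ q r '' Set.Icc 1 (q-1))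
    with hSdef
  have hpi : ∀ r, piPQ f s₁ s₂ p q r = sSup (S r) := by
    intro r; rw [hSdef]; rfl
  have hSfin : ∀ r, (S r).Finite := by
    intro r; rw [hSdef]
    exact ((Set.finite_Icc 1 p).image _).union ((Set.finite_Icc 1 (q-1)).image _)
  have hSne : ∀ r, (S r).Nonempty := by
    intro r; rw [hSdef]
    exact ⟨tA f s₁ s₂ p r 1, Or.inl ⟨1, by simp [Set.mem_Icc]; omega, rfl⟩⟩
  have hchar : ∀ r, piPQ f s₁ s₂ p q r = gmi f r ↔ ((∀ x ∈ S r, x ≤ gmi f r) ∧ gmi f r ∈ S r) := by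
    intro r
    rw [hpi r]
    constructor
    · intro h
      have hmem : sSup (S r) ∈ S r := (hSne r).csSup_mem (hSfin r)
      refine ⟨fun x hx => ?_, h ▸ hmem⟩
      exact h ▸ le_csSup (hSfin r).bddAbove hx
    · rintro ⟨hub, hmem⟩
      exact le_antisymm (csSup_le (hSne r) hub) (le_csSup (hSfin r).bddAbove hmem)
  -- the claimed set
  set E : Set ℝ :=
      ((fun i : ℕ => (i : ℝ) * f / (p : ℝ)) '' Set.Icc 0 p) ∪
      ((fun j : ℕ => 1 - (j : ℝ) * (1 - f) / (q : ℝ)) '' Set.Icc 0 (q - 1)) ∪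
      ((fun i : ℕ => (i : ℝ) * f / ((p : ℝ) - 1)) '' Set.Icc 1 (p - 2)) ∪
      ((fun j : ℕ => 1 - (j : ℝ) * (1 - f) / ((q : ℝ) - 1)) '' Set.Icc 1 (q - 2)) with hEdef
  have memE1 : ∀ i : ℕ, i ≤ p → ((i:ℝ)*f/(p:ℝ)) ∈ E := by
    intro i hi
    rw [hEdef]
    exact Or.inl (Or.inl (Or.inl ⟨i, Set.mem_Icc.2 ⟨Nat.zero_le i, hi⟩, rfl⟩))
  have memE2 : ∀ j : ℕ, j ≤ q-1 → (1 - (j:ℝ)*(1-f)/(q:ℝ)) ∈ E := by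
    intro j hj
    rw [hEdef]
    exact Or.inl (Or.inl (Or.inr ⟨j, Set.mem_Icc.2 ⟨Nat.zero_le j, hj⟩, rfl⟩))
  have memE3 : ∀ i : ℕ, 1 ≤ i → i ≤ p-2 → ((i:ℝ)*f/((p:ℝ)-1)) ∈ E := by
    intro i h1 h2
    rw [hEdef]
    exact Or.inl (Or.inr ⟨i, Set.mem_Icc.2 ⟨h1, h2⟩, rfl⟩)
  have memE4 : ∀ j : ℕ, 1 ≤ j → j ≤ q-2 → (1 - (j:ℝ)*(1-f)/((q:ℝ)-1)) ∈ E := by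
    intro j h1 h2
    rw [hEdef]
    exact Or.inr ⟨j, Set.mem_Icc.2 ⟨h1, h2⟩, rfl⟩
  have memEl : ∀ i : ℕ, 1 ≤ i → i ≤ p → (((i:ℝ)-1)*f/((p:ℝ)-1)) ∈ E := by
    intro i h1 h2
    by_cases e1 : i = 1
    · subst e1
      have h : (((1:ℕ):ℝ)-1)*f/((p:ℝ)-1) = ((0:ℕ):ℝ)*f/(p:ℝ) := by norm_num
      rw [h]; exact memE1 0 (Nat.zero_le p)
    by_cases e2 : i = p
    · have e2' : (i:ℝ) = (p:ℝ) := by exact_mod_cast e2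
      have h : ((i:ℝ)-1)*f/((p:ℝ)-1) = ((p:ℕ):ℝ)*f/(p:ℝ) := by
        rw [e2', div_eq_div_iff (ne_of_gt (by linarith : (0:ℝ) < (p:ℝ)-1)) (ne_of_gt (by linarith : (0:ℝ) < (p:ℝ)))]
        ring
      rw [h]; exact memE1 p le_rfl
    · have hcast : ((i-1:ℕ):ℝ) = (i:ℝ)-1 := by
        rw [Nat.cast_sub h1]; norm_num
      rw [show ((i:ℝ)-1)*f/((p:ℝ)-1) = ((i-1:ℕ):ℝ)*f/((p:ℝ)-1) by rw [hcast]]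
      exact memE3 (i-1) (by omega) (by omega)
  have memEn : ∀ j : ℕ, 1 ≤ j → j ≤ q-1 → (1 - ((j:ℝ)-1)*(1-f)/((q:ℝ)-1)) ∈ E := by
    intro j h1 h2
    by_cases e1 : j = 1
    · subst e1
      have h : 1 - (((1:ℕ):ℝ)-1)*(1-f)/((q:ℝ)-1) = 1 - ((0:ℕ):ℝ)*(1-f)/(q:ℝ) := by norm_num
      rw [h]; exact memE2 0 (Nat.zero_le _)
    · have hcast : ((j-1:ℕ):ℝ) = (j:ℝ)-1 := by
        rw [Nat.cast_sub h1]; norm_num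
      rw [show 1-((j:ℝ)-1)*(1-f)/((q:ℝ)-1) = 1-((j-1:ℕ):ℝ)*(1-f)/((q:ℝ)-1) by rw [hcast]]
      exact memE4 (j-1) (by omega) (by omega)
  -- upper bound at points of E
  have hub : ∀ r ∈ E, ∀ x ∈ S r, x ≤ gmi f r := by
    intro r hrE x hx
    rw [hSdef] at hx
    rw [hEdef] at hrE
    simp only [Set.mem_union] at hx hrE
    rcases hx with ⟨k, hk, rfl⟩ | ⟨k, hk, rfl⟩
    · rw [Set.mem_Icc] at hk
      have hk1 : (1:ℝ) ≤ (k:ℝ) := by exact_mod_cast hk.1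
      have hkp : (k:ℝ) ≤ (p:ℝ) := by exact_mod_cast hk.2
      apply tA_le hf0 hf1 hP hs1f hs2f hs1g hk1 hkp
      rcases hrE with ((⟨i, hi, rfl⟩ | ⟨j, hj, rfl⟩) | ⟨i, hi, rfl⟩) | ⟨j, hj, rfl⟩
      · rw [Set.mem_Icc] at hi
        by_cases hik : k ≤ i
        · exact Or.inr (cmp_same hf0.le (by linarith : (0:ℝ) < (p:ℝ)) (by exact_mod_cast hik))
        · refine Or.inl (cmp_main hf0.le hP (by linarith) ?_)
          have h1 : i + 1 ≤ k := by omega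
          have h' := (Nat.cast_le (α := ℝ)).2 h1
          push_cast at h'; linarith
      · rw [Set.mem_Icc] at hj
        refine Or.inr (le_trans (uA_le_f hf0 hP hkp) (f_le_mB hf1 hQ ?_))
        have h1 : j ≤ q := by omega
        exact_mod_cast h1
      · rw [Set.mem_Icc] at hi
        by_cases hik : k ≤ i
        · exact Or.inr (cmp_main hf0.le hP (by positivity) (by exact_mod_cast hik))
        · refine Or.inl (cmp_same hf0.le hP1 ?_)
          have h1 : i + 1 ≤ k := by omega
          have h' := (Nat.cast_le (α := ℝ)).2 h1
          push_cast at h'; linarith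
      · rw [Set.mem_Icc] at hj
        refine Or.inr ?_
        have hfr : f ≤ 1 - (j:ℝ)*(1-f)/((q:ℝ)-1) := by
          have h2 : j + 1 ≤ q := by omega
          have h' := (Nat.cast_le (α := ℝ)).2 h2
          push_cast at h'
          have h3 : (j:ℝ)*(1-f)/((q:ℝ)-1) ≤ 1-f := by
            rw [div_le_iff₀ hQ1]
            nlinarith [mul_nonneg h1f.le (by linarith : (0:ℝ) ≤ (q:ℝ)-1-(j:ℝ))]
          linarith
        exact le_trans (uA_le_f hf0 hP hkp) hfr
    · rw [Set.mem_Icc] at hk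
      have hk1 : (1:ℝ) ≤ (k:ℝ) := by exact_mod_cast hk.1
      have hkq : (k:ℝ) ≤ (q:ℝ)-1 := by
        have h1 : k + 1 ≤ q := by omega
        have h' := (Nat.cast_le (α := ℝ)).2 h1; push_cast at h'; linarith
      apply tB_le hf0 hf1 hQ hs1g hs2g hs2f hk1 hkq
      rcases hrE with ((⟨i, hi, rfl⟩ | ⟨j, hj, rfl⟩) | ⟨i, hi, rfl⟩) | ⟨j, hj, rfl⟩
      · rw [Set.mem_Icc] at hi
        exact Or.inl (le_trans (uA_le_f hf0 hP (by exact_mod_cast hi.2)) (f_le_mB hf1 hQ (by linarith)))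
      · rw [Set.mem_Icc] at hj
        by_cases hjk : k ≤ j
        · refine Or.inl ?_
          have h1 := cmp_same (c := 1-f) h1f.le (by linarith : (0:ℝ) < (q:ℝ)) ((Nat.cast_le (α := ℝ)).2 hjk)
          linarith
        · refine Or.inr ?_
          have hjk' : (j:ℝ) ≤ (k:ℝ)-1 := by
            have h1 : j + 1 ≤ k := by omega
            have h' := (Nat.cast_le (α := ℝ)).2 h1; push_cast at h'; linarith
          have h2 := cmp_main (c := 1-f) h1f.le hQ (by linarith : (0:ℝ) ≤ (k:ℝ)-1) hjk'
          linarith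
      · rw [Set.mem_Icc] at hi
        refine Or.inl ?_
        have hif : (i:ℝ)*f/((p:ℝ)-1) ≤ f := by
          rw [div_le_iff₀ hP1]
          have h1 : i + 1 ≤ p := by omega
          have h' := (Nat.cast_le (α := ℝ)).2 h1; push_cast at h'
          nlinarith [mul_nonneg hf0.le (by linarith : (0:ℝ) ≤ (p:ℝ)-1-(i:ℝ))]
        exact le_trans hif (f_le_mB hf1 hQ (by linarith))
      · rw [Set.mem_Icc] at hj
        by_cases hjk : k ≤ j
        · refine Or.inl ?_
          have h1 := cmp_main (c := 1-f) h1f.le hQ (by positivity : (0:ℝ) ≤ (j:ℝ)) ((Nat.cast_le (α := ℝ)).2 hjk)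
          linarith
        · refine Or.inr ?_
          have hjk' : (j:ℝ) ≤ (k:ℝ)-1 := by
            have h1 : j + 1 ≤ k := by omega
            have h' := (Nat.cast_le (α := ℝ)).2 h1; push_cast at h'; linarith
          have h2 := cmp_same (c := 1-f) h1f.le hQ1 hjk'
          linarith
  -- witness at points of E
  have hwit : ∀ r ∈ E, gmi f r ∈ S r := by
    intro r hrE
    have hubr := hub r hrE
    rw [hEdef] at hrE
    simp only [Set.mem_union] at hrE
    rw [hSdef]
    rcases hrE with ((⟨i, hi, rfl⟩ | ⟨j, hj, rfl⟩) | ⟨i, hi, rfl⟩) | ⟨j, hj, rfl⟩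
    · rw [Set.mem_Icc] at hi
      by_cases hi0 : i = 0
      · subst hi0
        have hr : ((0:ℕ):ℝ)*f/(p:ℝ) = (((1:ℕ):ℝ)-1)*f/((p:ℝ)-1) := by norm_num
        have hge := tA_ge_l (s₁ := s₁) (s₂ := s₂) hf0 hf1 hP hs1f hs2f (i := 1)
          (by norm_num) (by norm_num; linarith)
        rw [← hr] at hge
        have hmm : 1 ∈ Set.Icc 1 p := Set.mem_Icc.2 ⟨le_rfl, by omega⟩
        refine Or.inl ⟨1, hmm, le_antisymm (hubr _ ?_) hge⟩
        rw [hSdef]; exact Or.inl ⟨1, hmm, rfl⟩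
      · have hi1 : (1:ℝ) ≤ (i:ℝ) := by
          have h1 : 1 ≤ i := by omega
          exact_mod_cast h1
        have hip : (i:ℝ) ≤ (p:ℝ) := by exact_mod_cast hi.2
        have hge := tA_ge_u (s₁ := s₁) (s₂ := s₂) hf0 hf1 hP hs1f hs2f hi1 hip
        have hmm : i ∈ Set.Icc 1 p := Set.mem_Icc.2 ⟨by omega, hi.2⟩
        refine Or.inl ⟨i, hmm, le_antisymm (hubr _ ?_) hge⟩
        rw [hSdef]; exact Or.inl ⟨i, hmm, rfl⟩
    · rw [Set.mem_Icc] at hj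
      by_cases hj0 : j = 0
      · subst hj0
        have hr : 1 - ((0:ℕ):ℝ)*(1-f)/(q:ℝ) = 1 - (((1:ℕ):ℝ)-1)*(1-f)/((q:ℝ)-1) := by norm_num
        have hge := tB_ge_n (s₁ := s₁) (s₂ := s₂) hf0 hf1 hQ hs1g hs2g (j := 1)
          (by norm_num) (by norm_num; linarith)
        rw [← hr] at hge
        have hmm : 1 ∈ Set.Icc 1 (q-1) := Set.mem_Icc.2 ⟨le_rfl, by omega⟩
        refine Or.inr ⟨1, hmm, le_antisymm (hubr _ ?_) hge⟩
        rw [hSdef]; exact Or.inr ⟨1, hmm, rfl⟩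
      · have hj1 : (1:ℝ) ≤ (j:ℝ) := by
          have h1 : 1 ≤ j := by omega
          exact_mod_cast h1
        have hjq : (j:ℝ) ≤ (q:ℝ)-1 := by
          have h1 : j + 1 ≤ q := by omega
          have h' := (Nat.cast_le (α := ℝ)).2 h1; push_cast at h'; linarith
        have hge := tB_ge_m (s₁ := s₁) (s₂ := s₂) hf0 hf1 hQ hs1g hs2g hj1 hjq
        have hmm : j ∈ Set.Icc 1 (q-1) := Set.mem_Icc.2 ⟨by omega, hj.2⟩
        refine Or.inr ⟨j, hmm, le_antisymm (hubr _ ?_) hge⟩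
        rw [hSdef]; exact Or.inr ⟨j, hmm, rfl⟩
    · rw [Set.mem_Icc] at hi
      have hc : ((i+1:ℕ):ℝ)-1 = (i:ℝ) := by push_cast; ring
      have hi1 : (1:ℝ) ≤ ((i+1:ℕ):ℝ) := by exact_mod_cast Nat.le_add_left 1 i
      have hip : ((i+1:ℕ):ℝ) ≤ (p:ℝ) := by
        have h1 : i + 1 ≤ p := by omega
        exact_mod_cast h1
      have hge := tA_ge_l (s₁ := s₁) (s₂ := s₂) hf0 hf1 hP hs1f hs2f (i := i+1) hi1 hip
      rw [hc] at hge
      have hmm : i+1 ∈ Set.Icc 1 p := Set.mem_Icc.2 ⟨by omega, by omega⟩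
      refine Or.inl ⟨i+1, hmm, le_antisymm (hubr _ ?_) hge⟩
      rw [hSdef]; exact Or.inl ⟨i+1, hmm, rfl⟩
    · rw [Set.mem_Icc] at hj
      have hc : ((j+1:ℕ):ℝ)-1 = (j:ℝ) := by push_cast; ring
      have hj1 : (1:ℝ) ≤ ((j+1:ℕ):ℝ) := by exact_mod_cast Nat.le_add_left 1 j
      have hjq : ((j+1:ℕ):ℝ) ≤ (q:ℝ)-1 := by
        have h1 : j + 2 ≤ q := by omega
        have h' := (Nat.cast_le (α := ℝ)).2 h1; push_cast at h' ⊢; linarith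
      have hge := tB_ge_n (s₁ := s₁) (s₂ := s₂) hf0 hf1 hQ hs1g hs2g (j := j+1) hj1 hjq
      rw [hc] at hge
      have hmm : j+1 ∈ Set.Icc 1 (q-1) := Set.mem_Icc.2 ⟨by omega, by omega⟩
      refine Or.inr ⟨j+1, hmm, le_antisymm (hubr _ ?_) hge⟩
      rw [hSdef]; exact Or.inr ⟨j+1, hmm, rfl⟩
  -- E ⊆ [0,1]
  have hE01 : ∀ r ∈ E, 0 ≤ r ∧ r ≤ 1 := by
    intro r hrE
    rw [hEdef] at hrE
    simp only [Set.mem_union] at hrE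
    rcases hrE with ((⟨i, hi, rfl⟩ | ⟨j, hj, rfl⟩) | ⟨i, hi, rfl⟩) | ⟨j, hj, rfl⟩
    · rw [Set.mem_Icc] at hi
      refine ⟨by positivity, ?_⟩
      have := uA_le_f (i := i) hf0 hP (by exact_mod_cast hi.2)
      linarith
    · rw [Set.mem_Icc] at hj
      have h1 : f ≤ 1 - (j:ℝ)*(1-f)/(q:ℝ) := f_le_mB hf1 hQ (by exact_mod_cast (by omega : j ≤ q))
      have h2 : (0:ℝ) ≤ (j:ℝ)*(1-f)/(q:ℝ) := by positivity
      constructor <;> linarith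
    · rw [Set.mem_Icc] at hi
      refine ⟨by positivity, ?_⟩
      have h1 : i + 1 ≤ p := by omega
      have h' := (Nat.cast_le (α := ℝ)).2 h1; push_cast at h'
      have h2 : (i:ℝ)*f/((p:ℝ)-1) ≤ f := by
        rw [div_le_iff₀ hP1]
        nlinarith [mul_nonneg hf0.le (by linarith : (0:ℝ) ≤ (p:ℝ)-1-(i:ℝ))]
      linarith
    · rw [Set.mem_Icc] at hj
      have h1 : j + 1 ≤ q := by omega
      have h' := (Nat.cast_le (α := ℝ)).2 h1; push_cast at h'
      have h2 : (j:ℝ)*(1-f)/((q:ℝ)-1) ≤ 1-f := by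
        rw [div_le_iff₀ hQ1]
        nlinarith [mul_nonneg h1f.le (by linarith : (0:ℝ) ≤ (q:ℝ)-1-(j:ℝ))]
      have h3 : (0:ℝ) ≤ (j:ℝ)*(1-f)/((q:ℝ)-1) := by positivity
      constructor <;> linarith
  -- main set equality
  ext r
  simp only [Set.mem_setOf_eq, Set.mem_Icc]
  constructor
  · rintro ⟨⟨hr0, hr1⟩, heq⟩
    have heq' : piPQ f s₁ s₂ p q r = gmi f r := heq
    obtain ⟨hub', hmem⟩ := (hchar r).mp heq'
    rw [hSdef] at hmem
    rcases hmem with ⟨i, hi, hieq⟩ | ⟨j, hj, hjeq⟩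
    · rw [Set.mem_Icc] at hi
      have hi1 : (1:ℝ) ≤ (i:ℝ) := by exact_mod_cast hi.1
      have hip : (i:ℝ) ≤ (p:ℝ) := by exact_mod_cast hi.2
      rcases lt_trichotomy r (((i:ℝ)-1)*f/((p:ℝ)-1)) with h | h | h
      · exact absurd hieq (ne_of_lt (tA_lt hf0 hf1 hP hs1f hs2f hs1g hi1 hip (Or.inl h)))
      · rw [h]; exact memEl i hi.1 hi.2
      · rcases lt_trichotomy r ((i:ℝ)*f/(p:ℝ)) with h' | h' | h'
        · exact absurd hieq (ne_of_gt (tA_gt hf0 hf1 hP hs1f hs2f hi1 hip h h'))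
        · rw [h']; exact memE1 i hi.2
        · exact absurd hieq (ne_of_lt (tA_lt hf0 hf1 hP hs1f hs2f hs1g hi1 hip (Or.inr h')))
    · rw [Set.mem_Icc] at hj
      have hj1 : (1:ℝ) ≤ (j:ℝ) := by exact_mod_cast hj.1
      have hjq : (j:ℝ) ≤ (q:ℝ)-1 := by
        have : j + 1 ≤ q := by omega
        have := (Nat.cast_le (α := ℝ)).2 this
        push_cast at this; linarith
      rcases lt_trichotomy r (1 - (j:ℝ)*(1-f)/(q:ℝ)) with h | h | h
      · exact absurd hjeq (ne_of_lt (tB_lt hf0 hf1 hQ hs1g hs2g hs2f hj1 hjq (Or.inl h)))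
      · rw [h]; exact memE2 j hj.2
      · rcases lt_trichotomy r (1 - ((j:ℝ)-1)*(1-f)/((q:ℝ)-1)) with h' | h' | h'
        · exact absurd hjeq (ne_of_gt (tB_gt hf0 hf1 hQ hs1g hs2g hj1 hjq h h'))
        · rw [h']; exact memEn j hj.1 hj.2
        · exact absurd hjeq (ne_of_lt (tB_lt hf0 hf1 hQ hs1g hs2g hs2f hj1 hjq (Or.inr h')))
  · intro hrE
    exact ⟨hE01 r hrE, (hchar r).mpr ⟨hub r hrE, hwit r hrE⟩⟩
end

section
/- Let f ∈ (0,1), let p, q ≥ 2 be integers, and let r_1, …, r_n ∈ [0,1). Then there exist n affine functions g_1, …, g_n : ℝ² → ℝ with the following property: for every sign vector σ ∈ {0,1}^n there exist affine functions a_1, …, a_n : ℝ² → ℝ such that for every (s_1, s_2) ∈ D_f^{p,q} with sgn(g_i(s_1, s_2)) = σ_i for all i = 1,…,n, one has π_{f,s_1,s_2}^{p,q}(r_j) = a_j(s_1, s_2) for all j = 1,…,n. That is, the parameter space D_f^{p,q} is decomposed by at most n hyperplanes into regions within each of which every coordinate of the cut coefficient vector (π_{f,s_1,s_2}^{p,q}(r_1),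 …, π_{f,s_1,s_2}^{p,q}(r_n)) is a fixed affine linear function of (s_1, s_2). -/
/-- A function `ℝ² → ℝ` is affine if it is of the form `c₁ x₁ + c₂ x₂ + c₀`. -/
def IsAffine2 (g : ℝ × ℝ → ℝ) : Prop := ∃ c₁ c₂ c₀ : ℝ, ∀ x, g x = c₁ * x.1 + c₂ * x.2 + c₀

/-- The sign function `sgn : ℝ → {0,1}`: `sgn x = 1` if `x ≥ 0`, else `0`. -/
noncomputable def sgn01 (x : ℝ) : ℕ := if 0 ≤ x then 1 else 0


section Core
variable {f s₁ s₂ r : ℝ} {p q : ℕ}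
variable (hf0 : 0 < f) (hf1 : f < 1) (hp : 2 ≤ p) (hq : 2 ≤ q)
variable (hs1 : (1 - f) * s₁ ≤ -1) (hs2 : 1 ≤ f * s₂)

include hf0 hf1 hs1 in
lemma s1_neg : s₁ < 0 := by nlinarith
include hf0 hf1 hs2 in
lemma s2_pos : 0 < s₂ := by nlinarith

include hf0 hf1 hp hs1 hs2 in
lemma Ephi (I : ℝ) (hi1 : 1 ≤ I) (hr : r * p ≤ I * f) :
    s₂ * r + I * (1 - f * s₂) / ((p:ℝ) - 1) ≤ s₁ * r + I * (1 - f * s₁) / p := by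
  have hp2 : (2:ℝ) ≤ p := by exact_mod_cast hp
  have hs1n := s1_neg hf0 hf1 hs1
  have hs2p := s2_pos hf0 hf1 hs2
  have h1 : (0:ℝ) < (p:ℝ) - 1 := by linarith
  have h0 : (0:ℝ) < (p:ℝ) := by linarith
  rw [← sub_nonneg]
  have key : s₁ * r + I * (1 - f * s₁) / p - (s₂ * r + I * (1 - f * s₂) / ((p:ℝ) - 1))
      = ((s₂ - s₁) * (I * f - r * p) * ((p:ℝ) - 1) + I * (f * s₂ - 1)) / ((p:ℝ) * ((p:ℝ)-1)) := by
    field_simp; ring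
  rw [key]
  apply div_nonneg _ (by positivity)
  have c1 : 0 ≤ (s₂ - s₁) * (I * f - r * p) * ((p:ℝ) - 1) :=
    mul_nonneg (mul_nonneg (by linarith) (by linarith)) (by linarith)
  nlinarith

include hf0 hf1 hp hs1 hs2 in
lemma Cphi (I : ℝ) (hi1 : 1 ≤ I) (hr : I * f ≤ r * ((p:ℝ) - 1)) :
    s₁ * r + I * (1 - f * s₁) / p ≤ s₂ * r + I * (1 - f * s₂) / ((p:ℝ) - 1) := by
  have hp2 : (2:ℝ) ≤ p := by exact_mod_cast hp
  have hs1n := s1_neg hf0 hf1 hs1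
  have hs2p := s2_pos hf0 hf1 hs2
  have h1 : (0:ℝ) < (p:ℝ) - 1 := by linarith
  have h0 : (0:ℝ) < (p:ℝ) := by linarith
  rw [← sub_nonneg]
  have key : s₂ * r + I * (1 - f * s₂) / ((p:ℝ) - 1) - (s₁ * r + I * (1 - f * s₁) / p)
      = ((s₂ - s₁) * (r * ((p:ℝ)-1) - I * f) * p + I * (1 - f * s₁)) / ((p:ℝ) * ((p:ℝ)-1)) := by
    field_simp; ring
  rw [key]
  apply div_nonneg _ (by positivity)
  have c1 : 0 ≤ (s₂ - s₁) * (r * ((p:ℝ)-1) - I * f) * p :=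
    mul_nonneg (mul_nonneg (by linarith) (by linarith)) (by linarith)
  have c2 : 0 ≤ I * (1 - f * s₁) :=
    mul_nonneg (by linarith) (by nlinarith [mul_pos hf0 (neg_pos.2 hs1n)])
  linarith

include hf0 hf1 hp hs1 hs2 in
lemma Pphi (I : ℝ) (hi1 : 1 ≤ I) (hiP : I ≤ p) (hr : I * f ≤ r * p) :
    s₁ * r + I * (1 - f * s₁) / p ≤ s₂ * r + (I - 1) * (1 - f * s₂) / ((p:ℝ) - 1) := by
  have hp2 : (2:ℝ) ≤ p := by exact_mod_cast hp
  have hs1n := s1_neg hf0 hf1 hs1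
  have hs2p := s2_pos hf0 hf1 hs2
  have h1 : (0:ℝ) < (p:ℝ) - 1 := by linarith
  have h0 : (0:ℝ) < (p:ℝ) := by linarith
  rw [← sub_nonneg]
  have key : s₂ * r + (I - 1) * (1 - f * s₂) / ((p:ℝ) - 1) - (s₁ * r + I * (1 - f * s₁) / p)
      = ((s₂ - s₁) * (r * p - I * f) * ((p:ℝ)-1) + (f * s₂ - 1) * ((p:ℝ) - I)) / ((p:ℝ) * ((p:ℝ)-1)) := by
    field_simp; ring
  rw [key]
  apply div_nonneg _ (by positivity)
  have c1 : 0 ≤ (s₂ - s₁) * (r * p - I * f) * ((p:ℝ)-1) :=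
    mul_nonneg (mul_nonneg (by linarith) (by linarith)) (by linarith)
  nlinarith

include hf0 hf1 hp hs1 hs2 in
lemma Qphi (I : ℝ) (hi1 : 1 ≤ I) (hiP : I ≤ p) (hr : r * ((p:ℝ)-1) ≤ (I - 1) * f) :
    s₂ * r + (I - 1) * (1 - f * s₂) / ((p:ℝ) - 1) ≤ s₁ * r + I * (1 - f * s₁) / p := by
  have hp2 : (2:ℝ) ≤ p := by exact_mod_cast hp
  have hs1n := s1_neg hf0 hf1 hs1
  have hs2p := s2_pos hf0 hf1 hs2
  have h1 : (0:ℝ) < (p:ℝ) - 1 := by linarith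
  have h0 : (0:ℝ) < (p:ℝ) := by linarith
  rw [← sub_nonneg]
  have key : s₁ * r + I * (1 - f * s₁) / p - (s₂ * r + (I - 1) * (1 - f * s₂) / ((p:ℝ) - 1))
      = ((s₂ - s₁) * ((I-1) * f - r * ((p:ℝ)-1)) * p + ((p:ℝ) - I) * (1 - f * s₁)) / ((p:ℝ) * ((p:ℝ)-1)) := by
    field_simp; ring
  rw [key]
  apply div_nonneg _ (by positivity)
  have c1 : 0 ≤ (s₂ - s₁) * ((I-1) * f - r * ((p:ℝ)-1)) * p :=
    mul_nonneg (mul_nonneg (by linarith) (by linarith)) (by linarith)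
  have c2 : 0 ≤ ((p:ℝ) - I) * (1 - f * s₁) :=
    mul_nonneg (by linarith) (by nlinarith [mul_pos hf0 (neg_pos.2 hs1n)])
  linarith

include hf0 hf1 hq hs1 hs2 in
lemma Epsi (J : ℝ) (hj1 : 1 ≤ J) (hr : (J - 1) * (1 - f) ≤ (1 - r) * ((q:ℝ) - 1)) :
    s₂ * (r - 1) + (J - 1) * (1 + (1 - f) * s₂) / q ≤
      s₁ * (r - 1) + (J - 1) * (1 + (1 - f) * s₁) / ((q:ℝ) - 1) := by
  have hq2 : (2:ℝ) ≤ q := by exact_mod_cast hq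
  have hs1n := s1_neg hf0 hf1 hs1
  have hs2p := s2_pos hf0 hf1 hs2
  have h1 : (0:ℝ) < (q:ℝ) - 1 := by linarith
  have h0 : (0:ℝ) < (q:ℝ) := by linarith
  rw [← sub_nonneg]
  have key : s₁ * (r - 1) + (J - 1) * (1 + (1 - f) * s₁) / ((q:ℝ) - 1) -
      (s₂ * (r - 1) + (J - 1) * (1 + (1 - f) * s₂) / q)
      = ((s₂ - s₁) * ((1 - r) * ((q:ℝ)-1) - (J-1) * (1-f)) * q + (J-1) * (1 + (1-f) * s₂)) / ((q:ℝ) * ((q:ℝ)-1)) := by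
    field_simp; ring
  rw [key]
  apply div_nonneg _ (by positivity)
  have c1 : 0 ≤ (s₂ - s₁) * ((1 - r) * ((q:ℝ)-1) - (J-1) * (1-f)) * q :=
    mul_nonneg (mul_nonneg (by linarith) (by linarith)) (by linarith)
  have c2 : 0 ≤ (J - 1) * (1 + (1-f) * s₂) :=
    mul_nonneg (by linarith) (by nlinarith [mul_pos (show (0:ℝ) < 1-f by linarith) hs2p])
  linarith

include hf0 hf1 hq hs1 hs2 in
lemma Cpsi (J : ℝ) (hj1 : 1 ≤ J) (hr : (1 - r) * (q:ℝ) ≤ (J - 1) * (1 - f)) :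
    s₁ * (r - 1) + (J - 1) * (1 + (1 - f) * s₁) / ((q:ℝ) - 1) ≤
      s₂ * (r - 1) + (J - 1) * (1 + (1 - f) * s₂) / q := by
  have hq2 : (2:ℝ) ≤ q := by exact_mod_cast hq
  have hs1n := s1_neg hf0 hf1 hs1
  have hs2p := s2_pos hf0 hf1 hs2
  have h1 : (0:ℝ) < (q:ℝ) - 1 := by linarith
  have h0 : (0:ℝ) < (q:ℝ) := by linarith
  rw [← sub_nonneg]
  have key : s₂ * (r - 1) + (J - 1) * (1 + (1 - f) * s₂) / q -
      (s₁ * (r - 1) + (J - 1) * (1 + (1 - f) * s₁) / ((q:ℝ) - 1))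
      = ((s₂ - s₁) * ((J-1) * (1-f) - (1 - r) * q) * ((q:ℝ)-1) + (J-1) * (-(1 + (1-f) * s₁))) / ((q:ℝ) * ((q:ℝ)-1)) := by
    field_simp; ring
  rw [key]
  apply div_nonneg _ (by positivity)
  have c1 : 0 ≤ (s₂ - s₁) * ((J-1) * (1-f) - (1 - r) * q) * ((q:ℝ)-1) :=
    mul_nonneg (mul_nonneg (by linarith) (by linarith)) (by linarith)
  nlinarith

include hf0 hf1 hq hs1 hs2 in
lemma Ppsi (J : ℝ) (hj1 : 1 ≤ J) (hjQ : J ≤ q) (hr : (1 - r) * ((q:ℝ) - 1) ≤ (J - 1) * (1 - f)) :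
    s₁ * (r - 1) + (J - 1) * (1 + (1 - f) * s₁) / ((q:ℝ) - 1) ≤
      s₂ * (r - 1) + J * (1 + (1 - f) * s₂) / q := by
  have hq2 : (2:ℝ) ≤ q := by exact_mod_cast hq
  have hs1n := s1_neg hf0 hf1 hs1
  have hs2p := s2_pos hf0 hf1 hs2
  have h1 : (0:ℝ) < (q:ℝ) - 1 := by linarith
  have h0 : (0:ℝ) < (q:ℝ) := by linarith
  rw [← sub_nonneg]
  have key : s₂ * (r - 1) + J * (1 + (1 - f) * s₂) / q -
      (s₁ * (r - 1) + (J - 1) * (1 + (1 - f) * s₁) / ((q:ℝ) - 1))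
      = ((s₂ - s₁) * ((J-1) * (1-f) - (1-r) * ((q:ℝ)-1)) * q + ((q:ℝ) - J) * (1 + (1-f) * s₂)) / ((q:ℝ) * ((q:ℝ)-1)) := by
    field_simp; ring
  rw [key]
  apply div_nonneg _ (by positivity)
  have c1 : 0 ≤ (s₂ - s₁) * ((J-1) * (1-f) - (1-r) * ((q:ℝ)-1)) * q :=
    mul_nonneg (mul_nonneg (by linarith) (by linarith)) (by linarith)
  have c2 : 0 ≤ ((q:ℝ) - J) * (1 + (1-f) * s₂) :=
    mul_nonneg (by linarith) (by nlinarith [mul_pos (show (0:ℝ) < 1-f by linarith) hs2p])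
  linarith

include hf0 hf1 hq hs1 hs2 in
lemma Qpsi (J : ℝ) (hj1 : 1 ≤ J) (hjQ : J ≤ q) (hr : J * (1 - f) ≤ (1 - r) * (q:ℝ)) :
    s₂ * (r - 1) + J * (1 + (1 - f) * s₂) / q ≤
      s₁ * (r - 1) + (J - 1) * (1 + (1 - f) * s₁) / ((q:ℝ) - 1) := by
  have hq2 : (2:ℝ) ≤ q := by exact_mod_cast hq
  have hs1n := s1_neg hf0 hf1 hs1
  have hs2p := s2_pos hf0 hf1 hs2
  have h1 : (0:ℝ) < (q:ℝ) - 1 := by linarith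
  have h0 : (0:ℝ) < (q:ℝ) := by linarith
  rw [← sub_nonneg]
  have key : s₁ * (r - 1) + (J - 1) * (1 + (1 - f) * s₁) / ((q:ℝ) - 1) -
      (s₂ * (r - 1) + J * (1 + (1 - f) * s₂) / q)
      = ((s₂ - s₁) * ((1-r) * q - J * (1-f)) * ((q:ℝ)-1) + ((q:ℝ) - J) * (-(1 + (1-f) * s₁))) / ((q:ℝ) * ((q:ℝ)-1)) := by
    field_simp; ring
  rw [key]
  apply div_nonneg _ (by positivity)
  have c1 : 0 ≤ (s₂ - s₁) * ((1-r) * q - J * (1-f)) * ((q:ℝ)-1) :=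
    mul_nonneg (mul_nonneg (by linarith) (by linarith)) (by linarith)
  nlinarith

end Core


noncomputable def uch (f s₁ r : ℝ) (p q k : ℕ) : ℝ :=
  if k ≤ p then s₁ * r + (k:ℝ) * (1 - f * s₁) / p
  else s₁ * (r - 1) + ((p:ℝ) + q - 1 - k) * (1 + (1 - f) * s₁) / ((q:ℝ) - 1)

noncomputable def vch (f s₂ r : ℝ) (p q k : ℕ) : ℝ :=
  if k ≤ p then s₂ * r + ((k:ℝ) - 1) * (1 - f * s₂) / ((p:ℝ) - 1)
  else s₂ * (r - 1) + ((p:ℝ) + q - k) * (1 + (1 - f) * s₂) / q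

noncomputable def Lth (f : ℝ) (p q k : ℕ) : ℝ :=
  if k + 1 ≤ p then (k:ℝ) * f / p else 1 - ((p:ℝ) + q - 1 - k) * (1 - f) / ((q:ℝ) - 1)

noncomputable def Hth (f : ℝ) (p q k : ℕ) : ℝ :=
  if k + 1 ≤ p then (k:ℝ) * f / ((p:ℝ) - 1) else 1 - ((p:ℝ) + q - 1 - k) * (1 - f) / q

section Chain
variable {f s₁ s₂ r : ℝ} {p q : ℕ}
variable (hf0 : 0 < f) (hf1 : f < 1) (hp : 2 ≤ p) (hq : 2 ≤ q)
variable (hs1 : (1 - f) * s₁ ≤ -1) (hs2 : 1 ≤ f * s₂)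

include hp hq in
lemma uch_psi (k : ℕ) (hk : p ≤ k) :
    uch f s₁ r p q k = s₁ * (r - 1) + ((p:ℝ) + q - 1 - k) * (1 + (1 - f) * s₁) / ((q:ℝ) - 1) := by
  rcases eq_or_lt_of_le hk with h | h
  · subst h
    rw [uch, if_pos le_rfl]
    have h0 : (p:ℝ) ≠ 0 := by positivity
    have h1 : (q:ℝ) - 1 ≠ 0 := by
      have : (2:ℝ) ≤ q := by exact_mod_cast hq
      intro hc; nlinarith
    field_simp
    ring
  · rw [uch, if_neg (by omega)]

include hp hq in
lemma vch_psi (k : ℕ) (hk : p ≤ k) :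
    vch f s₂ r p q k = s₂ * (r - 1) + ((p:ℝ) + q - k) * (1 + (1 - f) * s₂) / q := by
  rcases eq_or_lt_of_le hk with h | h
  · subst h
    rw [vch, if_pos le_rfl]
    have h1 : (p:ℝ) - 1 ≠ 0 := by
      have : (2:ℝ) ≤ p := by exact_mod_cast hp
      intro hc; nlinarith
    have h0 : (q:ℝ) ≠ 0 := by positivity
    field_simp
    ring
  · rw [vch, if_neg (by omega)]

include hf0 hf1 hp hq hs1 in
lemma uch_mono_step (k : ℕ) (hkK : k + 2 ≤ p + q) :
    uch f s₁ r p q k ≤ uch f s₁ r p q (k+1) := by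
  have hp2 : (2:ℝ) ≤ p := by exact_mod_cast hp
  have hq2 : (2:ℝ) ≤ q := by exact_mod_cast hq
  have hs1n := s1_neg hf0 hf1 hs1
  have hA : 1 + (1 - f) * s₁ ≤ 0 := by linarith
  have hB : 0 < 1 - f * s₁ := by nlinarith [mul_pos hf0 (neg_pos.2 hs1n)]
  by_cases hkp : k + 1 ≤ p
  · rw [uch, if_pos (by omega), uch, if_pos hkp]
    rw [← sub_nonneg]
    have key : s₁ * r + ((k+1:ℕ):ℝ) * (1 - f * s₁) / p - (s₁ * r + (k:ℝ) * (1 - f * s₁) / p)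
        = (1 - f * s₁) / p := by
      push_cast
      field_simp
      ring
    rw [key]
    positivity
  · rw [uch_psi hp hq k (by omega), uch_psi hp hq (k+1) (by omega)]
    rw [← sub_nonneg]
    have key : s₁ * (r - 1) + ((p:ℝ) + q - 1 - ((k+1:ℕ):ℝ)) * (1 + (1 - f) * s₁) / ((q:ℝ) - 1)
        - (s₁ * (r - 1) + ((p:ℝ) + q - 1 - (k:ℝ)) * (1 + (1 - f) * s₁) / ((q:ℝ) - 1))
        = (-(1 + (1 - f) * s₁)) / ((q:ℝ) - 1) := by
      push_cast
      have h1 : (q:ℝ) - 1 ≠ 0 := by intro hc; nlinarith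
      field_simp
      ring
    rw [key]
    apply div_nonneg (by linarith) (by linarith)

include hf0 hf1 hp hq hs2 in
lemma vch_anti_step (k : ℕ) (hkK : k + 2 ≤ p + q) :
    vch f s₂ r p q (k+1) ≤ vch f s₂ r p q k := by
  have hp2 : (2:ℝ) ≤ p := by exact_mod_cast hp
  have hq2 : (2:ℝ) ≤ q := by exact_mod_cast hq
  have hs2p := s2_pos hf0 hf1 hs2
  have hA : 0 < 1 + (1 - f) * s₂ := by nlinarith [mul_pos (show (0:ℝ) < 1 - f by linarith) hs2p]
  have hB : 1 - f * s₂ ≤ 0 := by linarith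
  by_cases hkp : k + 1 ≤ p
  · rw [vch, if_pos (show k+1 ≤ p from hkp), vch, if_pos (show k ≤ p by omega)]
    rw [← sub_nonneg]
    have key : s₂ * r + ((k:ℝ) - 1) * (1 - f * s₂) / ((p:ℝ) - 1)
        - (s₂ * r + (((k+1:ℕ):ℝ) - 1) * (1 - f * s₂) / ((p:ℝ) - 1))
        = (-(1 - f * s₂)) / ((p:ℝ) - 1) := by
      push_cast
      have h1 : (p:ℝ) - 1 ≠ 0 := by intro hc; nlinarith
      field_simp
      ring
    rw [key]
    apply div_nonneg (by linarith) (by linarith)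
  · rw [vch_psi hp hq k (by omega), vch_psi hp hq (k+1) (by omega)]
    rw [← sub_nonneg]
    have key : s₂ * (r - 1) + ((p:ℝ) + q - (k:ℝ)) * (1 + (1 - f) * s₂) / q
        - (s₂ * (r - 1) + ((p:ℝ) + q - ((k+1:ℕ):ℝ)) * (1 + (1 - f) * s₂) / q)
        = (1 + (1 - f) * s₂) / q := by
      push_cast
      have h1 : (q:ℝ) ≠ 0 := by positivity
      field_simp
      ring
    rw [key]
    positivity

include hf0 hf1 hp hq hs1 in
lemma uch_mono {j k : ℕ} (hjk : j ≤ k) (hk : k + 1 ≤ p + q) :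
    uch f s₁ r p q j ≤ uch f s₁ r p q k := by
  induction k, hjk using Nat.le_induction with
  | base => exact le_rfl
  | succ n hn ih =>
      exact le_trans (ih (by omega)) (uch_mono_step hf0 hf1 hp hq hs1 n (by omega))

include hf0 hf1 hp hq hs2 in
lemma vch_anti {j k : ℕ} (hjk : j ≤ k) (hk : k + 1 ≤ p + q) :
    vch f s₂ r p q k ≤ vch f s₂ r p q j := by
  induction k, hjk using Nat.le_induction with
  | base => exact le_rfl
  | succ n hn ih =>
      exact le_trans (vch_anti_step hf0 hf1 hp hq hs2 n (by omega)) (ih (by omega))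

end Chain

section ChainThm
variable {f s₁ s₂ r : ℝ} {p q : ℕ}
variable (hf0 : 0 < f) (hf1 : f < 1) (hp : 2 ≤ p) (hq : 2 ≤ q)
variable (hs1 : (1 - f) * s₁ ≤ -1) (hs2 : 1 ≤ f * s₂)

include hf0 hf1 hp hq hs1 hs2 in
lemma Echain (k : ℕ) (hk1 : 1 ≤ k) (hkK : k + 2 ≤ p + q) (hr : r ≤ Lth f p q k) :
    vch f s₂ r p q (k+1) ≤ uch f s₁ r p q k := by
  have hp2 : (2:ℝ) ≤ p := by exact_mod_cast hp
  have hq2 : (2:ℝ) ≤ q := by exact_mod_cast hq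
  have hk1' : (1:ℝ) ≤ (k:ℝ) := by exact_mod_cast hk1
  have hkK' : (k:ℝ) + 2 ≤ (p:ℝ) + q := by exact_mod_cast hkK
  have hp0 : (0:ℝ) < p := by linarith
  have hq1 : (0:ℝ) < (q:ℝ) - 1 := by linarith
  by_cases hkp : k + 1 ≤ p
  · rw [Lth, if_pos hkp] at hr
    rw [uch, if_pos (by omega), vch, if_pos (by omega)]
    have h2 : r * p ≤ (k:ℝ) * f := (le_div_iff₀ hp0).mp hr
    have := Ephi hf0 hf1 hp hs1 hs2 (r := r) (k:ℝ) hk1' h2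
    push_cast
    convert this using 3 <;> push_cast <;> ring
  · rw [Lth, if_neg hkp] at hr
    rw [uch_psi hp hq k (by omega), vch_psi hp hq (k+1) (by omega)]
    have h2 : ((p:ℝ) + q - k - 1) * (1 - f) ≤ (1 - r) * ((q:ℝ) - 1) := by
      rw [le_sub_iff_add_le, ← le_sub_iff_add_le'] at hr
      have h3 : ((p:ℝ) + q - 1 - k) * (1 - f) / ((q:ℝ) - 1) ≤ 1 - r := hr
      calc ((p:ℝ) + q - k - 1) * (1 - f) = ((p:ℝ) + q - 1 - k) * (1 - f) := by ring
        _ ≤ (1 - r) * ((q:ℝ) - 1) := by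
            rw [div_le_iff₀ hq1] at h3; linarith
    have := Epsi hf0 hf1 hq hs1 hs2 (r := r) ((p:ℝ) + q - k) (by linarith) (by linarith [h2])
    push_cast
    convert this using 2 <;> push_cast <;> ring
end ChainThm

section ChainThm2
variable {f s₁ s₂ r : ℝ} {p q : ℕ}
variable (hf0 : 0 < f) (hf1 : f < 1) (hp : 2 ≤ p) (hq : 2 ≤ q)
variable (hs1 : (1 - f) * s₁ ≤ -1) (hs2 : 1 ≤ f * s₂)

include hf0 hf1 hp hq hs1 hs2 in
lemma Cchain (k : ℕ) (hk1 : 1 ≤ k) (hkK : k + 2 ≤ p + q) (hr : Hth f p q k ≤ r) :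
    uch f s₁ r p q k ≤ vch f s₂ r p q (k+1) := by
  have hp2 : (2:ℝ) ≤ p := by exact_mod_cast hp
  have hq2 : (2:ℝ) ≤ q := by exact_mod_cast hq
  have hk1' : (1:ℝ) ≤ (k:ℝ) := by exact_mod_cast hk1
  have hkK' : (k:ℝ) + 2 ≤ (p:ℝ) + q := by exact_mod_cast hkK
  have hp1 : (0:ℝ) < (p:ℝ) - 1 := by linarith
  have hq0 : (0:ℝ) < (q:ℝ) := by linarith
  by_cases hkp : k + 1 ≤ p
  · rw [Hth, if_pos hkp] at hr
    rw [uch, if_pos (by omega), vch, if_pos (by omega)]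
    have h2 : (k:ℝ) * f ≤ r * ((p:ℝ) - 1) := (div_le_iff₀ hp1).mp hr
    have := Cphi hf0 hf1 hp hs1 hs2 (r := r) (k:ℝ) hk1' h2
    push_cast
    convert this using 3 <;> push_cast <;> ring
  · rw [Hth, if_neg hkp] at hr
    rw [uch_psi hp hq k (by omega), vch_psi hp hq (k+1) (by omega)]
    have h2 : (1 - r) * (q:ℝ) ≤ ((p:ℝ) + q - k - 1) * (1 - f) := by
      rw [sub_le_iff_le_add, ← sub_le_iff_le_add'] at hr
      rw [← le_div_iff₀ hq0]
      calc (1 - r) ≤ ((p:ℝ) + q - 1 - k) * (1 - f) / q := by linarith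
        _ = ((p:ℝ) + q - k - 1) * (1 - f) / q := by ring_nf
    have := Cpsi hf0 hf1 hq hs1 hs2 (r := r) ((p:ℝ) + q - k) (by linarith) (by linarith)
    push_cast
    convert this using 2 <;> push_cast <;> ring

include hf0 hf1 hp hq hs1 hs2 in
lemma Pchain (k : ℕ) (hk1 : 1 ≤ k) (hkK : k + 1 ≤ p + q) (hr : Lth f p q k ≤ r) :
    uch f s₁ r p q k ≤ vch f s₂ r p q k := by
  have hp2 : (2:ℝ) ≤ p := by exact_mod_cast hp
  have hq2 : (2:ℝ) ≤ q := by exact_mod_cast hq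
  have hk1' : (1:ℝ) ≤ (k:ℝ) := by exact_mod_cast hk1
  have hkK' : (k:ℝ) + 1 ≤ (p:ℝ) + q := by exact_mod_cast hkK
  have hp0 : (0:ℝ) < (p:ℝ) := by linarith
  have hq1 : (0:ℝ) < (q:ℝ) - 1 := by linarith
  by_cases hkp : k + 1 ≤ p
  · rw [Lth, if_pos hkp] at hr
    rw [uch, if_pos (by omega), vch, if_pos (by omega)]
    have hkp' : (k:ℝ) + 1 ≤ (p:ℝ) := by exact_mod_cast hkp
    have h2 : (k:ℝ) * f ≤ r * p := (div_le_iff₀ hp0).mp hr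
    have := Pphi hf0 hf1 hp hs1 hs2 (r := r) (k:ℝ) hk1' (by linarith) h2
    convert this using 3 <;> push_cast <;> ring
  · rw [Lth, if_neg hkp] at hr
    rw [uch_psi hp hq k (by omega), vch_psi hp hq k (by omega)]
    have h2 : (1 - r) * ((q:ℝ) - 1) ≤ ((p:ℝ) + q - k - 1) * (1 - f) := by
      rw [sub_le_iff_le_add, ← sub_le_iff_le_add'] at hr
      rw [← le_div_iff₀ hq1]
      calc (1 - r) ≤ ((p:ℝ) + q - 1 - k) * (1 - f) / ((q:ℝ) - 1) := by linarith
        _ = ((p:ℝ) + q - k - 1) * (1 - f) / ((q:ℝ) - 1) := by ring_nf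
    have hpk : (p:ℝ) ≤ (k:ℝ) := by exact_mod_cast (by omega : p ≤ k)
    have := Ppsi hf0 hf1 hq hs1 hs2 (r := r) ((p:ℝ) + q - k) (by linarith) (by linarith) (by linarith)
    convert this using 2 <;> push_cast <;> ring

include hf0 hf1 hp hq hs1 hs2 in
lemma Qchain (k : ℕ) (hk1 : 1 ≤ k) (hkK : k + 2 ≤ p + q) (hr : r ≤ Hth f p q k) :
    vch f s₂ r p q (k+1) ≤ uch f s₁ r p q (k+1) := by
  have hp2 : (2:ℝ) ≤ p := by exact_mod_cast hp
  have hq2 : (2:ℝ) ≤ q := by exact_mod_cast hq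
  have hk1' : (1:ℝ) ≤ (k:ℝ) := by exact_mod_cast hk1
  have hkK' : (k:ℝ) + 2 ≤ (p:ℝ) + q := by exact_mod_cast hkK
  have hp1 : (0:ℝ) < (p:ℝ) - 1 := by linarith
  have hq0 : (0:ℝ) < (q:ℝ) := by linarith
  by_cases hkp : k + 1 ≤ p
  · rw [Hth, if_pos hkp] at hr
    rw [uch, if_pos (by omega), vch, if_pos (by omega)]
    have hkp' : (k:ℝ) + 1 ≤ (p:ℝ) := by exact_mod_cast hkp
    have h2 : r * ((p:ℝ) - 1) ≤ (k:ℝ) * f := (le_div_iff₀ hp1).mp hr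
    have := Qphi hf0 hf1 hp hs1 hs2 (r := r) ((k:ℝ) + 1) (by linarith) (by linarith)
      (by calc r * ((p:ℝ)-1) ≤ (k:ℝ) * f := h2
            _ = ((k:ℝ) + 1 - 1) * f := by ring)
    convert this using 3 <;> push_cast <;> ring
  · rw [Hth, if_neg hkp] at hr
    rw [uch_psi hp hq (k+1) (by omega), vch_psi hp hq (k+1) (by omega)]
    have h2 : ((p:ℝ) + q - 1 - k) * (1 - f) ≤ (1 - r) * (q:ℝ) := by
      rw [le_sub_iff_add_le, ← le_sub_iff_add_le'] at hr
      rw [div_le_iff₀ hq0] at hr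
      linarith
    have hpk : (p:ℝ) ≤ (k:ℝ) + 1 := by exact_mod_cast (by omega : p ≤ k + 1)
    have := Qpsi hf0 hf1 hq hs1 hs2 (r := r) ((p:ℝ) + q - 1 - k) (by linarith) (by linarith)
      (by linarith)
    convert this using 2 <;> push_cast <;> ring

end ChainThm2

section Part3
variable {f s₁ s₂ r : ℝ} {p q : ℕ}
variable (hf0 : 0 < f) (hf1 : f < 1) (hp : 2 ≤ p) (hq : 2 ≤ q)
variable (hs1 : (1 - f) * s₁ ≤ -1) (hs2 : 1 ≤ f * s₂)

include hp hq in
lemma piPQ_eq : piPQ f s₁ s₂ p q r =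
    sSup ((fun k => min (uch f s₁ r p q k) (vch f s₂ r p q k)) '' Set.Icc 1 (p + q - 1)) := by
  rw [piPQ]
  congr 1
  ext x
  simp only [Set.mem_union, Set.mem_image, Set.mem_Icc]
  constructor
  · rintro (⟨i, ⟨hi1, hip⟩, rfl⟩ | ⟨j, ⟨hj1, hjq⟩, rfl⟩)
    · exact ⟨i, ⟨hi1, by omega⟩, by rw [uch, if_pos hip, vch, if_pos hip]⟩
    · refine ⟨p + q - j, ⟨by omega, by omega⟩, ?_⟩
      rw [uch, if_neg (by omega), vch, if_neg (by omega),
        Nat.cast_sub (by omega : j ≤ p + q)]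
      push_cast
      congr 1 <;> ring
  · rintro ⟨k, ⟨hk1, hkK⟩, rfl⟩
    by_cases hkp : k ≤ p
    · exact Or.inl ⟨k, ⟨hk1, hkp⟩, by rw [uch, if_pos hkp, vch, if_pos hkp]⟩
    · refine Or.inr ⟨p + q - k, ⟨by omega, by omega⟩, ?_⟩
      rw [uch, if_neg hkp, vch, if_neg hkp,
        Nat.cast_sub (by omega : k ≤ p + q)]
      push_cast
      congr 1 <;> ring

include hf0 hf1 hp hq hs1 hs2 in
lemma isg_min (i : ℕ) (hi1 : 1 ≤ i) (hiK : i + 1 ≤ p + q)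
    (hC : ∀ k, 1 ≤ k → k + 1 = i → uch f s₁ r p q k ≤ vch f s₂ r p q i)
    (hE : i + 2 ≤ p + q → vch f s₂ r p q (i+1) ≤ uch f s₁ r p q i) :
    IsGreatest ((fun k => min (uch f s₁ r p q k) (vch f s₂ r p q k)) '' Set.Icc 1 (p + q - 1))
      (min (uch f s₁ r p q i) (vch f s₂ r p q i)) := by
  constructor
  · exact ⟨i, ⟨hi1, by omega⟩, rfl⟩
  · rintro x ⟨k, ⟨hk1, hkK⟩, rfl⟩
    rcases lt_trichotomy k i with h | h | h
    · obtain ⟨k0, rfl⟩ : ∃ k0, i = k0 + 1 := ⟨i - 1, by omega⟩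
      refine le_min ?_ ?_
      · exact le_trans (min_le_left _ _) (uch_mono hf0 hf1 hp hq hs1 (by omega) (by omega))
      · exact le_trans (min_le_left _ _)
          (le_trans (uch_mono hf0 hf1 hp hq hs1 (by omega) (by omega))
            (hC k0 (by omega) rfl))
    · subst h; exact le_rfl
    · refine le_min ?_ ?_
      · exact le_trans (min_le_right _ _)
          (le_trans (vch_anti hf0 hf1 hp hq hs2 (by omega : i + 1 ≤ k) (by omega))
            (hE (by omega)))
      · exact le_trans (min_le_right _ _) (vch_anti hf0 hf1 hp hq hs2 (by omega) (by omega))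

include hf0 hf1 hp hq hs1 hs2 in
lemma isg_max (i : ℕ) (hi1 : 1 ≤ i) (hiK : i + 2 ≤ p + q)
    (hP : uch f s₁ r p q i ≤ vch f s₂ r p q i)
    (hQ : vch f s₂ r p q (i+1) ≤ uch f s₁ r p q (i+1)) :
    IsGreatest ((fun k => min (uch f s₁ r p q k) (vch f s₂ r p q k)) '' Set.Icc 1 (p + q - 1))
      (max (uch f s₁ r p q i) (vch f s₂ r p q (i+1))) := by
  constructor
  · by_cases h : vch f s₂ r p q (i+1) ≤ uch f s₁ r p q i
    · exact ⟨i, ⟨hi1, by omega⟩, by simp only []; rw [min_eq_left hP, max_eq_left h]⟩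
    · push_neg at h
      exact ⟨i+1, ⟨by omega, by omega⟩, by simp only []; rw [min_eq_right hQ, max_eq_right h.le]⟩
  · rintro x ⟨k, ⟨hk1, hkK⟩, rfl⟩
    by_cases hki : k ≤ i
    · exact le_trans (min_le_left _ _)
        (le_trans (uch_mono hf0 hf1 hp hq hs1 hki (by omega)) (le_max_left _ _))
    · exact le_trans (min_le_right _ _)
        (le_trans (vch_anti hf0 hf1 hp hq hs2 (by omega : i + 1 ≤ k) (by omega)) (le_max_right _ _))

end Part3

section Part4
variable {f s₁ s₂ r : ℝ} {p q : ℕ}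
variable (hf0 : 0 < f) (hf1 : f < 1) (hp : 2 ≤ p) (hq : 2 ≤ q)

include hp hq in
lemma select (hr0 : 0 ≤ r) (hr1 : r < 1) :
    (∃ i, 1 ≤ i ∧ i + 1 ≤ p + q ∧ (∀ k, 1 ≤ k → k + 1 = i → Hth f p q k ≤ r) ∧
      (i + 2 ≤ p + q → r ≤ Lth f p q i)) ∨
    (∃ i, 1 ≤ i ∧ i + 2 ≤ p + q ∧ Lth f p q i ≤ r ∧ r ≤ Hth f p q i) := by
  have main : ∀ k, k + 2 ≤ p + q → 1 ≤ k → r < Hth f p q k →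
      ((∃ i, 1 ≤ i ∧ i + 1 ≤ p + q ∧ (∀ k, 1 ≤ k → k + 1 = i → Hth f p q k ≤ r) ∧
        (i + 2 ≤ p + q → r ≤ Lth f p q i)) ∨
      (∃ i, 1 ≤ i ∧ i + 2 ≤ p + q ∧ Lth f p q i ≤ r ∧ r ≤ Hth f p q i)) := by
    intro k
    induction k with
    | zero => intro _ h; omega
    | succ n ih =>
      intro hk2 _ hrH
      by_cases hL : Lth f p q (n+1) ≤ r
      · exact Or.inr ⟨n+1, by omega, hk2, hL, hrH.le⟩
      · push_neg at hL
        by_cases hn : n = 0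
        · subst hn
          exact Or.inl ⟨1, le_rfl, by omega, fun k hk hk1 => by omega, fun _ => hL.le⟩
        · by_cases hH : Hth f p q n ≤ r
          · refine Or.inl ⟨n+1, by omega, by omega, fun k hk hk1 => ?_, fun _ => hL.le⟩
            · have : k = n := by omega
              subst this; exact hH
          · push_neg at hH
            exact ih (by omega) (by omega) hH
  by_cases hrH : r < Hth f p q (p + q - 2)
  · exact main (p + q - 2) (by omega) (by omega) hrH
  · push_neg at hrH
    refine Or.inl ⟨p + q - 1, by omega, by omega, fun k hk hk1 => ?_, fun h => by omega⟩
    have : k = p + q - 2 := by omega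
    subst this; exact hrH

include hp hq in
lemma uch_affine (k : ℕ) : ∃ a b : ℝ, ∀ x, uch f x r p q k = a * x + b := by
  have hp0 : (p:ℝ) ≠ 0 := by positivity
  have hq1 : (q:ℝ) - 1 ≠ 0 := by
    have : (2:ℝ) ≤ q := by exact_mod_cast hq
    intro hc; nlinarith
  by_cases hk : k ≤ p
  · exact ⟨r - (k:ℝ) * f / p, (k:ℝ) / p, fun x => by rw [uch, if_pos hk]; field_simp; ring⟩
  · exact ⟨r - 1 + ((p:ℝ) + q - 1 - k) * (1 - f) / ((q:ℝ) - 1),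
      ((p:ℝ) + q - 1 - k) / ((q:ℝ) - 1),
      fun x => by rw [uch, if_neg hk]; field_simp; ring⟩

include hp hq in
lemma vch_affine (k : ℕ) : ∃ a b : ℝ, ∀ y, vch f y r p q k = a * y + b := by
  have hq0 : (q:ℝ) ≠ 0 := by positivity
  have hp1 : (p:ℝ) - 1 ≠ 0 := by
    have : (2:ℝ) ≤ p := by exact_mod_cast hp
    intro hc; nlinarith
  by_cases hk : k ≤ p
  · exact ⟨r - ((k:ℝ) - 1) * f / ((p:ℝ) - 1), ((k:ℝ) - 1) / ((p:ℝ) - 1),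
      fun y => by rw [vch, if_pos hk]; field_simp; ring⟩
  · exact ⟨r - 1 + ((p:ℝ) + q - k) * (1 - f) / q, ((p:ℝ) + q - k) / q,
      fun y => by rw [vch, if_neg hk]; field_simp; ring⟩

include hf0 hf1 hp hq in
theorem key (hr0 : 0 ≤ r) (hr1 : r < 1) :
    ∃ uu vv : ℝ → ℝ → ℝ, (∃ a b : ℝ, ∀ x y, uu x y = a * x + b) ∧
      (∃ c d : ℝ, ∀ x y, vv x y = c * y + d) ∧
      ((∀ s₁ s₂ : ℝ, s₁ ≤ 1 / (f - 1) → 1 / f ≤ s₂ →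
          piPQ f s₁ s₂ p q r = min (uu s₁ s₂) (vv s₁ s₂)) ∨
       (∀ s₁ s₂ : ℝ, s₁ ≤ 1 / (f - 1) → 1 / f ≤ s₂ →
          piPQ f s₁ s₂ p q r = max (uu s₁ s₂) (vv s₁ s₂))) := by
  have hcv1 : ∀ s₁ : ℝ, s₁ ≤ 1 / (f - 1) → (1 - f) * s₁ ≤ -1 := by
    intro s₁ h
    have hne : f - 1 < 0 := by linarith
    have h2 : (1 - f) * (1 / (f - 1)) = -1 := by
      rw [mul_one_div, div_eq_iff (by linarith : f - 1 ≠ 0)]; ring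
    nlinarith [mul_le_mul_of_nonneg_left h (show (0:ℝ) ≤ 1 - f by linarith)]
  have hcv2 : ∀ s₂ : ℝ, 1 / f ≤ s₂ → 1 ≤ f * s₂ := by
    intro s₂ h
    have h2 : f * (1 / f) = 1 := by field_simp
    nlinarith [mul_le_mul_of_nonneg_left h (le_of_lt hf0)]
  rcases select hp hq (f := f) hr0 hr1 with ⟨i, hi1, hiK, hC, hE⟩ | ⟨i, hi1, hiK, hL, hH⟩
  · refine ⟨fun x _ => uch f x r p q i, fun _ y => vch f y r p q i,
      ?_, ?_, Or.inl ?_⟩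
    · obtain ⟨a, b, hab⟩ := uch_affine hp hq (f := f) (r := r) i
      exact ⟨a, b, fun x _ => hab x⟩
    · obtain ⟨a, b, hab⟩ := vch_affine hp hq (f := f) (r := r) i
      exact ⟨a, b, fun _ y => hab y⟩
    · intro s₁ s₂ h1 h2
      have hs1 := hcv1 s₁ h1
      have hs2 := hcv2 s₂ h2
      rw [piPQ_eq hp hq]
      exact (isg_min hf0 hf1 hp hq hs1 hs2 i hi1 hiK
        (fun k hk hk1 => by
          have := Cchain hf0 hf1 hp hq hs1 hs2 k hk (by omega) (hC k hk hk1)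
          rwa [hk1] at this)
        (fun h => Echain hf0 hf1 hp hq hs1 hs2 i hi1 h (hE h))).csSup_eq
  · refine ⟨fun x _ => uch f x r p q i, fun _ y => vch f y r p q (i+1),
      ?_, ?_, Or.inr ?_⟩
    · obtain ⟨a, b, hab⟩ := uch_affine hp hq (f := f) (r := r) i
      exact ⟨a, b, fun x _ => hab x⟩
    · obtain ⟨a, b, hab⟩ := vch_affine hp hq (f := f) (r := r) (i+1)
      exact ⟨a, b, fun _ y => hab y⟩
    · intro s₁ s₂ h1 h2
      have hs1 := hcv1 s₁ h1
      have hs2 := hcv2 s₂ h2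
      rw [piPQ_eq hp hq]
      exact (isg_max hf0 hf1 hp hq hs1 hs2 i hi1 hiK
        (Pchain hf0 hf1 hp hq hs1 hs2 i hi1 (by omega) hL)
        (Qchain hf0 hf1 hp hq hs1 hs2 i hi1 hiK hH)).csSup_eq

end Part4


/-- there exist `n` affine functions (hyperplanes) decomposing the
parameter space `D_f^{p,q}` into regions (given by sign patterns) within each of
which every coordinate of the cut coefficient vector
`(π_{f,s₁,s₂}^{p,q}(r_1), …, π_{f,s₁,s₂}^{p,q}(r_n))` is a fixed affine function
of `(s₁, s₂)`. -/
theorem stmt6 (f : ℝ) (hf : f ∈ Set.Ioo (0 : ℝ) 1) (p q : ℕ) (hp : 2 ≤ p) (hq : 2 ≤ q)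
    (n : ℕ) (r : Fin n → ℝ) (hr : ∀ j, r j ∈ Set.Ico (0 : ℝ) 1) :
    ∃ g : Fin n → (ℝ × ℝ → ℝ), (∀ i, IsAffine2 (g i)) ∧
      ∀ σ : Fin n → ℕ, ∃ a : Fin n → (ℝ × ℝ → ℝ), (∀ j, IsAffine2 (a j)) ∧
        ∀ s ∈ Dset f p q, (∀ i, sgn01 (g i s) = σ i) →
          ∀ j, piPQ f s.1 s.2 p q (r j) = a j s := by
  classical
  have H := fun j : Fin n => key hf.1 hf.2 hp hq (r := r j) (hr j).1 (hr j).2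
  choose uu vv huaff hvaff hcase using H
  refine ⟨fun j => fun s => uu j s.1 s.2 - vv j s.1 s.2, ?_, ?_⟩
  · intro i
    obtain ⟨a, b, hab⟩ := huaff i
    obtain ⟨c, d, hcd⟩ := hvaff i
    exact ⟨a, -c, b - d, fun x => by show uu i x.1 x.2 - vv i x.1 x.2 = _; rw [hab, hcd]; ring⟩
  · intro σ
    set MinP : Fin n → Prop := fun j => ∀ s₁ s₂ : ℝ, s₁ ≤ 1 / (f - 1) → 1 / f ≤ s₂ →
      piPQ f s₁ s₂ p q (r j) = min (uu j s₁ s₂) (vv j s₁ s₂) with hMinP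
    refine ⟨fun j => if MinP j then
        (if σ j = 1 then fun s => vv j s.1 s.2 else fun s => uu j s.1 s.2)
      else
        (if σ j = 1 then fun s => uu j s.1 s.2 else fun s => vv j s.1 s.2), ?_, ?_⟩
    · intro j
      obtain ⟨a, b, hab⟩ := huaff j
      obtain ⟨c, d, hcd⟩ := hvaff j
      beta_reduce
      by_cases hm : MinP j
      · rw [if_pos hm]
        by_cases hσ : σ j = 1
        · rw [if_pos hσ]
          exact ⟨0, c, d, fun x => by show vv j x.1 x.2 = _; rw [hcd]; ring⟩
        · rw [if_neg hσ]
          exact ⟨a, 0, b, fun x => by show uu j x.1 x.2 = _; rw [hab]; ring⟩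
      · rw [if_neg hm]
        by_cases hσ : σ j = 1
        · rw [if_pos hσ]
          exact ⟨a, 0, b, fun x => by show uu j x.1 x.2 = _; rw [hab]; ring⟩
        · rw [if_neg hσ]
          exact ⟨0, c, d, fun x => by show vv j x.1 x.2 = _; rw [hcd]; ring⟩
    · intro s hs hsgn j
      beta_reduce
      have h1 : s.1 ≤ 1 / (f - 1) := by
        have := hs.1
        split_ifs at this
        · exact this.2
        · exact this
      have h2 : 1 / f ≤ s.2 := by
        have := hs.2
        split_ifs at this
        · exact this.1
        · exact this
      have hsg := hsgn j
      simp only [sgn01] at hsg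
      by_cases hm : MinP j
      · have hpi := hm s.1 s.2 h1 h2
        rw [if_pos hm]
        by_cases h0 : 0 ≤ uu j s.1 s.2 - vv j s.1 s.2
        · rw [if_pos h0] at hsg
          rw [if_pos hsg.symm, hpi, min_eq_right (by linarith)]
        · rw [if_neg h0] at hsg
          rw [if_neg (show ¬ σ j = 1 by omega), hpi,
            min_eq_left (by push_neg at h0; linarith)]
      · have hmax := (hcase j).resolve_left hm
        have hpi := hmax s.1 s.2 h1 h2
        rw [if_neg hm]
        by_cases h0 : 0 ≤ uu j s.1 s.2 - vv j s.1 s.2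
        · rw [if_pos h0] at hsg
          rw [if_pos hsg.symm, hpi, max_eq_left (by linarith)]
        · rw [if_neg h0] at hsg
          rw [if_neg (show ¬ σ j = 1 by omega), hpi,
            max_eq_right (by push_neg at h0; linarith)]
end

section
/- Let k ≥ 2 be an integer, let τ ≥ 2k, let f ∈ [0,1)^k \ {0}, and let μ ∈ Δ_k^τ. Then π_{f,μ} is a valid cut generating function for f: π_{f,μ} is nonnegative, π_{f,μ}(0) = 0, π_{f,μ}(f) = 1, π_{f,μ} is subadditive (π_{f,μ}(r + r') ≤ π_{f,μ}(r) + π_{f,μ}(r') for all r, r' ∈ ℝ^k), and π_{f,μ}(r + w) = π_{f,μ}(r) for all r ∈ ℝ^k and w ∈ ℤ^k. -/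
/-- `innerMax k f μ x = max_{i=0,…,k} ⟨aⁱ, x⟩`, where `a⁰ = (∑ μᵢ eⁱ)/(∑ μᵢ fᵢ)` and
`aⁱ = eⁱ/(fᵢ - 1)` for `i = 1,…,k`. -/
noncomputable def innerMax (k : ℕ) (f μ x : Fin k → ℝ) : ℝ :=
  max ((∑ i, μ i * x i) / (∑ i, μ i * f i)) (sSup (Set.range fun i : Fin k => x i / (f i - 1)))

/-- The `k`-dimensional cut generating function
`π_{f,μ}(r) = inf_{z ∈ ℤ^k} max_{i=0,…,k} ⟨aⁱ, r + z⟩`. -/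
noncomputable def piK (k : ℕ) (f μ r : Fin k → ℝ) : ℝ :=
  sInf {v : ℝ | ∃ z : Fin k → ℤ, v = innerMax k f μ (fun i => r i + (z i : ℝ))}

/-- The simplex `Δ_k^τ = {μ ∈ ℝ^k : μᵢ ≥ 1/τ for all i, ∑ μᵢ = 1}`. -/
def simplexSet (k : ℕ) (τ : ℝ) : Set (Fin k → ℝ) :=
  {μ | (∀ i, 1 / τ ≤ μ i) ∧ ∑ i, μ i = 1}

/-- for `k ≥ 2`, `τ ≥ 2k`, `f ∈ [0,1)^k \ {0}` and `μ ∈ Δ_k^τ`, the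
function `π_{f,μ}` is a valid cut generating function for `f`. -/
theorem stmt9 (k : ℕ) (hk : 2 ≤ k) (τ : ℝ) (hτ : 2 * (k : ℝ) ≤ τ)
    (f : Fin k → ℝ) (hf : ∀ i, f i ∈ Set.Ico (0 : ℝ) 1) (hf0 : f ≠ 0)
    (μ : Fin k → ℝ) (hμ : μ ∈ simplexSet k τ) :
    (∀ r, 0 ≤ piK k f μ r) ∧ piK k f μ 0 = 0 ∧ piK k f μ f = 1 ∧
    (∀ r r', piK k f μ (r + r') ≤ piK k f μ r + piK k f μ r') ∧
    (∀ (r : Fin k → ℝ) (w : Fin k → ℤ),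
      piK k f μ (fun i => r i + (w i : ℝ)) = piK k f μ r) := by
  obtain ⟨hμτ, hμsum⟩ := hμ
  have hk0 : 0 < k := by omega
  haveI : Nonempty (Fin k) := ⟨⟨0, hk0⟩⟩
  have hτpos : (0:ℝ) < τ := by
    have : (2:ℝ) ≤ (k:ℝ) := by exact_mod_cast hk
    nlinarith
  have hμpos : ∀ i, 0 < μ i := fun i =>
    lt_of_lt_of_le (by positivity) (hμτ i)
  have hfex : ∃ j, 0 < f j := by
    by_contra h; push_neg at h
    exact hf0 (funext fun i => le_antisymm (h i) (hf i).1)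
  obtain ⟨j, hj⟩ := hfex
  have hD : 0 < ∑ i, μ i * f i := by
    have h1 : μ j * f j ≤ ∑ i, μ i * f i :=
      Finset.single_le_sum (fun i _ => mul_nonneg (hμpos i).le (hf i).1) (Finset.mem_univ j)
    nlinarith [hμpos j]
  have hfi1 : ∀ i, f i - 1 < 0 := fun i => sub_neg.mpr (hf i).2
  have hbdd : ∀ x : Fin k → ℝ, BddAbove (Set.range fun i => x i / (f i - 1)) :=
    fun x => Set.Finite.bddAbove (Set.finite_range _)
  -- innerMax is nonnegative
  have hA : ∀ x : Fin k → ℝ, 0 ≤ innerMax k f μ x := by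
    intro x
    by_cases h : ∀ i, 0 < x i
    · refine le_trans ?_ (le_max_left _ _)
      exact div_nonneg (Finset.sum_nonneg fun i _ => mul_nonneg (hμpos i).le (h i).le) hD.le
    · push_neg at h; obtain ⟨i, hi⟩ := h
      refine le_trans ?_ (le_max_right _ _)
      have h0 : 0 ≤ x i / (f i - 1) := by
        rw [le_div_iff_of_neg (hfi1 i)]; nlinarith
      exact le_trans h0 (le_csSup (hbdd x) ⟨i, rfl⟩)
  -- innerMax at f plus any integer vector is at least 1
  have hB : ∀ z : Fin k → ℤ, 1 ≤ innerMax k f μ (fun i => f i + (z i : ℝ)) := by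
    intro z
    by_cases h : ∀ i, 0 ≤ z i
    · refine le_trans ?_ (le_max_left _ _)
      rw [le_div_iff₀ hD, one_mul]
      refine Finset.sum_le_sum fun i _ => ?_
      show μ i * f i ≤ μ i * (f i + (z i : ℝ))
      have hz : (0:ℝ) ≤ (z i : ℝ) := by exact_mod_cast h i
      nlinarith [hμpos i]
    · push_neg at h; obtain ⟨i, hi⟩ := h
      refine le_trans ?_ (le_max_right _ _)
      refine le_trans ?_ (le_csSup (hbdd _) ⟨i, rfl⟩)
      have hzi : (z i : ℝ) ≤ -1 := by exact_mod_cast (by omega : z i ≤ -1)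
      rw [le_div_iff_of_neg (hfi1 i)]
      show f i + (z i : ℝ) ≤ 1 * (f i - 1)
      nlinarith [(hf i).1]
  -- innerMax is subadditive
  have hC : ∀ x y : Fin k → ℝ,
      innerMax k f μ (fun i => x i + y i) ≤ innerMax k f μ x + innerMax k f μ y := by
    intro x y
    unfold innerMax
    apply max_le
    · have hsum : (∑ i, μ i * (x i + y i)) = (∑ i, μ i * x i) + ∑ i, μ i * y i := by
        rw [← Finset.sum_add_distrib]; exact Finset.sum_congr rfl fun i _ => by ring
      rw [hsum, add_div]
      exact add_le_add (le_max_left _ _) (le_max_left _ _)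
    · refine csSup_le (Set.range_nonempty _) ?_
      rintro v ⟨i, rfl⟩
      change (x i + y i) / (f i - 1) ≤ _
      rw [add_div]
      exact add_le_add ((le_csSup (hbdd x) ⟨i, rfl⟩).trans (le_max_right _ _))
        ((le_csSup (hbdd y) ⟨i, rfl⟩).trans (le_max_right _ _))
  -- the set defining piK
  have Sne : ∀ r : Fin k → ℝ,
      {v : ℝ | ∃ z : Fin k → ℤ, v = innerMax k f μ (fun i => r i + (z i : ℝ))}.Nonempty :=
    fun r => ⟨_, 0, rfl⟩
  have Sbdd : ∀ r : Fin k → ℝ,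
      BddBelow {v : ℝ | ∃ z : Fin k → ℤ, v = innerMax k f μ (fun i => r i + (z i : ℝ))} :=
    fun r => ⟨0, by rintro v ⟨z, rfl⟩; exact hA _⟩
  have hnonneg : ∀ r, 0 ≤ piK k f μ r := by
    intro r
    exact le_csInf (Sne r) (by rintro v ⟨z, rfl⟩; exact hA _)
  refine ⟨hnonneg, ?_, ?_, ?_, ?_⟩
  · -- piK 0 = 0
    refine le_antisymm ?_ (hnonneg 0)
    have h0 : innerMax k f μ (fun i => (0 : Fin k → ℝ) i + (((0 : Fin k → ℤ)) i : ℝ)) = 0 := by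
      have hfun : (fun i : Fin k => (0 : Fin k → ℝ) i + (((0 : Fin k → ℤ)) i : ℝ))
          = fun _ : Fin k => (0:ℝ) := by funext i; simp
      rw [hfun]
      unfold innerMax
      simp
    exact csInf_le (Sbdd 0) ⟨0, h0.symm⟩
  · -- piK f = 1
    refine le_antisymm ?_ (le_csInf (Sne f) (by rintro v ⟨z, rfl⟩; exact hB z))
    have h1 : innerMax k f μ (fun i => f i + (((0 : Fin k → ℤ)) i : ℝ)) = 1 := by
      refine le_antisymm ?_ (hB 0)
      have hfun : (fun i : Fin k => f i + (((0 : Fin k → ℤ)) i : ℝ)) = f := by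
        funext i; simp
      rw [hfun]
      unfold innerMax
      apply max_le
      · rw [div_self hD.ne']
      · refine le_trans (csSup_le (Set.range_nonempty _) ?_) zero_le_one
        rintro v ⟨i, rfl⟩
        exact div_nonpos_of_nonneg_of_nonpos (hf i).1 (hfi1 i).le
    exact csInf_le (Sbdd f) ⟨0, h1.symm⟩
  · -- subadditivity
    intro r r'
    have hkey : ∀ z1 z2 : Fin k → ℤ, piK k f μ (r + r') ≤
        innerMax k f μ (fun i => r i + (z1 i : ℝ)) +
        innerMax k f μ (fun i => r' i + (z2 i : ℝ)) := by
      intro z1 z2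
      have hfun : (fun i : Fin k => (r + r') i + (((z1 + z2) i : ℤ) : ℝ))
          = fun i => (r i + (z1 i : ℝ)) + (r' i + (z2 i : ℝ)) := by
        funext i; simp [Pi.add_apply]; push_cast; ring
      have hmem : innerMax k f μ (fun i => (r + r') i + (((z1 + z2) i : ℤ) : ℝ)) ∈
          {v : ℝ | ∃ z : Fin k → ℤ, v = innerMax k f μ (fun i => (r + r') i + (z i : ℝ))} :=
        ⟨z1 + z2, rfl⟩
      refine le_trans (csInf_le (Sbdd (r + r')) hmem) ?_
      rw [hfun]
      exact hC _ _
    have h1 : ∀ z2 : Fin k → ℤ,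
        piK k f μ (r + r') - innerMax k f μ (fun i => r' i + (z2 i : ℝ)) ≤ piK k f μ r := by
      intro z2
      refine le_csInf (Sne r) ?_
      rintro v ⟨z1, rfl⟩
      linarith [hkey z1 z2]
    have h2 : piK k f μ (r + r') - piK k f μ r ≤ piK k f μ r' := by
      refine le_csInf (Sne r') ?_
      rintro v ⟨z2, rfl⟩
      linarith [h1 z2]
    linarith
  · -- periodicity
    intro r w
    unfold piK
    congr 1
    ext v
    constructor
    · rintro ⟨z, rfl⟩
      exact ⟨w + z, by congr 1; funext i; simp only [Pi.add_apply, Int.cast_add]; ring⟩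
    · rintro ⟨z, rfl⟩
      exact ⟨z - w, by congr 1; funext i; simp only [Pi.sub_apply, Int.cast_sub]; ring⟩
end

section
/- Let k ≥ 2 be an integer, let f ∈ [0,1)^k, and let i ∈ {1,…,k} be an index with f_i ∈ (0,1). With μ = e^i, the i-th standard basis vector (so that a^0 = e^i/f_i is well defined since Σ_j μ_j f_j = f_i > 0), for every r ∈ ℝ^k: π_{f, e^i}(r) = GMI_{f_i}(r_i). -/
lemma gmi_le_max (f r : ℝ) (hf0 : 0 < f) (hf1 : f < 1) (n : ℤ) :
    GMI f r ≤ max ((r + n) / f) ((r + n) / (f - 1)) := by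
  have hm0 : 0 ≤ Int.fract r := Int.fract_nonneg r
  have hm1 : Int.fract r < 1 := Int.fract_lt_one r
  have hm : Int.fract r = r - ⌊r⌋ := rfl
  have key1 : GMI f r ≤ Int.fract r / f := by
    unfold GMI; split_ifs with h
    · exact le_rfl
    · push_neg at h
      rw [div_le_div_iff₀ (by linarith) hf0]
      nlinarith
  have key2 : GMI f r ≤ (1 - Int.fract r) / (1 - f) := by
    unfold GMI; split_ifs with h
    · rw [div_le_div_iff₀ hf0 (by linarith)]; nlinarith
    · exact le_rfl
  rcases le_or_gt 0 (r + (n : ℝ)) with hpos | hneg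
  · refine le_trans (le_trans key1 ?_) (le_max_left _ _)
    refine (div_le_div_iff_of_pos_right hf0).mpr ?_
    have ht : (0 : ℤ) ≤ ⌊r⌋ + n := by
      by_contra hcon
      push_neg at hcon
      have h1 : (⌊r⌋ + n : ℤ) ≤ -1 := by omega
      have h2 : ((⌊r⌋ + n : ℤ) : ℝ) ≤ -1 := by exact_mod_cast h1
      push_cast at h2
      linarith
    have h3 : (0 : ℝ) ≤ (⌊r⌋ : ℝ) + n := by exact_mod_cast ht
    linarith
  · refine le_trans (le_trans key2 ?_) (le_max_right _ _)
    have ht : (⌊r⌋ + n : ℤ) ≤ -1 := by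
      by_contra hcon
      push_neg at hcon
      have h1 : (0 : ℤ) ≤ ⌊r⌋ + n := by omega
      have h2 : (0 : ℝ) ≤ ((⌊r⌋ + n : ℤ) : ℝ) := by exact_mod_cast h1
      push_cast at h2
      linarith
    have htR : ((⌊r⌋ : ℝ) + n) ≤ -1 := by exact_mod_cast ht
    have heq : (r + n) / (f - 1) = (-(r + n)) / (1 - f) := by
      rw [div_eq_div_iff (by linarith) (by linarith)]; ring
    rw [heq]
    refine (div_le_div_iff_of_pos_right (by linarith)).mpr ?_
    linarith

/-- with `μ = eⁱ` and `fᵢ ∈ (0,1)`, the `k`-dimensional cut generating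
function `π_{f, eⁱ}` reduces to the one-dimensional GMI function: for all `r`,
`π_{f, eⁱ}(r) = GMI_{fᵢ}(rᵢ)`. -/
theorem stmt10 (k : ℕ) (hk : 2 ≤ k) (f : Fin k → ℝ) (hf : ∀ j, f j ∈ Set.Ico (0 : ℝ) 1)
    (i : Fin k) (hfi : f i ∈ Set.Ioo (0 : ℝ) 1) :
    ∀ r : Fin k → ℝ, piK k f (Pi.single i 1) r = GMI (f i) (r i) := by
  intro r
  obtain ⟨hF0, hF1⟩ := hfi
  have hne : Nonempty (Fin k) := ⟨i⟩
  have hbdd : ∀ x : Fin k → ℝ, BddAbove (Set.range fun j : Fin k => x j / (f j - 1)) :=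
    fun x => (Set.finite_range _).bddAbove
  have hsum : ∀ x : Fin k → ℝ, (∑ j, (Pi.single i 1 : Fin k → ℝ) j * x j) = x i := by
    intro x
    simp [Pi.single_apply, ite_mul, Finset.sum_ite_eq']
  have him : ∀ x : Fin k → ℝ, innerMax k f (Pi.single i 1) x
      = max (x i / f i) (sSup (Set.range fun j : Fin k => x j / (f j - 1))) := by
    intro x
    unfold innerMax
    rw [hsum x, hsum f]
  have hm0 : 0 ≤ Int.fract (r i) := Int.fract_nonneg _
  have hm1 : Int.fract (r i) < 1 := Int.fract_lt_one _
  set S : Set ℝ := {v : ℝ | ∃ z : Fin k → ℤ,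
      v = innerMax k f (Pi.single i 1) (fun j => r j + (z j : ℝ))} with hS
  -- lower bound
  have lb : ∀ v ∈ S, GMI (f i) (r i) ≤ v := by
    rintro v ⟨z, rfl⟩
    rw [him]
    refine le_trans (gmi_le_max (f i) (r i) hF0 hF1 (z i)) (max_le_max le_rfl ?_)
    exact le_csSup (hbdd _) ⟨i, rfl⟩
  -- membership
  have mem : GMI (f i) (r i) ∈ S := by
    by_cases hc : Int.fract (r i) ≤ f i
    · refine ⟨fun j => if j = i then -⌊r i⌋ else ⌈-(r j)⌉, ?_⟩
      rw [him]
      have hri : r i + ((if i = i then -⌊r i⌋ else ⌈-(r i)⌉ : ℤ) : ℝ) = Int.fract (r i) := by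
        rw [if_pos rfl, Int.fract]
        push_cast
        ring
      have hGval : GMI (f i) (r i) = Int.fract (r i) / f i := by
        unfold GMI; rw [if_pos hc]
      have hnonneg : 0 ≤ Int.fract (r i) / f i := div_nonneg hm0 hF0.le
      have hsup : sSup (Set.range fun j : Fin k =>
          (r j + ((if j = i then -⌊r i⌋ else ⌈-(r j)⌉ : ℤ) : ℝ)) / (f j - 1)) ≤ 0 := by
        refine csSup_le (Set.range_nonempty _) ?_
        rintro _ ⟨j, rfl⟩
        dsimp only
        by_cases hj : j = i
        · subst hj
          rw [hri]
          exact div_nonpos_of_nonneg_of_nonpos hm0 (by linarith [(hf j).2])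
        · rw [if_neg hj]
          refine div_nonpos_of_nonneg_of_nonpos ?_ (by linarith [(hf j).2])
          have := Int.le_ceil (-(r j))
          linarith
      rw [hGval, hri]
      exact (max_eq_left (le_trans hsup hnonneg)).symm
    · push_neg at hc
      refine ⟨fun j => if j = i then -⌊r i⌋ - 1 else ⌈-(r j)⌉, ?_⟩
      rw [him]
      have hri : r i + ((if i = i then -⌊r i⌋ - 1 else ⌈-(r i)⌉ : ℤ) : ℝ)
          = Int.fract (r i) - 1 := by
        rw [if_pos rfl, Int.fract]
        push_cast
        ring
      have hGval : GMI (f i) (r i) = (1 - Int.fract (r i)) / (1 - f i) := by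
        unfold GMI; rw [if_neg (not_le.mpr hc)]
      have hGpos : 0 ≤ (1 - Int.fract (r i)) / (1 - f i) :=
        div_nonneg (by linarith) (by linarith)
      have hiterm : (Int.fract (r i) - 1) / (f i - 1) = (1 - Int.fract (r i)) / (1 - f i) := by
        rw [div_eq_div_iff (by linarith) (by linarith)]
        ring
      have hsup : sSup (Set.range fun j : Fin k =>
          (r j + ((if j = i then -⌊r i⌋ - 1 else ⌈-(r j)⌉ : ℤ) : ℝ)) / (f j - 1))
          = (1 - Int.fract (r i)) / (1 - f i) := by
        refine le_antisymm (csSup_le (Set.range_nonempty _) ?_) ?_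
        · rintro _ ⟨j, rfl⟩
          dsimp only
          by_cases hj : j = i
          · subst hj
            rw [hri, hiterm]
          · rw [if_neg hj]
            refine le_trans (div_nonpos_of_nonneg_of_nonpos ?_ (by linarith [(hf j).2])) hGpos
            have := Int.le_ceil (-(r j))
            linarith
        · have : (1 - Int.fract (r i)) / (1 - f i)
              = (r i + ((if i = i then -⌊r i⌋ - 1 else ⌈-(r i)⌉ : ℤ) : ℝ)) / (f i - 1) := by
            rw [hri, hiterm]
          rw [this]
          exact le_csSup (hbdd _) ⟨i, rfl⟩
      rw [hGval, hri, hsup]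
      refine (max_eq_right ?_).symm
      refine le_trans (div_nonpos_of_nonpos_of_nonneg (by linarith) hF0.le) hGpos
  have hbddS : BddBelow S := ⟨GMI (f i) (r i), fun v hv => lb v hv⟩
  unfold piK
  exact le_antisymm (csInf_le hbddS mem) (le_csInf ⟨_, mem⟩ lb)
end

section
/- Let k ≥ 2 be an integer, f ∈ [0,1)^k \ {0}, r^1, …, r^n ∈ ℝ^k, and τ ≥ 2k. Then there exist N ≤ 2n(τ + 3)² affine functions g_1, …, g_N : ℝ^k → ℝ with the following property: for every sign vector σ ∈ {0,1}^N there exist affine functions u_1, …, u_n : ℝ^k → ℝ such that for every μ ∈ Δ_k^τ with sgn(g_l(μ)) = σ_l for all l = 1,…,N, one has π_{f,μ}(r^j) = u_j(μ)/(Σ_{i=1}^k μ_i f_i) for all j = 1,…,n, where Σ_{i=1}^k μ_i f_i > 0 for all μ ∈ Δ_k^τ. That is, Δ_k^τ is decomposed by at most 2n(τ+3)² hyperplanes into regions within each of which every coordinate of (π_{f,μ}(r^1), …, π_{f,μ}(r^n)) is a fixed quotient of two affine linear functions of μ whose denominator is a fixed positive function of μ. -/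
/-- A function `(Fin k → ℝ) → ℝ` is affine if it is of the form `∑ cᵢ xᵢ + c₀`. -/
def IsAffineK (k : ℕ) (g : (Fin k → ℝ) → ℝ) : Prop :=
  ∃ (c : Fin k → ℝ) (c₀ : ℝ), ∀ x, g x = ∑ i, c i * x i + c₀

/- ### helpers -/


/-- `sfl f y v l = ⌊y l + v (1 - f l)⌋`. -/
noncomputable def sfl (k : ℕ) (f y : Fin k → ℝ) (v : ℝ) (l : Fin k) : ℤ :=
  ⌊y l + v * (1 - f l)⌋

/-- `G(v) = v ⟨μ,f⟩ + ⟨μ, s(v)⟩ - ⟨μ, y⟩`. -/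
noncomputable def Gf (k : ℕ) (f y μ : Fin k → ℝ) (v : ℝ) : ℝ :=
  v * (∑ l, μ l * f l) + ∑ l, μ l * (sfl k f y v l : ℝ) - ∑ l, μ l * y l

lemma Gf_eq_sum (k : ℕ) (f y μ : Fin k → ℝ) (v : ℝ) :
    Gf k f y μ v = ∑ l, μ l * (v * f l + (sfl k f y v l : ℝ) - y l) := by
  unfold Gf
  rw [Finset.mul_sum, ← Finset.sum_add_distrib, ← Finset.sum_sub_distrib]
  exact Finset.sum_congr rfl fun l _ => by ring

lemma Gf_mono (k : ℕ) (f y μ : Fin k → ℝ) (hμ : ∀ l, 0 < μ l)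
    (hf : ∀ l, 0 ≤ f l ∧ f l < 1) {v w : ℝ} (hvw : v ≤ w) :
    Gf k f y μ v ≤ Gf k f y μ w := by
  rw [Gf_eq_sum, Gf_eq_sum]
  refine Finset.sum_le_sum fun l _ => ?_
  refine mul_le_mul_of_nonneg_left ?_ (hμ l).le
  have h1 : v * f l ≤ w * f l := mul_le_mul_of_nonneg_right hvw (hf l).1
  have h2 : (sfl k f y v l : ℝ) ≤ (sfl k f y w l : ℝ) := by
    have : sfl k f y v l ≤ sfl k f y w l := by
      apply Int.floor_le_floor
      have : v * (1 - f l) ≤ w * (1 - f l) :=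
        mul_le_mul_of_nonneg_right hvw (by linarith [(hf l).2])
      linarith
    exact_mod_cast this
  linarith

lemma Gf_one_pos (k : ℕ) (hk : 0 < k) (f y μ : Fin k → ℝ) (hμ : ∀ l, 0 < μ l)
    (hf : ∀ l, 0 ≤ f l ∧ f l < 1) (hy : ∀ l, 0 ≤ y l ∧ y l < 1) :
    0 < Gf k f y μ 1 := by
  rw [Gf_eq_sum]
  refine Finset.sum_pos (fun l _ => ?_) ⟨⟨0, hk⟩, Finset.mem_univ _⟩
  refine mul_pos (hμ l) ?_
  rcases le_or_gt (f l) (y l) with h | h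
  · have hs : sfl k f y 1 l = 1 := by
      apply Int.floor_eq_iff.2
      refine ⟨?_, ?_⟩ <;> push_cast <;>
        [skip; skip] <;> [linarith [(hf l).1]; linarith [(hy l).2, (hf l).1]]
    rw [hs]; push_cast; linarith [(hf l).1, (hy l).2]
  · have hs : sfl k f y 1 l = 0 := by
      apply Int.floor_eq_iff.2
      refine ⟨?_, ?_⟩ <;> push_cast <;>
        [skip; skip] <;> [linarith [(hy l).1, (hf l).2]; linarith]
    rw [hs]; push_cast; linarith

lemma innerMax_term0_le (k : ℕ) (f μ x : Fin k → ℝ) :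
    (∑ i, μ i * x i) / (∑ i, μ i * f i) ≤ innerMax k f μ x := le_max_left _ _

lemma innerMax_term_le (k : ℕ) (f μ x : Fin k → ℝ) (i : Fin k) :
    x i / (f i - 1) ≤ innerMax k f μ x :=
  le_trans (le_csSup (Set.Finite.bddAbove (Set.finite_range _)) ⟨i, rfl⟩) (le_max_right _ _)

lemma innerMax_nonneg (k : ℕ) (hk : 0 < k) (f μ x : Fin k → ℝ)
    (hf : ∀ l, 0 ≤ f l ∧ f l < 1) (hμ : ∀ l, 0 < μ l) (hμf : 0 < ∑ l, μ l * f l) :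
    0 ≤ innerMax k f μ x := by
  by_cases hx : ∀ i, 0 < x i
  · refine le_trans ?_ (innerMax_term0_le k f μ x)
    exact div_nonneg (Finset.sum_nonneg fun i _ => (mul_pos (hμ i) (hx i)).le) hμf.le
  · push_neg at hx
    obtain ⟨i, hi⟩ := hx
    refine le_trans ?_ (innerMax_term_le k f μ x i)
    exact div_nonneg_of_nonpos hi (by linarith [(hf i).2])

lemma innerMax_le (k : ℕ) (hk : 0 < k) (f μ x : Fin k → ℝ) (V : ℝ)
    (h0 : (∑ i, μ i * x i) / (∑ i, μ i * f i) ≤ V)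
    (hi : ∀ i, x i / (f i - 1) ≤ V) :
    innerMax k f μ x ≤ V := by
  refine max_le h0 (csSup_le ?_ ?_)
  · have : Nonempty (Fin k) := ⟨⟨0, hk⟩⟩
    exact Set.range_nonempty _
  · rintro v ⟨i, rfl⟩; exact hi i


/-- fractional parts of `r`. -/
noncomputable def yv (k : ℕ) (r : Fin k → ℝ) : Fin k → ℝ := fun i => Int.fract (r i)

/-- breakpoints `c i = (1 - y i)/(1 - f i)`. -/
noncomputable def cv (k : ℕ) (f r : Fin k → ℝ) : Fin k → ℝ :=
  fun i => (1 - yv k r i) / (1 - f i)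

lemma yv_mem (k : ℕ) (r : Fin k → ℝ) (l : Fin k) : 0 ≤ yv k r l ∧ yv k r l < 1 :=
  ⟨Int.fract_nonneg _, Int.fract_lt_one _⟩

lemma cv_pos (k : ℕ) (f r : Fin k → ℝ) (hf : ∀ l, 0 ≤ f l ∧ f l < 1) (l : Fin k) :
    0 < cv k f r l :=
  div_pos (by linarith [(yv_mem k r l).2]) (by linarith [(hf l).2])

lemma cv_le_iff (k : ℕ) (f r : Fin k → ℝ) (hf : ∀ l, 0 ≤ f l ∧ f l < 1) (v : ℝ) (l : Fin k) :
    v ≤ cv k f r l ↔ yv k r l + v * (1 - f l) ≤ 1 := by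
  rw [cv, le_div_iff₀ (by linarith [(hf l).2])]
  constructor <;> intro h <;> linarith

lemma cv_lt_iff (k : ℕ) (f r : Fin k → ℝ) (hf : ∀ l, 0 ≤ f l ∧ f l < 1) (v : ℝ) (l : Fin k) :
    v < cv k f r l ↔ yv k r l + v * (1 - f l) < 1 := by
  rw [cv, lt_div_iff₀ (by linarith [(hf l).2])]
  constructor <;> intro h <;> linarith

lemma le_cv_iff (k : ℕ) (f r : Fin k → ℝ) (hf : ∀ l, 0 ≤ f l ∧ f l < 1) (v : ℝ) (l : Fin k) :
    cv k f r l ≤ v ↔ 1 ≤ yv k r l + v * (1 - f l) := by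
  rw [cv, div_le_iff₀ (by linarith [(hf l).2])]
  constructor <;> intro h <;> linarith

/-- the "left limit" affine value `Gl` at breakpoint `c i`. -/
noncomputable def Glval (k : ℕ) (f r μ : Fin k → ℝ) (i : Fin k) : ℝ :=
  ∑ l, μ l * (cv k f r i * f l +
    (((⌈yv k r l + cv k f r i * (1 - f l)⌉ : ℤ) : ℝ) - 1) - yv k r l)

lemma sum_chi (k : ℕ) (A : Finset (Fin k)) (μ : Fin k → ℝ) :
    ∑ l, μ l * (if l ∈ A then (1:ℝ) else 0) = ∑ l ∈ A, μ l := by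
  simp [mul_ite, Finset.sum_ite_mem]

/-- Main characterization: if `V` is the least nonnegative root of `G ≥ 0`, then `piK r = V`. -/
lemma piK_eq (k : ℕ) (hk : 0 < k) (f μ r : Fin k → ℝ)
    (hf : ∀ l, 0 ≤ f l ∧ f l < 1) (hμ : ∀ l, 0 < μ l) (hμf : 0 < ∑ l, μ l * f l)
    (V : ℝ) (hV0 : 0 ≤ V)
    (hGV : 0 ≤ Gf k f (yv k r) μ V)
    (hmin : ∀ w, 0 ≤ w → 0 ≤ Gf k f (yv k r) μ w → V ≤ w) :
    piK k f μ r = V := by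
  set y : Fin k → ℝ := yv k r with hy_def
  have hy : ∀ l, 0 ≤ y l ∧ y l < 1 := fun l => yv_mem k r l
  -- lower bound for every element
  have key_lb : ∀ z : Fin k → ℤ, V ≤ innerMax k f μ (fun i => y i + (z i : ℝ)) := by
    intro z
    set x : Fin k → ℝ := fun i => y i + (z i : ℝ) with hx_def
    set w := innerMax k f μ x with hw_def
    have hterm : ∀ i, w * (f i - 1) ≤ x i := by
      intro i
      have := innerMax_term_le k f μ x i
      exact (div_le_iff_of_neg (by linarith [(hf i).2])).1 this
    have hterm0 : ∑ i, μ i * x i ≤ w * ∑ i, μ i * f i := by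
      have := innerMax_term0_le k f μ x
      exact (div_le_iff₀ hμf).1 this
    have hw0 : 0 ≤ w := innerMax_nonneg k hk f μ x hf hμ hμf
    refine hmin w hw0 ?_
    have hzs : ∀ i, μ i * (y i - (sfl k f y w i : ℝ)) ≤ μ i * x i := by
      intro i
      refine mul_le_mul_of_nonneg_left ?_ (hμ i).le
      have : ((-z i : ℤ) : ℝ) ≤ y i + w * (1 - f i) := by
        push_cast
        have := hterm i
        simp only [hx_def] at this
        nlinarith
      have hle : (-z i : ℤ) ≤ sfl k f y w i := Int.le_floor.2 this
      have : ((-z i : ℤ) : ℝ) ≤ (sfl k f y w i : ℝ) := by exact_mod_cast hle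
      push_cast at this
      simp only [hx_def]
      linarith
    have hsum : ∑ i, μ i * (y i - (sfl k f y w i : ℝ)) ≤ ∑ i, μ i * x i :=
      Finset.sum_le_sum fun i _ => hzs i
    have hsum2 : ∑ i, μ i * y i - ∑ i, μ i * (sfl k f y w i : ℝ) ≤ ∑ i, μ i * x i := by
      rw [← Finset.sum_sub_distrib]
      refine le_trans (le_of_eq (Finset.sum_congr rfl fun i _ => by ring)) hsum
    unfold Gf
    linarith
  -- the witness element
  have key_ub : innerMax k f μ (fun i => y i + ((-(sfl k f y V i) : ℤ) : ℝ)) ≤ V := by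
    refine innerMax_le k hk f μ _ V ?_ ?_
    · rw [div_le_iff₀ hμf]
      have : ∑ i, μ i * (y i + ((-(sfl k f y V i) : ℤ) : ℝ))
          = ∑ i, μ i * y i - ∑ i, μ i * (sfl k f y V i : ℝ) := by
        rw [← Finset.sum_sub_distrib]
        refine Finset.sum_congr rfl fun i _ => by push_cast; ring
      rw [this]
      unfold Gf at hGV
      linarith
    · intro i
      rw [div_le_iff_of_neg (by linarith [(hf i).2])]
      have := Int.floor_le (y i + V * (1 - f i))
      have h2 : (sfl k f y V i : ℝ) ≤ y i + V * (1 - f i) := this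
      push_cast
      linarith
  -- conclude
  have hset : ∀ v ∈ {v : ℝ | ∃ z : Fin k → ℤ, v = innerMax k f μ (fun i => r i + (z i : ℝ))},
      V ≤ v := by
    rintro v ⟨z, rfl⟩
    have : (fun i => r i + (z i : ℝ)) = fun i => y i + ((z i + ⌊r i⌋ : ℤ) : ℝ) := by
      funext i
      simp only [hy_def, yv]
      push_cast
      simp only [Int.fract]
      ring
    rw [this]
    exact key_lb _
  have hmem : innerMax k f μ (fun i => y i + ((-(sfl k f y V i) : ℤ) : ℝ))
      ∈ {v : ℝ | ∃ z : Fin k → ℤ, v = innerMax k f μ (fun i => r i + (z i : ℝ))} := by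
    refine ⟨fun i => -(sfl k f y V i) - ⌊r i⌋, ?_⟩
    congr 1
    funext i
    simp only [hy_def, yv]
    push_cast
    simp only [Int.fract]
    ring
  unfold piK
  refine le_antisymm (le_trans (csInf_le ⟨V, hset⟩ hmem) key_ub) (le_csInf ⟨_, hmem⟩ hset)

lemma Glval_le (k : ℕ) (f r μ : Fin k → ℝ) (hf : ∀ l, 0 ≤ f l ∧ f l < 1)
    (hμ : ∀ l, 0 < μ l) (A : Finset (Fin k)) (m : Fin k) (hm1 : cv k f r m ≤ 1)
    (hmem : ∀ l, cv k f r l < cv k f r m → l ∈ A) :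
    Glval k f r μ m ≤ cv k f r m * (∑ l, μ l * f l) + (∑ l ∈ A, μ l) - ∑ l, μ l * yv k r l := by
  set y := yv k r
  set c := cv k f r
  have key : Glval k f r μ m ≤ ∑ l, μ l * (c m * f l + (if l ∈ A then (1:ℝ) else 0) - y l) := by
    unfold Glval
    refine Finset.sum_le_sum fun l _ => ?_
    refine mul_le_mul_of_nonneg_left ?_ (hμ l).le
    have hyl := yv_mem k r l
    rcases le_or_gt (c m) (c l) with hcc | hcc
    · have hceil : (⌈y l + c m * (1 - f l)⌉ : ℤ) ≤ 1 := by
        apply Int.ceil_le.2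
        push_cast
        exact (cv_le_iff k f r hf (c m) l).1 hcc
      have : ((⌈y l + c m * (1 - f l)⌉ : ℤ) : ℝ) ≤ 1 := by exact_mod_cast hceil
      have hχ : (0:ℝ) ≤ (if l ∈ A then (1:ℝ) else 0) := by positivity
      linarith
    · have hlA : l ∈ A := hmem l hcc
      have hceil : (⌈y l + c m * (1 - f l)⌉ : ℤ) ≤ 2 := by
        apply Int.ceil_le.2
        push_cast
        have hcm : 0 < c m := cv_pos k f r hf m
        nlinarith [(hf l).1, (hf l).2, hyl.1, hyl.2]
      have : ((⌈y l + c m * (1 - f l)⌉ : ℤ) : ℝ) ≤ 2 := by exact_mod_cast hceil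
      rw [if_pos hlA]
      linarith
  refine le_trans key (le_of_eq ?_)
  have expand : ∑ l, μ l * (c m * f l + (if l ∈ A then (1:ℝ) else 0) - y l)
      = ∑ l, (c m * (μ l * f l)) + ∑ l, μ l * (if l ∈ A then (1:ℝ) else 0)
        - ∑ l, μ l * y l := by
    rw [← Finset.sum_add_distrib, ← Finset.sum_sub_distrib]
    exact Finset.sum_congr rfl fun l _ => by ring
  rw [expand, ← Finset.mul_sum, sum_chi]

lemma engine1 (k : ℕ) (hk0 : 0 < k) (f μ r : Fin k → ℝ)
    (hf : ∀ l, 0 ≤ f l ∧ f l < 1) (hμ : ∀ l, 0 < μ l) (hμf : 0 < ∑ l, μ l * f l)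
    (A : Finset (Fin k))
    (hGA : ∀ l ∈ A, Gf k f (yv k r) μ (cv k f r l) < 0)
    (hGlB : ∀ l, l ∉ A → cv k f r l ≤ 1 → 0 ≤ Glval k f r μ l)
    (hE : ∑ l, μ l * yv k r l - ∑ l ∈ A, μ l - ∑ l, μ l * f l < 0) :
    piK k f μ r = (∑ l, μ l * yv k r l - ∑ l ∈ A, μ l) / (∑ l, μ l * f l) := by
  set y := yv k r with hy_def
  set c := cv k f r with hc_def
  have hyl : ∀ l, 0 ≤ y l ∧ y l < 1 := yv_mem k r
  set μf := ∑ l, μ l * f l with hμf_def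
  set μy := ∑ l, μ l * y l with hμy_def
  set μA := ∑ l ∈ A, μ l with hμA_def
  set V := (μy - μA) / μf with hV_def
  have hVmul : V * μf = μy - μA := div_mul_cancel₀ _ hμf.ne'
  have hμA0 : 0 ≤ μA := Finset.sum_nonneg fun l _ => (hμ l).le
  have hexp : ∀ t : ℝ,
      ∑ l, μ l * (t * f l + (if l ∈ A then (1:ℝ) else 0) - y l) = t * μf + μA - μy := by
    intro t
    have : ∑ l, μ l * (t * f l + (if l ∈ A then (1:ℝ) else 0) - y l)
        = ∑ l, (t * (μ l * f l)) + ∑ l, μ l * (if l ∈ A then (1:ℝ) else 0)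
          - ∑ l, μ l * y l := by
      rw [← Finset.sum_add_distrib, ← Finset.sum_sub_distrib]
      exact Finset.sum_congr rfl fun l _ => by ring
    rw [this, ← Finset.mul_sum, sum_chi]
  have hmain : (∀ l ∈ A, c l < V) ∧ 0 ≤ V := by
    rcases A.eq_empty_or_nonempty with hAe | hAne
    · have hA0 : μA = 0 := by rw [hμA_def, hAe, Finset.sum_empty]
      refine ⟨by simp [hAe], ?_⟩
      rw [hV_def, hA0]
      have h0 : 0 ≤ μy := Finset.sum_nonneg fun l _ => mul_nonneg (hμ l).le (hyl l).1
      exact div_nonneg (by linarith) hμf.le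
    · obtain ⟨i₀, hi₀A, hi₀max⟩ := A.exists_max_image c hAne
      have hG := hGA i₀ hi₀A
      rw [Gf_eq_sum] at hG
      have hterm : ∀ l, μ l * (c i₀ * f l + (if l ∈ A then (1:ℝ) else 0) - y l)
          ≤ μ l * (c i₀ * f l + (sfl k f y (c i₀) l : ℝ) - y l) := by
        intro l
        refine mul_le_mul_of_nonneg_left ?_ (hμ l).le
        have hs : (if l ∈ A then (1:ℝ) else 0) ≤ (sfl k f y (c i₀) l : ℝ) := by
          split_ifs with h
          · have h1 : (1:ℤ) ≤ sfl k f y (c i₀) l := by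
              apply Int.le_floor.2
              push_cast
              exact (le_cv_iff k f r hf (c i₀) l).1 (hi₀max l h)
            exact_mod_cast h1
          · have h1 : (0:ℤ) ≤ sfl k f y (c i₀) l := by
              apply Int.le_floor.2
              push_cast
              have := cv_pos k f r hf i₀
              nlinarith [(hyl l).1, (hf l).2]
            exact_mod_cast h1
        linarith
      have hsum := Finset.sum_le_sum fun l (_ : l ∈ Finset.univ) => hterm l
      rw [hexp (c i₀)] at hsum
      have hVgt : c i₀ < V := by
        rw [hV_def, lt_div_iff₀ hμf]
        linarith
      exact ⟨fun l hl => lt_of_le_of_lt (hi₀max l hl) hVgt,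
        (lt_trans (cv_pos k f r hf i₀) hVgt).le⟩
  obtain ⟨hVA, hV0⟩ := hmain
  have hV1 : V < 1 := by rw [hV_def, div_lt_one hμf]; linarith
  have hVle : ∀ l, l ∉ A → V ≤ c l := by
    intro l hl
    rcases le_or_gt (c l) 1 with hcl1 | hcl1
    · set B := Finset.univ.filter (fun m => c m ≤ 1 ∧ m ∉ A) with hB_def
      have hlB : l ∈ B := by simp [hB_def, hcl1, hl]
      obtain ⟨m, hmB, hmmin⟩ := B.exists_min_image c ⟨l, hlB⟩
      have hmB' : c m ≤ 1 ∧ m ∉ A := by simpa [hB_def] using hmB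
      have hGlm := hGlB m hmB'.2 hmB'.1
      have hmem : ∀ l', c l' < c m → l' ∈ A := by
        intro l' hl'
        by_contra hl'A
        have hl'B : l' ∈ B := by
          simp only [hB_def, Finset.mem_filter, Finset.mem_univ, true_and]
          exact ⟨by linarith [hmB'.1], hl'A⟩
        exact absurd (hmmin l' hl'B) (not_le.2 hl')
      have hGlle := Glval_le k f r μ hf hμ A m hmB'.1 hmem
      have hVm : V ≤ c m := by
        rw [← hy_def, ← hc_def] at hGlle
        rw [← hμf_def, ← hμy_def, ← hμA_def] at hGlle
        have h1 : V * μf ≤ c m * μf := by rw [hVmul]; linarith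
        exact le_of_mul_le_mul_right h1 hμf
      exact le_trans hVm (hmmin l hlB)
    · linarith
  have hGV : 0 ≤ Gf k f y μ V := by
    rw [Gf_eq_sum]
    have hterm : ∀ l, μ l * (V * f l + (if l ∈ A then (1:ℝ) else 0) - y l)
        ≤ μ l * (V * f l + (sfl k f y V l : ℝ) - y l) := by
      intro l
      refine mul_le_mul_of_nonneg_left ?_ (hμ l).le
      have hs : (if l ∈ A then (1:ℝ) else 0) ≤ (sfl k f y V l : ℝ) := by
        split_ifs with h
        · have h1 : (1:ℤ) ≤ sfl k f y V l := by
            apply Int.le_floor.2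
            push_cast
            exact (le_cv_iff k f r hf V l).1 (hVA l h).le
          exact_mod_cast h1
        · have h1 : (0:ℤ) ≤ sfl k f y V l := by
            apply Int.le_floor.2
            push_cast
            nlinarith [(hyl l).1, (hf l).2]
          exact_mod_cast h1
      linarith
    have hsum := Finset.sum_le_sum fun l (_ : l ∈ Finset.univ) => hterm l
    rw [hexp V] at hsum
    linarith
  have hpi := piK_eq k hk0 f μ r hf hμ hμf V hV0 hGV ?_
  · rw [hpi]
  · intro w hw0 hGw
    by_contra hlt
    push_neg at hlt
    have hub : Gf k f y μ w ≤ ∑ l, μ l * (w * f l + (if l ∈ A then (1:ℝ) else 0) - y l) := by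
      rw [Gf_eq_sum]
      refine Finset.sum_le_sum fun l _ => ?_
      refine mul_le_mul_of_nonneg_left ?_ (hμ l).le
      have hs : (sfl k f y w l : ℝ) ≤ (if l ∈ A then (1:ℝ) else 0) := by
        split_ifs with h
        · have h1 : sfl k f y w l < 2 := by
            apply Int.floor_lt.2
            push_cast
            nlinarith [(hyl l).2, (hf l).1, (hf l).2]
          have h2 : sfl k f y w l ≤ 1 := by omega
          exact_mod_cast h2
        · have h1 : sfl k f y w l < 1 := by
            apply Int.floor_lt.2
            push_cast
            have hwc : w < c l := lt_of_lt_of_le hlt (hVle l h)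
            exact (cv_lt_iff k f r hf w l).1 hwc
          have h2 : sfl k f y w l ≤ 0 := by omega
          exact_mod_cast h2
      linarith
    rw [hexp w] at hub
    have : w * μf < V * μf := mul_lt_mul_of_pos_right hlt hμf
    rw [hVmul] at this
    linarith

lemma engine2 (k : ℕ) (hk0 : 0 < k) (f μ r : Fin k → ℝ)
    (hf : ∀ l, 0 ≤ f l ∧ f l < 1) (hμ : ∀ l, 0 < μ l) (hμf : 0 < ∑ l, μ l * f l)
    (A : Finset (Fin k))
    (hGlB : ∀ l, l ∉ A → cv k f r l ≤ 1 → 0 ≤ Glval k f r μ l)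
    (hE : 0 ≤ ∑ l, μ l * yv k r l - ∑ l ∈ A, μ l - ∑ l, μ l * f l) :
    piK k f μ r = 1 := by
  set y := yv k r with hy_def
  set c := cv k f r with hc_def
  have hyl : ∀ l, 0 ≤ y l ∧ y l < 1 := yv_mem k r
  set μf := ∑ l, μ l * f l with hμf_def
  set μy := ∑ l, μ l * y l with hμy_def
  set μA := ∑ l ∈ A, μ l with hμA_def
  have hexp : ∀ t : ℝ,
      ∑ l, μ l * (t * f l + (if l ∈ A then (1:ℝ) else 0) - y l) = t * μf + μA - μy := by
    intro t
    have : ∑ l, μ l * (t * f l + (if l ∈ A then (1:ℝ) else 0) - y l)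
        = ∑ l, (t * (μ l * f l)) + ∑ l, μ l * (if l ∈ A then (1:ℝ) else 0)
          - ∑ l, μ l * y l := by
      rw [← Finset.sum_add_distrib, ← Finset.sum_sub_distrib]
      exact Finset.sum_congr rfl fun l _ => by ring
    rw [this, ← Finset.mul_sum, sum_chi]
  -- every l outside A with c l ≤ 1 has c l ≥ 1
  have hout : ∀ l, l ∉ A → (1:ℝ) ≤ c l := by
    intro l hl
    rcases le_or_gt (c l) 1 with hcl1 | hcl1
    · set B := Finset.univ.filter (fun m => c m ≤ 1 ∧ m ∉ A) with hB_def
      have hlB : l ∈ B := by simp [hB_def, hcl1, hl]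
      obtain ⟨m, hmB, hmmin⟩ := B.exists_min_image c ⟨l, hlB⟩
      have hmB' : c m ≤ 1 ∧ m ∉ A := by simpa [hB_def] using hmB
      have hGlm := hGlB m hmB'.2 hmB'.1
      have hmem : ∀ l', c l' < c m → l' ∈ A := by
        intro l' hl'
        by_contra hl'A
        have hl'B : l' ∈ B := by
          simp only [hB_def, Finset.mem_filter, Finset.mem_univ, true_and]
          exact ⟨by linarith [hmB'.1], hl'A⟩
        exact absurd (hmmin l' hl'B) (not_le.2 hl')
      have hGlle := Glval_le k f r μ hf hμ A m hmB'.1 hmem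
      rw [← hy_def, ← hc_def] at hGlle
      rw [← hμf_def, ← hμy_def, ← hμA_def] at hGlle
      -- 0 ≤ Glval ≤ c m μf + μA − μy ≤ c m μf − μf  ⇒ 1 ≤ c m
      have h1 : (1:ℝ) * μf ≤ c m * μf := by linarith
      have h2 : (1:ℝ) ≤ c m := le_of_mul_le_mul_right h1 hμf
      exact le_trans h2 (hmmin l hlB)
    · exact hcl1.le
  have hG1 : 0 ≤ Gf k f y μ 1 := (Gf_one_pos k hk0 f y μ hμ hf hyl).le
  have hpi := piK_eq k hk0 f μ r hf hμ hμf 1 zero_le_one hG1 ?_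
  · exact hpi
  · intro w hw0 hGw
    by_contra hlt
    push_neg at hlt
    have hub : Gf k f y μ w ≤ ∑ l, μ l * (w * f l + (if l ∈ A then (1:ℝ) else 0) - y l) := by
      rw [Gf_eq_sum]
      refine Finset.sum_le_sum fun l _ => ?_
      refine mul_le_mul_of_nonneg_left ?_ (hμ l).le
      have hs : (sfl k f y w l : ℝ) ≤ (if l ∈ A then (1:ℝ) else 0) := by
        split_ifs with h
        · have h1 : sfl k f y w l < 2 := by
            apply Int.floor_lt.2
            push_cast
            nlinarith [(hyl l).2, (hf l).1, (hf l).2]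
          have h2 : sfl k f y w l ≤ 1 := by omega
          exact_mod_cast h2
        · have h1 : sfl k f y w l < 1 := by
            apply Int.floor_lt.2
            push_cast
            have hwc : w < c l := lt_of_lt_of_le hlt (hout l h)
            exact (cv_lt_iff k f r hf w l).1 hwc
          have h2 : sfl k f y w l ≤ 0 := by omega
          exact_mod_cast h2
      linarith
    rw [hexp w] at hub
    have : w * μf < 1 * μf := mul_lt_mul_of_pos_right hlt hμf
    linarith

lemma engine0 (k : ℕ) (hk0 : 0 < k) (f μ r : Fin k → ℝ)
    (hf : ∀ l, 0 ≤ f l ∧ f l < 1) (hμ : ∀ l, 0 < μ l) (hμf : 0 < ∑ l, μ l * f l)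
    (i₀ : Fin k)
    (hGc : 0 ≤ Gf k f (yv k r) μ (cv k f r i₀))
    (hGl : Glval k f r μ i₀ < 0) :
    piK k f μ r = cv k f r i₀ := by
  set y := yv k r with hy_def
  set c := cv k f r with hc_def
  have hyl : ∀ l, 0 ≤ y l ∧ y l < 1 := yv_mem k r
  refine piK_eq k hk0 f μ r hf hμ hμf (c i₀) (cv_pos k f r hf i₀).le hGc ?_
  intro w hw0 hGw
  by_contra hlt
  push_neg at hlt
  have hub : Gf k f y μ w ≤ Glval k f r μ i₀ := by
    rw [Gf_eq_sum]
    unfold Glval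
    refine Finset.sum_le_sum fun l _ => ?_
    refine mul_le_mul_of_nonneg_left ?_ (hμ l).le
    have h1 : w * f l ≤ c i₀ * f l := mul_le_mul_of_nonneg_right hlt.le (hf l).1
    have h2 : sfl k f y w l < ⌈yv k r l + c i₀ * (1 - f l)⌉ := by
      apply Int.lt_ceil.2
      have hfl := Int.floor_le (y l + w * (1 - f l))
      have harg : y l + w * (1 - f l) < yv k r l + c i₀ * (1 - f l) := by
        rw [← hy_def]
        have : w * (1 - f l) < c i₀ * (1 - f l) :=
          mul_lt_mul_of_pos_right hlt (by linarith [(hf l).2])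
        linarith
      exact lt_of_le_of_lt hfl harg
    have h2' : (sfl k f y w l : ℝ) ≤ ((⌈yv k r l + c i₀ * (1 - f l)⌉ : ℤ) : ℝ) - 1 := by
      have h3 : sfl k f y w l + 1 ≤ ⌈yv k r l + c i₀ * (1 - f l)⌉ := h2
      have h4 : ((sfl k f y w l + 1 : ℤ) : ℝ) ≤ ((⌈yv k r l + c i₀ * (1 - f l)⌉ : ℤ) : ℝ) :=
        Int.cast_le.2 h3
      push_cast at h4
      linarith
    rw [← hy_def]
    linarith
  linarith

open Classical in
/-- coefficient vectors of the sign hyperplanes for a single `r`. -/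
noncomputable def coefP (k : ℕ) (f r : Fin k → ℝ) (p : Fin k × Fin 4) (l : Fin k) : ℝ :=
  if (p.2 : ℕ) = 0 then
    cv k f r p.1 * f l + (sfl k f (yv k r) (cv k f r p.1) l : ℝ) - yv k r l
  else if (p.2 : ℕ) = 1 then
    cv k f r p.1 * f l + (((⌈yv k r l + cv k f r p.1 * (1 - f l)⌉ : ℤ) : ℝ) - 1) - yv k r l
  else if (p.2 : ℕ) = 2 then
    yv k r l - (if cv k f r l ≤ cv k f r p.1 ∧ cv k f r l ≤ 1 then 1 else 0) - f l
  else yv k r l - f l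

noncomputable def FP (k : ℕ) (f r : Fin k → ℝ) (p : Fin k × Fin 4) : (Fin k → ℝ) → ℝ :=
  fun μ => ∑ l, coefP k f r p l * μ l

lemma sum_aff_split (k : ℕ) (A : Finset (Fin k)) (y f μ : Fin k → ℝ) :
    ∑ l, (y l - (if l ∈ A then (1:ℝ) else 0) - f l) * μ l
      = ∑ l, μ l * y l - ∑ l ∈ A, μ l - ∑ l, μ l * f l := by
  have h : ∑ l, (y l - (if l ∈ A then (1:ℝ) else 0) - f l) * μ l
      = ∑ l, μ l * y l - ∑ l, μ l * (if l ∈ A then (1:ℝ) else 0) - ∑ l, μ l * f l := by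
    rw [← Finset.sum_sub_distrib, ← Finset.sum_sub_distrib]
    exact Finset.sum_congr rfl fun l _ => by ring
  rw [h, sum_chi]

lemma FP0 (k : ℕ) (f r μ : Fin k → ℝ) (i : Fin k) :
    FP k f r (i, 0) μ = Gf k f (yv k r) μ (cv k f r i) := by
  rw [Gf_eq_sum]
  unfold FP coefP
  refine Finset.sum_congr rfl fun l _ => ?_
  have h : (((0 : Fin 4)) : ℕ) = 0 := rfl
  rw [if_pos h]
  ring

lemma FP1 (k : ℕ) (f r μ : Fin k → ℝ) (i : Fin k) :
    FP k f r (i, 1) μ = Glval k f r μ i := by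
  unfold FP coefP Glval
  refine Finset.sum_congr rfl fun l _ => ?_
  have h0 : ¬((((1 : Fin 4)) : ℕ) = 0) := by decide
  have h1 : (((1 : Fin 4)) : ℕ) = 1 := rfl
  rw [if_neg h0, if_pos h1]
  ring

open Classical in
lemma FP2 (k : ℕ) (f r μ : Fin k → ℝ) (i : Fin k) :
    FP k f r (i, 2) μ = ∑ l, μ l * yv k r l
      - ∑ l ∈ Finset.univ.filter (fun l => cv k f r l ≤ cv k f r i ∧ cv k f r l ≤ 1), μ l
      - ∑ l, μ l * f l := by
  rw [← sum_aff_split]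
  unfold FP coefP
  refine Finset.sum_congr rfl fun l _ => ?_
  have h0 : ¬((((2 : Fin 4)) : ℕ) = 0) := by decide
  have h1 : ¬((((2 : Fin 4)) : ℕ) = 1) := by decide
  have h2 : (((2 : Fin 4)) : ℕ) = 2 := rfl
  rw [if_neg h0, if_neg h1, if_pos h2]
  congr 2
  simp [Finset.mem_filter]

lemma FP3 (k : ℕ) (f r μ : Fin k → ℝ) (i : Fin k) :
    FP k f r (i, 3) μ = ∑ l, μ l * yv k r l - ∑ l, μ l * f l := by
  have h : FP k f r (i, 3) μ = ∑ l, μ l * yv k r l - ∑ l ∈ (∅ : Finset (Fin k)), μ l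
      - ∑ l, μ l * f l := by
    rw [← sum_aff_split]
    unfold FP coefP
    refine Finset.sum_congr rfl fun l _ => ?_
    have h0 : ¬((((3 : Fin 4)) : ℕ) = 0) := by decide
    have h1 : ¬((((3 : Fin 4)) : ℕ) = 1) := by decide
    have h2 : ¬((((3 : Fin 4)) : ℕ) = 2) := by decide
    rw [if_neg h0, if_neg h1, if_neg h2]
    simp
  rw [h, Finset.sum_empty, sub_zero]

open Classical in
lemma perR (k : ℕ) (hk0 : 0 < k) (f r : Fin k → ℝ)
    (hf : ∀ l, 0 ≤ f l ∧ f l < 1) :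
    ∀ σ : (Fin k × Fin 4) → ℕ, ∃ u : (Fin k → ℝ) → ℝ, IsAffineK k u ∧
      ∀ μ : Fin k → ℝ, (∀ l, 0 < μ l) → (0 < ∑ l, μ l * f l) →
        (∀ p, sgn01 (FP k f r p μ) = σ p) →
        piK k f μ r = u μ / (∑ i, μ i * f i) := by
  intro σ
  have hread : ∀ (μ : Fin k → ℝ), (∀ p, sgn01 (FP k f r p μ) = σ p) →
      ∀ p, (σ p = 1 → 0 ≤ FP k f r p μ) ∧ (σ p ≠ 1 → FP k f r p μ < 0) := by
    intro μ hσ p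
    have h := hσ p
    unfold sgn01 at h
    split_ifs at h with hc
    · exact ⟨fun _ => hc, fun hne => (hne h.symm).elim⟩
    · exact ⟨fun h1 => by omega, fun _ => lt_of_not_ge hc⟩
  by_cases h1 : ∃ i, cv k f r i ≤ 1 ∧ σ (i, 0) = 1 ∧ σ (i, 1) ≠ 1
  · -- jump case : π = c i₀
    obtain ⟨i₀, hci₀, hs0, hs1⟩ := h1
    refine ⟨fun μ => ∑ l, (cv k f r i₀ * f l) * μ l,
      ⟨fun l => cv k f r i₀ * f l, 0, fun x => by rw [add_zero]⟩, ?_⟩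
    intro μ hμpos hμf hσ
    have hrd := hread μ hσ
    have hGc : 0 ≤ Gf k f (yv k r) μ (cv k f r i₀) := by
      rw [← FP0]; exact (hrd (i₀, 0)).1 hs0
    have hGl : Glval k f r μ i₀ < 0 := by
      rw [← FP1]; exact (hrd (i₀, 1)).2 hs1
    have hpi := engine0 k hk0 f μ r hf hμpos hμf i₀ hGc hGl
    rw [hpi]
    beta_reduce
    have hnum : ∑ l, (cv k f r i₀ * f l) * μ l = cv k f r i₀ * ∑ i, μ i * f i := by
      rw [Finset.mul_sum]
      exact Finset.sum_congr rfl fun l _ => by ring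
    rw [hnum, mul_div_assoc, div_self hμf.ne', mul_one]
  · push_neg at h1
    set A : Finset (Fin k) :=
      Finset.univ.filter (fun l => cv k f r l ≤ 1 ∧ σ (l, 0) ≠ 1) with hA_def
    have hmemA : ∀ l, l ∈ A ↔ (cv k f r l ≤ 1 ∧ σ (l, 0) ≠ 1) := by
      intro l; simp [hA_def]
    -- facts holding for any μ in the region
    have hGA : ∀ (μ : Fin k → ℝ), (∀ p, sgn01 (FP k f r p μ) = σ p) →
        ∀ l ∈ A, Gf k f (yv k r) μ (cv k f r l) < 0 := by
      intro μ hσ l hl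
      rw [← FP0]
      exact ((hread μ hσ) (l, 0)).2 ((hmemA l).1 hl).2
    have hGlB : ∀ (μ : Fin k → ℝ), (∀ p, sgn01 (FP k f r p μ) = σ p) →
        ∀ l, l ∉ A → cv k f r l ≤ 1 → 0 ≤ Glval k f r μ l := by
      intro μ hσ l hl hcl
      have hσl0 : σ (l, 0) = 1 := by
        by_contra hne
        exact hl ((hmemA l).2 ⟨hcl, hne⟩)
      have hσl1 : σ (l, 1) = 1 := h1 l hcl hσl0
      rw [← FP1]
      exact ((hread μ hσ) (l, 1)).1 hσl1
    rcases A.eq_empty_or_nonempty with hAe | hAne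
    · -- A is empty
      by_cases hE : σ (⟨0, hk0⟩, 3) = 1
      · -- π = 1
        refine ⟨fun μ => ∑ l, f l * μ l, ⟨f, 0, fun x => by rw [add_zero]⟩, ?_⟩
        intro μ hμpos hμf hσ
        have hEv : 0 ≤ FP k f r (⟨0, hk0⟩, 3) μ := ((hread μ hσ) _).1 hE
        rw [FP3] at hEv
        have hpi := engine2 k hk0 f μ r hf hμpos hμf ∅
          (fun l hl hcl => hGlB μ hσ l (by rw [hAe]; exact hl) hcl)
          (by rw [Finset.sum_empty]; linarith)
        rw [hpi]
        beta_reduce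
        have hnum : ∑ l, f l * μ l = ∑ i, μ i * f i :=
          Finset.sum_congr rfl fun l _ => by ring
        rw [hnum, div_self hμf.ne']
      · -- π = μ·y / μ·f
        refine ⟨fun μ => ∑ l, yv k r l * μ l, ⟨yv k r, 0, fun x => by rw [add_zero]⟩, ?_⟩
        intro μ hμpos hμf hσ
        have hEv : FP k f r (⟨0, hk0⟩, 3) μ < 0 := ((hread μ hσ) _).2 hE
        rw [FP3] at hEv
        have hpi := engine1 k hk0 f μ r hf hμpos hμf ∅
          (fun l hl => absurd hl (Finset.notMem_empty l))
          (fun l hl hcl => hGlB μ hσ l (by rw [hAe]; exact hl) hcl)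
          (by rw [Finset.sum_empty]; linarith)
        rw [hpi, Finset.sum_empty, sub_zero]
        beta_reduce
        congr 1
        exact Finset.sum_congr rfl fun l _ => by ring
    · -- A nonempty, with maximal breakpoint element i₀
      obtain ⟨i₀, hi₀A, hi₀max⟩ := A.exists_max_image (cv k f r) hAne
      -- pointwise identification A = D i₀, valid in the region
      have hAD : ∀ (μ : Fin k → ℝ), (∀ p, sgn01 (FP k f r p μ) = σ p) →
          (∀ l, 0 < μ l) →
          A = Finset.univ.filter
            (fun l => cv k f r l ≤ cv k f r i₀ ∧ cv k f r l ≤ 1) := by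
        intro μ hσ hμpos
        apply Finset.ext
        intro l
        simp only [Finset.mem_filter, Finset.mem_univ, true_and]
        constructor
        · intro hl
          exact ⟨hi₀max l hl, ((hmemA l).1 hl).1⟩
        · rintro ⟨hle, hl1⟩
          by_contra hlA
          have h0 : σ (l, 0) = 1 := by
            by_contra hne
            exact hlA ((hmemA l).2 ⟨hl1, hne⟩)
          have hge : 0 ≤ FP k f r (l, 0) μ := ((hread μ hσ) (l, 0)).1 h0
          rw [FP0] at hge
          have hmono := Gf_mono k f (yv k r) μ hμpos hf hle
          have hneg := hGA μ hσ i₀ hi₀A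
          linarith
      by_cases hE : σ (i₀, 2) = 1
      · -- π = 1
        refine ⟨fun μ => ∑ l, f l * μ l, ⟨f, 0, fun x => by rw [add_zero]⟩, ?_⟩
        intro μ hμpos hμf hσ
        have hEv : 0 ≤ FP k f r (i₀, 2) μ := ((hread μ hσ) _).1 hE
        rw [FP2] at hEv
        rw [← hAD μ hσ hμpos] at hEv
        have hpi := engine2 k hk0 f μ r hf hμpos hμf A (hGlB μ hσ) hEv
        rw [hpi]
        beta_reduce
        have hnum : ∑ l, f l * μ l = ∑ i, μ i * f i :=
          Finset.sum_congr rfl fun l _ => by ring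
        rw [hnum, div_self hμf.ne']
      · -- π = (μ·y - μ(A)) / μ·f
        refine ⟨fun μ => ∑ l, (yv k r l - (if l ∈ A then (1:ℝ) else 0)) * μ l,
          ⟨fun l => yv k r l - (if l ∈ A then (1:ℝ) else 0), 0, fun x => by rw [add_zero]⟩, ?_⟩
        intro μ hμpos hμf hσ
        have hEv : FP k f r (i₀, 2) μ < 0 := ((hread μ hσ) _).2 hE
        rw [FP2] at hEv
        rw [← hAD μ hσ hμpos] at hEv
        have hpi := engine1 k hk0 f μ r hf hμpos hμf A (hGA μ hσ) (hGlB μ hσ) hEv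
        rw [hpi]
        beta_reduce
        congr 1
        have h : ∑ l, (yv k r l - (if l ∈ A then (1:ℝ) else 0)) * μ l
            = ∑ l, μ l * yv k r l - ∑ l, μ l * (if l ∈ A then (1:ℝ) else 0) := by
          rw [← Finset.sum_sub_distrib]
          exact Finset.sum_congr rfl fun l _ => by ring
        rw [h, sum_chi]
/-- `Δ_k^τ` is decomposed by at most `2n(τ+3)²` hyperplanes into
regions (given by sign patterns) within each of which every coordinate of
`(π_{f,μ}(r¹), …, π_{f,μ}(rⁿ))` is a fixed quotient of two affine functions of
`μ` with (positive) denominator `∑ μᵢ fᵢ`. -/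
theorem stmt15 (k : ℕ) (hk : 2 ≤ k) (τ : ℝ) (hτ : 2 * (k : ℝ) ≤ τ)
    (f : Fin k → ℝ) (hf : ∀ i, f i ∈ Set.Ico (0 : ℝ) 1) (hf0 : f ≠ 0)
    (n : ℕ) (r : Fin n → Fin k → ℝ) :
    (∀ μ ∈ simplexSet k τ, 0 < ∑ i, μ i * f i) ∧
    ∃ N : ℕ, (N : ℝ) ≤ 2 * n * (τ + 3) ^ 2 ∧
      ∃ g : Fin N → (Fin k → ℝ) → ℝ, (∀ l, IsAffineK k (g l)) ∧
        ∀ σ : Fin N → ℕ, ∃ u : Fin n → (Fin k → ℝ) → ℝ, (∀ j, IsAffineK k (u j)) ∧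
          ∀ μ ∈ simplexSet k τ, (∀ l, sgn01 (g l μ) = σ l) →
            ∀ j, piK k f μ (r j) = u j μ / (∑ i, μ i * f i) := by
  have hk2 : (2:ℝ) ≤ (k:ℝ) := by exact_mod_cast hk
  have hτpos : 0 < τ := by linarith
  have hf' : ∀ l, 0 ≤ f l ∧ f l < 1 := fun l => ⟨(hf l).1, (hf l).2⟩
  have hμpos : ∀ μ ∈ simplexSet k τ, ∀ l, 0 < μ l := by
    intro μ hμ l
    have h1 : (0:ℝ) < 1 / τ := by positivity
    exact lt_of_lt_of_le h1 (hμ.1 l)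
  have hpos : ∀ μ ∈ simplexSet k τ, 0 < ∑ i, μ i * f i := by
    intro μ hμ
    obtain ⟨i, hi⟩ := Function.ne_iff.1 hf0
    refine Finset.sum_pos' (fun l _ => mul_nonneg (hμpos μ hμ l).le (hf' l).1)
      ⟨i, Finset.mem_univ i,
        mul_pos (hμpos μ hμ i) (lt_of_le_of_ne (hf' i).1 (Ne.symm hi))⟩
  refine ⟨hpos, n * (k * 4), ?_, ?_⟩
  · have h1 : (k:ℝ) * 4 ≤ 2 * (τ + 3) ^ 2 := by nlinarith
    have h2 : ((n * (k * 4) : ℕ) : ℝ) = (n:ℝ) * ((k:ℝ) * 4) := by push_cast; ring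
    rw [h2]
    calc (n:ℝ) * ((k:ℝ) * 4) ≤ (n:ℝ) * (2 * (τ + 3) ^ 2) :=
          mul_le_mul_of_nonneg_left h1 (Nat.cast_nonneg n)
      _ = 2 * n * (τ + 3) ^ 2 := by ring
  · set e : Fin n × (Fin k × Fin 4) ≃ Fin (n * (k * 4)) :=
      (Equiv.prodCongr (Equiv.refl (Fin n)) finProdFinEquiv).trans finProdFinEquiv with he_def
    refine ⟨fun l => FP k f (r (e.symm l).1) (e.symm l).2, ?_, ?_⟩
    · intro l
      exact ⟨coefP k f (r (e.symm l).1) (e.symm l).2, 0, fun x => by rw [add_zero]; rfl⟩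
    · intro σ
      have hper := fun j : Fin n =>
        perR k (by omega) f (r j) hf' (fun p => σ (e (j, p)))
      choose u hu1 hu2 using hper
      refine ⟨u, hu1, ?_⟩
      intro μ hμ hσ j
      refine hu2 j μ (hμpos μ hμ) (hpos μ hμ) ?_
      intro p
      have h := hσ (e (j, p))
      simpa [Equiv.symm_apply_apply] using h
end
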